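/- arXiv:2506.09151 — 5 statements merged into one kernel-verified Lean document; each statement's English description precedes it below -/
import Mathlib

section
/- Dual Jacobi–Trudi identity: for a partition λ = (λ_1 ≥ ⋯ ≥ λ_n ≥ 0) with conjugate partition λ̃, and any integer m ≥ λ_1, the Schur polynomial satisfies s_λ(x_1,…,x_n) = det( e_{λ̃_i − i + j} )_{1 ≤ i,j ≤ m}, where each entry is the elementary symmetric polynomial of the indicated degree in the variables x_1,…,x_n (with λ̃_i = 0 for i > λ_1), under the conventions e_0 = 1, e_k = 0 for k < 0 and for k > n, as an identity in ℤ[x_1,…,x_n]. -/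
open scoped Classical
open MvPolynomial

/-- The Schur polynomial `s_λ(x_1, …, x_N)` in `N` variables, for a shape
`lam : Fin n → ℕ`, defined as the sum over all semistandard Young tableaux of
shape `lam` with entries in `Fin N` of the corresponding monomials. -/
noncomputable def schurPoly (N : ℕ) {n : ℕ} (lam : Fin n → ℕ) : MvPolynomial (Fin N) ℤ :=
  ∑ T ∈ Finset.univ.filter
      (fun T : ((i : Fin n) × Fin (lam i)) → Fin N =>
        (∀ c c' : (i : Fin n) × Fin (lam i),
            c.1 = c'.1 → (c.2 : ℕ) ≤ (c'.2 : ℕ) → T c ≤ T c') ∧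
        (∀ c c' : (i : Fin n) × Fin (lam i),
            c.1 < c'.1 → (c.2 : ℕ) = (c'.2 : ℕ) → T c < T c')),
    ∏ c : (i : Fin n) × Fin (lam i), MvPolynomial.X (T c)

/-- The conjugate (transposed) partition, with `m` parts:
`(conjPart lam m) i = #{j : lam j ≥ i+1}` (0-indexed). -/
def conjPart {n : ℕ} (lam : Fin n → ℕ) (m : ℕ) : Fin m → ℕ :=
  fun i => (Finset.univ.filter (fun j : Fin n => (i : ℕ) < lam j)).card

/-- The elementary symmetric polynomial `e_k` in variables indexed by a finite
type `σ`; it vanishes for `k > |σ|`. -/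
noncomputable def elemSym (σ : Type*) [Fintype σ] (k : ℕ) : MvPolynomial σ ℤ :=
  ∑ t ∈ Finset.powersetCard k Finset.univ, ∏ i ∈ t, MvPolynomial.X i

/-- The elementary symmetric polynomial with integer degree: `e_k` for
`k ≥ 0` (vanishing for `k > |σ|`), and `0` for `k < 0`. -/
noncomputable def elemSymZ (σ : Type*) [Fintype σ] (k : ℤ) : MvPolynomial σ ℤ :=
  if 0 ≤ k then elemSym σ k.toNat else 0

namespace DJT
variable {n m : ℕ}

/-- number of elements of `S` with value `< l` -/
noncomputable def cnt (S : Finset (Fin n)) (l : ℕ) : ℕ := (S.filter fun a => a.val < l).card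

lemma cnt_zero (S : Finset (Fin n)) : cnt S 0 = 0 := by
  simp [cnt]

lemma cnt_of_le (S : Finset (Fin n)) {l : ℕ} (h : n ≤ l) : cnt S l = S.card := by
  unfold cnt
  rw [Finset.filter_true_of_mem]
  intro a _
  exact lt_of_lt_of_le a.isLt h

lemma cnt_mono (S : Finset (Fin n)) {l l' : ℕ} (h : l ≤ l') : cnt S l ≤ cnt S l' := by
  apply Finset.card_le_card
  exact Finset.monotone_filter_right S (fun a _ ha => lt_of_lt_of_le ha h)

lemma cnt_succ_le (S : Finset (Fin n)) (l : ℕ) : cnt S (l + 1) ≤ cnt S l + 1 := by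
  unfold cnt
  have hsub : S.filter (fun a => a.val < l + 1) ⊆
      S.filter (fun a => a.val < l) ∪ S.filter (fun a => a.val = l) := by
    intro a ha
    rw [Finset.mem_filter] at ha
    rcases Nat.lt_succ_iff_lt_or_eq.mp ha.2 with h | h
    · exact Finset.mem_union_left _ (Finset.mem_filter.mpr ⟨ha.1, h⟩)
    · exact Finset.mem_union_right _ (Finset.mem_filter.mpr ⟨ha.1, h⟩)
  calc (S.filter (fun a => a.val < l + 1)).card
      ≤ (S.filter (fun a => a.val < l) ∪ S.filter (fun a => a.val = l)).card :=
        Finset.card_le_card hsub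
    _ ≤ (S.filter (fun a => a.val < l)).card + (S.filter (fun a => a.val = l)).card :=
        Finset.card_union_le _ _
    _ ≤ (S.filter (fun a => a.val < l)).card + 1 := by
        gcongr
        apply Finset.card_le_one.mpr
        intro a ha b hb
        rw [Finset.mem_filter] at ha hb
        exact Fin.ext (ha.2.trans hb.2.symm)

lemma cnt_union {A B : Finset (Fin n)} (h : Disjoint A B) (l : ℕ) :
    cnt (A ∪ B) l = cnt A l + cnt B l := by
  unfold cnt
  rw [Finset.filter_union, Finset.card_union_of_disjoint]
  exact Finset.disjoint_filter_filter h

/-- discrete intermediate value theorem -/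
lemma intIVT (f : ℕ → ℤ) (hstep : ∀ l, f (l + 1) ≤ f l + 1) (a b : ℕ) (hab : a ≤ b)
    (ha : f a ≤ 0) (hb : 0 ≤ f b) : ∃ l, a ≤ l ∧ l ≤ b ∧ f l = 0 := by
  by_contra hcon
  push_neg at hcon
  have key : ∀ k, a + k ≤ b → f (a + k) < 0 := by
    intro k
    induction k with
    | zero =>
      intro h
      exact lt_of_le_of_ne ha (hcon a le_rfl h)
    | succ k ih =>
      intro h
      have hk : a + k ≤ b := by omega
      have h1 : f (a + k) < 0 := ih hk
      have h2 : f (a + k + 1) ≤ f (a + k) + 1 := hstep _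
      have heq : a + (k + 1) = a + k + 1 := rfl
      rw [heq]
      exact lt_of_le_of_ne (by omega) (hcon _ (by omega) (by omega))
  have := key (b - a) (by omega)
  rw [Nat.add_sub_cancel' hab] at this
  omega


noncomputable def low (c : ℕ) (t : Finset (Fin n)) : Finset (Fin n) := t.filter fun a => a.val < c
noncomputable def high (c : ℕ) (t : Finset (Fin n)) : Finset (Fin n) := t.filter fun a => ¬ a.val < c

lemma low_union_high (c : ℕ) (t : Finset (Fin n)) : low c t ∪ high c t = t :=
  Finset.filter_union_filter_not_eq _ t

lemma disjoint_low_high (c : ℕ) (t t' : Finset (Fin n)) : Disjoint (low c t) (high c t') := by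
  rw [Finset.disjoint_left]
  intro a ha ha'
  rw [low, Finset.mem_filter] at ha
  rw [high, Finset.mem_filter] at ha'
  exact ha'.2 ha.2

lemma card_low (c : ℕ) (t : Finset (Fin n)) : (low c t).card = cnt t c := rfl

lemma cnt_low_of_le {c l : ℕ} (h : l ≤ c) (t : Finset (Fin n)) : cnt (low c t) l = cnt t l := by
  unfold cnt low
  rw [Finset.filter_filter]
  congr 1
  apply Finset.filter_congr
  intro a _
  constructor
  · rintro ⟨_, h2⟩; exact h2
  · intro h2; exact ⟨lt_of_lt_of_le h2 h, h2⟩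

lemma cnt_high_of_le {c l : ℕ} (h : l ≤ c) (t : Finset (Fin n)) : cnt (high c t) l = 0 := by
  unfold cnt high
  rw [Finset.card_eq_zero, Finset.filter_filter, Finset.filter_eq_empty_iff]
  intro a _
  rintro ⟨h1, h2⟩
  exact h1 (lt_of_lt_of_le h2 h)

lemma cnt_eq_cnt_add_cnt_high {c l : ℕ} (h : c ≤ l) (t : Finset (Fin n)) :
    cnt t l = cnt t c + cnt (high c t) l := by
  conv_lhs => rw [← low_union_high c t]
  rw [cnt_union (disjoint_low_high c t t)]
  congr 1
  · unfold cnt low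
    rw [Finset.filter_filter]
    congr 1
    apply Finset.filter_congr
    intro a _
    constructor
    · rintro ⟨h1, h2⟩; exact h1
    · intro h2; exact ⟨h2, lt_of_lt_of_le h2 h⟩

lemma card_eq_cnt_add_card_high (c : ℕ) (t : Finset (Fin n)) :
    t.card = cnt t c + (high c t).card := by
  conv_lhs => rw [← low_union_high c t]
  rw [Finset.card_union_of_disjoint (disjoint_low_high c t t), card_low]

lemma low_low (c : ℕ) (t : Finset (Fin n)) : low c (low c t) = low c t := by
  unfold low; rw [Finset.filter_filter]; simp

lemma low_high (c : ℕ) (t : Finset (Fin n)) : low c (high c t) = ∅ := by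
  unfold low high; rw [Finset.filter_filter, Finset.filter_eq_empty_iff]; tauto

lemma high_low (c : ℕ) (t : Finset (Fin n)) : high c (low c t) = ∅ := by
  unfold low high; rw [Finset.filter_filter, Finset.filter_eq_empty_iff]; tauto

lemma high_high (c : ℕ) (t : Finset (Fin n)) : high c (high c t) = high c t := by
  unfold high; rw [Finset.filter_filter]; simp

lemma low_union (c : ℕ) (t t' : Finset (Fin n)) : low c (t ∪ t') = low c t ∪ low c t' :=
  Finset.filter_union _ _ _

lemma high_union (c : ℕ) (t t' : Finset (Fin n)) : high c (t ∪ t') = high c t ∪ high c t' :=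
  Finset.filter_union _ _ _

/-- the "path height" function: `Pf S i l = |S i ∩ [0,l)| - i`. -/
noncomputable def Pf (S : Fin m → Finset (Fin n)) (i : Fin m) (l : ℕ) : ℤ :=
  (cnt (S i) l : ℤ) - (i.val : ℤ)

/-- levels `l ≤ n` at which two paths meet -/
noncomputable def meets (S : Fin m → Finset (Fin n)) : Finset ℕ :=
  (Finset.range (n + 1)).filter fun l => ∃ i i' : Fin m, i < i' ∧ Pf S i l = Pf S i' l

noncomputable def lev (S : Fin m → Finset (Fin n)) (h : (meets S).Nonempty) : ℕ :=
  (meets S).min' h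

lemma lev_mem (S : Fin m → Finset (Fin n)) (h : (meets S).Nonempty) : lev S h ∈ meets S :=
  (meets S).min'_mem h

lemma lev_le (S : Fin m → Finset (Fin n)) (h : (meets S).Nonempty) {l : ℕ}
    (hl : l ∈ meets S) : lev S h ≤ l := (meets S).min'_le l hl

lemma lev_le_n (S : Fin m → Finset (Fin n)) (h : (meets S).Nonempty) : lev S h ≤ n := by
  have := lev_mem S h
  rw [meets, Finset.mem_filter, Finset.mem_range] at this
  omega

noncomputable def I0fin (S : Fin m → Finset (Fin n)) (h : (meets S).Nonempty) : Finset (Fin m) :=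
  Finset.univ.filter fun i => ∃ i', i < i' ∧ Pf S i (lev S h) = Pf S i' (lev S h)

lemma I0fin_nonempty (S : Fin m → Finset (Fin n)) (h : (meets S).Nonempty) :
    (I0fin S h).Nonempty := by
  have := lev_mem S h
  rw [meets, Finset.mem_filter] at this
  obtain ⟨-, i, i', hlt, heq⟩ := this
  exact ⟨i, Finset.mem_filter.mpr ⟨Finset.mem_univ _, i', hlt, heq⟩⟩

noncomputable def ii0 (S : Fin m → Finset (Fin n)) (h : (meets S).Nonempty) : Fin m :=
  (I0fin S h).min' (I0fin_nonempty S h)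

noncomputable def I1fin (S : Fin m → Finset (Fin n)) (h : (meets S).Nonempty) : Finset (Fin m) :=
  Finset.univ.filter fun i' => ii0 S h < i' ∧ Pf S (ii0 S h) (lev S h) = Pf S i' (lev S h)

lemma I1fin_nonempty (S : Fin m → Finset (Fin n)) (h : (meets S).Nonempty) :
    (I1fin S h).Nonempty := by
  have := (I0fin S h).min'_mem (I0fin_nonempty S h)
  unfold I0fin at this
  rw [Finset.mem_filter] at this
  obtain ⟨-, i', hlt, heq⟩ := this
  exact ⟨i', Finset.mem_filter.mpr ⟨Finset.mem_univ _, hlt, heq⟩⟩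

noncomputable def ii1 (S : Fin m → Finset (Fin n)) (h : (meets S).Nonempty) : Fin m :=
  (I1fin S h).min' (I1fin_nonempty S h)

lemma ii0_lt_ii1 (S : Fin m → Finset (Fin n)) (h : (meets S).Nonempty) : ii0 S h < ii1 S h := by
  have := (I1fin S h).min'_mem (I1fin_nonempty S h)
  unfold I1fin at this
  rw [Finset.mem_filter] at this
  exact this.2.1

lemma Pf_ii0_eq_ii1 (S : Fin m → Finset (Fin n)) (h : (meets S).Nonempty) :
    Pf S (ii0 S h) (lev S h) = Pf S (ii1 S h) (lev S h) := by
  have := (I1fin S h).min'_mem (I1fin_nonempty S h)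
  unfold I1fin at this
  rw [Finset.mem_filter] at this
  exact this.2.2

/-- the swap of the two meeting paths' upper parts -/
noncomputable def swapS (S : Fin m → Finset (Fin n)) (h : (meets S).Nonempty) :
    Fin m → Finset (Fin n) :=
  Function.update (Function.update S (ii0 S h)
      (low (lev S h) (S (ii0 S h)) ∪ high (lev S h) (S (ii1 S h)))) (ii1 S h)
      (low (lev S h) (S (ii1 S h)) ∪ high (lev S h) (S (ii0 S h)))

lemma swapS_apply_ii0 (S : Fin m → Finset (Fin n)) (h : (meets S).Nonempty) :
    swapS S h (ii0 S h) = low (lev S h) (S (ii0 S h)) ∪ high (lev S h) (S (ii1 S h)) := by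
  rw [swapS, Function.update_of_ne (ii0_lt_ii1 S h).ne, Function.update_self]

lemma swapS_apply_ii1 (S : Fin m → Finset (Fin n)) (h : (meets S).Nonempty) :
    swapS S h (ii1 S h) = low (lev S h) (S (ii1 S h)) ∪ high (lev S h) (S (ii0 S h)) := by
  rw [swapS, Function.update_self]

lemma swapS_apply_of_ne (S : Fin m → Finset (Fin n)) (h : (meets S).Nonempty) {j : Fin m}
    (h0 : j ≠ ii0 S h) (h1 : j ≠ ii1 S h) : swapS S h j = S j := by
  rw [swapS, Function.update_of_ne h1, Function.update_of_ne h0]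

lemma Pf_swapS_of_le (S : Fin m → Finset (Fin n)) (h : (meets S).Nonempty) (i : Fin m) {l : ℕ}
    (hl : l ≤ lev S h) : Pf (swapS S h) i l = Pf S i l := by
  rcases eq_or_ne i (ii0 S h) with rfl | h0
  · rw [Pf, Pf, swapS_apply_ii0, cnt_union (disjoint_low_high _ _ _), cnt_low_of_le hl,
      cnt_high_of_le hl, Nat.add_zero]
  rcases eq_or_ne i (ii1 S h) with rfl | h1
  · rw [Pf, Pf, swapS_apply_ii1, cnt_union (disjoint_low_high _ _ _), cnt_low_of_le hl,
      cnt_high_of_le hl, Nat.add_zero]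
  · rw [Pf, Pf, swapS_apply_of_ne S h h0 h1]

lemma lev_mem_meets_swapS (S : Fin m → Finset (Fin n)) (h : (meets S).Nonempty) :
    lev S h ∈ meets (swapS S h) := by
  unfold meets
  rw [Finset.mem_filter, Finset.mem_range]
  refine ⟨Nat.lt_succ_of_le (lev_le_n S h), ii0 S h, ii1 S h, ii0_lt_ii1 S h, ?_⟩
  rw [Pf_swapS_of_le S h _ le_rfl, Pf_swapS_of_le S h _ le_rfl]
  exact Pf_ii0_eq_ii1 S h

lemma meets_swapS_nonempty (S : Fin m → Finset (Fin n)) (h : (meets S).Nonempty) :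
    (meets (swapS S h)).Nonempty := ⟨_, lev_mem_meets_swapS S h⟩

lemma no_meet_below (S : Fin m → Finset (Fin n)) (h : (meets S).Nonempty) {l : ℕ}
    (hl : l < lev S h) : ¬ ∃ i i' : Fin m, i < i' ∧ Pf S i l = Pf S i' l := by
  intro hex
  have hmem : l ∈ meets S := by
    unfold meets
    rw [Finset.mem_filter, Finset.mem_range]
    exact ⟨by have := lev_le_n S h; omega, hex⟩
  exact absurd (lev_le S h hmem) (by omega)

lemma lev_swapS (S : Fin m → Finset (Fin n)) (h : (meets S).Nonempty) :
    lev (swapS S h) (meets_swapS_nonempty S h) = lev S h := by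
  apply le_antisymm
  · exact lev_le _ _ (lev_mem_meets_swapS S h)
  · by_contra hlt
    push_neg at hlt
    have hmem := lev_mem (swapS S h) (meets_swapS_nonempty S h)
    unfold meets at hmem
    rw [Finset.mem_filter] at hmem
    obtain ⟨-, i, i', hii, heq⟩ := hmem
    rw [Pf_swapS_of_le S h _ (le_of_lt hlt), Pf_swapS_of_le S h _ (le_of_lt hlt)] at heq
    exact no_meet_below S h hlt ⟨i, i', hii, heq⟩

lemma I0fin_swapS (S : Fin m → Finset (Fin n)) (h : (meets S).Nonempty) :
    I0fin (swapS S h) (meets_swapS_nonempty S h) = I0fin S h := by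
  unfold I0fin
  apply Finset.filter_congr
  intro i _
  rw [lev_swapS S h]
  constructor
  · rintro ⟨i', hlt, heq⟩
    rw [Pf_swapS_of_le S h _ le_rfl, Pf_swapS_of_le S h _ le_rfl] at heq
    exact ⟨i', hlt, heq⟩
  · rintro ⟨i', hlt, heq⟩
    rw [← Pf_swapS_of_le S h i le_rfl, ← Pf_swapS_of_le S h i' le_rfl] at heq
    exact ⟨i', hlt, heq⟩

lemma ii0_swapS (S : Fin m → Finset (Fin n)) (h : (meets S).Nonempty) :
    ii0 (swapS S h) (meets_swapS_nonempty S h) = ii0 S h := by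
  unfold ii0
  congr 1
  exact I0fin_swapS S h

lemma ii1_swapS (S : Fin m → Finset (Fin n)) (h : (meets S).Nonempty) :
    ii1 (swapS S h) (meets_swapS_nonempty S h) = ii1 S h := by
  unfold ii1
  congr 1
  unfold I1fin
  apply Finset.filter_congr
  intro i _
  rw [lev_swapS S h, ii0_swapS S h, Pf_swapS_of_le S h _ le_rfl]
  constructor
  · rintro ⟨hlt, heq⟩
    rw [Pf_swapS_of_le S h _ le_rfl] at heq
    exact ⟨hlt, heq⟩
  · rintro ⟨hlt, heq⟩
    rw [← Pf_swapS_of_le S h i le_rfl] at heq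
    exact ⟨hlt, heq⟩

lemma swapS_swapS (S : Fin m → Finset (Fin n)) (h : (meets S).Nonempty) :
    swapS (swapS S h) (meets_swapS_nonempty S h) = S := by
  funext j
  have h' := meets_swapS_nonempty S h
  have h0 := ii0_swapS S h
  have h1 := ii1_swapS S h
  have hl := lev_swapS S h
  rcases eq_or_ne j (ii0 S h) with rfl | hj0
  · have key : swapS (swapS S h) h' (ii0 S h) =
        low (lev S h) (swapS S h (ii0 S h)) ∪ high (lev S h) (swapS S h (ii1 S h)) := by
      rw [← h0, ← h1, ← hl]
      exact swapS_apply_ii0 (swapS S h) h'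
    rw [key, swapS_apply_ii0 S h, swapS_apply_ii1 S h, low_union, high_union,
      low_low, low_high, high_low, high_high, Finset.union_empty, Finset.empty_union,
      low_union_high]
  rcases eq_or_ne j (ii1 S h) with rfl | hj1
  · have key : swapS (swapS S h) h' (ii1 S h) =
        low (lev S h) (swapS S h (ii1 S h)) ∪ high (lev S h) (swapS S h (ii0 S h)) := by
      rw [← h0, ← h1, ← hl]
      exact swapS_apply_ii1 (swapS S h) h'
    rw [key, swapS_apply_ii0 S h, swapS_apply_ii1 S h, low_union, high_union,
      low_low, low_high, high_low, high_high, Finset.union_empty, Finset.empty_union,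
      low_union_high]
  · have hj0' : j ≠ ii0 (swapS S h) h' := by rw [h0]; exact hj0
    have hj1' : j ≠ ii1 (swapS S h) h' := by rw [h1]; exact hj1
    rw [swapS_apply_of_ne (swapS S h) h' hj0' hj1', swapS_apply_of_ne S h hj0 hj1]

lemma card_swapS_ii0 (S : Fin m → Finset (Fin n)) (h : (meets S).Nonempty) :
    ((swapS S h (ii0 S h)).card : ℤ) =
      ((S (ii1 S h)).card : ℤ) + ((ii0 S h).val : ℤ) - ((ii1 S h).val : ℤ) := by
  have hPf := Pf_ii0_eq_ii1 S h
  unfold Pf at hPf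
  have hcard : (swapS S h (ii0 S h)).card =
      cnt (S (ii0 S h)) (lev S h) + (high (lev S h) (S (ii1 S h))).card := by
    rw [swapS_apply_ii0, Finset.card_union_of_disjoint (disjoint_low_high _ _ _), card_low]
  have hsplit := card_eq_cnt_add_card_high (lev S h) (S (ii1 S h))
  rw [hcard]
  push_cast
  omega

lemma card_swapS_ii1 (S : Fin m → Finset (Fin n)) (h : (meets S).Nonempty) :
    ((swapS S h (ii1 S h)).card : ℤ) =
      ((S (ii0 S h)).card : ℤ) + ((ii1 S h).val : ℤ) - ((ii0 S h).val : ℤ) := by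
  have hPf := Pf_ii0_eq_ii1 S h
  unfold Pf at hPf
  have hcard : (swapS S h (ii1 S h)).card =
      cnt (S (ii1 S h)) (lev S h) + (high (lev S h) (S (ii0 S h))).card := by
    rw [swapS_apply_ii1, Finset.card_union_of_disjoint (disjoint_low_high _ _ _), card_low]
  have hsplit := card_eq_cnt_add_card_high (lev S h) (S (ii0 S h))
  rw [hcard]
  push_cast
  omega

noncomputable def colWgt (t : Finset (Fin n)) : MvPolynomial (Fin n) ℤ :=
  ∏ a ∈ t, MvPolynomial.X a

noncomputable def wgt (S : Fin m → Finset (Fin n)) : MvPolynomial (Fin n) ℤ :=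
  ∏ j : Fin m, colWgt (S j)

lemma colWgt_union {t t' : Finset (Fin n)} (h : Disjoint t t') :
    colWgt (t ∪ t') = colWgt t * colWgt t' := Finset.prod_union h

lemma wgt_swapS (S : Fin m → Finset (Fin n)) (h : (meets S).Nonempty) :
    wgt (swapS S h) = wgt S := by
  have hne : ii1 S h ∈ Finset.univ.erase (ii0 S h) :=
    Finset.mem_erase.mpr ⟨(ii0_lt_ii1 S h).ne', Finset.mem_univ _⟩
  have key : ∀ T : Fin m → Finset (Fin n), wgt T = colWgt (T (ii0 S h)) * (colWgt (T (ii1 S h)) *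
      ∏ j ∈ (Finset.univ.erase (ii0 S h)).erase (ii1 S h), colWgt (T j)) := by
    intro T
    rw [wgt, ← Finset.mul_prod_erase Finset.univ (fun j => colWgt (T j))
      (Finset.mem_univ (ii0 S h)), ← Finset.mul_prod_erase _ (fun j => colWgt (T j)) hne]
  rw [key (swapS S h), key S]
  have hrest : ∏ j ∈ (Finset.univ.erase (ii0 S h)).erase (ii1 S h), colWgt (swapS S h j)
      = ∏ j ∈ (Finset.univ.erase (ii0 S h)).erase (ii1 S h), colWgt (S j) := by
    apply Finset.prod_congr rfl
    intro j hj
    rw [Finset.mem_erase, Finset.mem_erase] at hj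
    rw [swapS_apply_of_ne S h hj.2.1 hj.1]
  rw [hrest, swapS_apply_ii0, swapS_apply_ii1,
    colWgt_union (disjoint_low_high _ _ _), colWgt_union (disjoint_low_high _ _ _)]
  conv_rhs => rw [← low_union_high (lev S h) (S (ii0 S h)),
    ← low_union_high (lev S h) (S (ii1 S h)),
    colWgt_union (disjoint_low_high _ _ _), colWgt_union (disjoint_low_high _ _ _)]
  ring

variable (μ : Fin m → ℕ)

noncomputable def colSets (σ : Equiv.Perm (Fin m)) : Finset (Fin m → Finset (Fin n)) :=
  Fintype.piFinset fun i =>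
    Finset.univ.powerset.filter fun t : Finset (Fin n) =>
      (t.card : ℤ) = (μ (σ i) : ℤ) - ((σ i).val : ℤ) + (i.val : ℤ)

lemma mem_colSets {σ : Equiv.Perm (Fin m)} {S : Fin m → Finset (Fin n)} :
    S ∈ colSets μ σ ↔ ∀ i, ((S i).card : ℤ) = (μ (σ i) : ℤ) - ((σ i).val : ℤ) + (i.val : ℤ) := by
  unfold colSets
  rw [Fintype.mem_piFinset]
  constructor
  · intro hS i
    exact (Finset.mem_filter.mp (hS i)).2
  · intro hS i
    exact Finset.mem_filter.mpr ⟨Finset.mem_powerset.mpr (Finset.subset_univ _), hS i⟩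

lemma sum_cross_zero :
    ∑ p ∈ ((Finset.univ.sigma fun σ : Equiv.Perm (Fin m) => colSets (n := n) μ σ).filter
        fun p => (meets p.2).Nonempty),
      (Equiv.Perm.sign p.1 : ℤ) • wgt p.2 = 0 := by
  apply Finset.sum_involution
    (g := fun p hp =>
      ⟨p.1 * Equiv.swap (ii0 p.2 (Finset.mem_filter.mp hp).2) (ii1 p.2 (Finset.mem_filter.mp hp).2),
        swapS p.2 (Finset.mem_filter.mp hp).2⟩)
  · -- sums to zero
    intro p hp
    have hcr := (Finset.mem_filter.mp hp).2
    have hsign : ((Equiv.Perm.sign (p.1 * Equiv.swap (ii0 p.2 hcr) (ii1 p.2 hcr))) : ℤ)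
        = -((Equiv.Perm.sign p.1 : ℤ)) := by
      rw [Equiv.Perm.sign_mul, Equiv.Perm.sign_swap (ii0_lt_ii1 p.2 hcr).ne]
      push_cast
      ring
    show (Equiv.Perm.sign p.1 : ℤ) • wgt p.2
        + (Equiv.Perm.sign (p.1 * Equiv.swap (ii0 p.2 hcr) (ii1 p.2 hcr)) : ℤ)
          • wgt (swapS p.2 hcr) = 0
    rw [hsign, wgt_swapS p.2 hcr, neg_smul]
    exact add_neg_cancel _
  · -- g p ≠ p
    intro p hp _
    intro hEq
    have hfst := congrArg Sigma.fst hEq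
    simp only at hfst
    have : Equiv.swap (ii0 p.2 (Finset.mem_filter.mp hp).2) (ii1 p.2 (Finset.mem_filter.mp hp).2)
        = 1 := by
      have := mul_left_cancel (a := p.1)
        (b := Equiv.swap (ii0 p.2 (Finset.mem_filter.mp hp).2)
          (ii1 p.2 (Finset.mem_filter.mp hp).2)) (c := 1) (by rw [mul_one]; exact hfst)
      exact this
    exact (ii0_lt_ii1 p.2 (Finset.mem_filter.mp hp).2).ne (Equiv.swap_eq_one_iff.mp this)
  · -- involutive
    intro p hp
    have hcr := (Finset.mem_filter.mp hp).2
    apply Sigma.ext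
    · show (p.1 * Equiv.swap (ii0 p.2 hcr) (ii1 p.2 hcr))
        * Equiv.swap (ii0 (swapS p.2 hcr) _) (ii1 (swapS p.2 hcr) _) = p.1
      rw [ii0_swapS p.2 hcr, ii1_swapS p.2 hcr, mul_assoc, Equiv.swap_mul_self, mul_one]
    · show HEq (swapS (swapS p.2 hcr) _) p.2
      rw [swapS_swapS p.2 hcr]

  · -- g maps into the set
    intro p hp
    have hmem := (Finset.mem_filter.mp hp).1
    have hcr := (Finset.mem_filter.mp hp).2
    rw [Finset.mem_sigma] at hmem
    have hS := mem_colSets μ |>.mp hmem.2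
    apply Finset.mem_filter.mpr
    refine ⟨Finset.mem_sigma.mpr ⟨Finset.mem_univ _, ?_⟩, meets_swapS_nonempty p.2 hcr⟩
    apply (mem_colSets μ).mpr
    intro i
    rcases eq_or_ne i (ii0 p.2 hcr) with rfl | h0
    · rw [Equiv.Perm.mul_apply, Equiv.swap_apply_left, card_swapS_ii0 p.2 hcr, hS (ii1 p.2 hcr)]
      ring
    rcases eq_or_ne i (ii1 p.2 hcr) with rfl | h1
    · rw [Equiv.Perm.mul_apply, Equiv.swap_apply_right, card_swapS_ii1 p.2 hcr, hS (ii0 p.2 hcr)]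
      ring
    · rw [Equiv.Perm.mul_apply, Equiv.swap_apply_of_ne_of_ne h0 h1]
      show ((swapS p.2 hcr i).card : ℤ) = _
      rw [swapS_apply_of_ne p.2 hcr h0 h1]
      exact hS i

lemma Pf_step_le (S : Fin m → Finset (Fin n)) (i : Fin m) (l : ℕ) :
    Pf S i (l + 1) ≤ Pf S i l + 1 := by
  unfold Pf
  have h' : ((cnt (S i) (l + 1)) : ℤ) ≤ ((cnt (S i) l) : ℤ) + 1 := by
    exact_mod_cast cnt_succ_le (S i) l
  linarith

lemma Pf_step_ge (S : Fin m → Finset (Fin n)) (i : Fin m) (l : ℕ) :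
    Pf S i l ≤ Pf S i (l + 1) := by
  unfold Pf
  have h' : ((cnt (S i) l) : ℤ) ≤ ((cnt (S i) (l + 1)) : ℤ) := by
    exact_mod_cast cnt_mono (S i) (Nat.le_succ l)
  linarith

lemma meet_of_sign_change (S : Fin m → Finset (Fin n)) {i i' : Fin m} (hlt : i < i') {a b : ℕ}
    (hab : a ≤ b) (hbn : b ≤ n) (ha : Pf S i' a ≤ Pf S i a) (hb : Pf S i b ≤ Pf S i' b) :
    (meets S).Nonempty := by
  have hstep : ∀ t, Pf S i' (t + 1) - Pf S i (t + 1) ≤ (Pf S i' t - Pf S i t) + 1 := by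
    intro t
    have h1 := Pf_step_le S i' t
    have h2 := Pf_step_ge S i t
    omega
  obtain ⟨l, -, hlb, hl⟩ := intIVT (fun t => Pf S i' t - Pf S i t) (fun t => hstep t)
    a b hab (show Pf S i' a - Pf S i a ≤ 0 by omega) (show 0 ≤ Pf S i' b - Pf S i b by omega)
  have hl' : Pf S i' l - Pf S i l = 0 := hl
  refine ⟨l, ?_⟩
  unfold meets
  rw [Finset.mem_filter, Finset.mem_range]
  exact ⟨by omega, i, i', hlt, by omega⟩

lemma Pf_zero (S : Fin m → Finset (Fin n)) (i : Fin m) : Pf S i 0 = -(i.val : ℤ) := by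
  rw [Pf, cnt_zero]
  ring

lemma noMeet_strict (S : Fin m → Finset (Fin n)) (hno : ¬(meets S).Nonempty)
    {i i' : Fin m} (hlt : i < i') {l : ℕ} (hl : l ≤ n) : Pf S i' l < Pf S i l := by
  by_contra hcon
  push_neg at hcon
  apply hno
  apply meet_of_sign_change S hlt (Nat.zero_le l) hl
  · rw [Pf_zero, Pf_zero]
    have : i.val < i'.val := hlt
    omega
  · exact hcon

lemma perm_eq_one (hanti : Antitone μ) (σ : Equiv.Perm (Fin m))
    (S : Fin m → Finset (Fin n)) (hS : S ∈ colSets μ σ) (hno : ¬(meets S).Nonempty) :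
    σ = 1 := by
  rw [mem_colSets] at hS
  have hPfn : ∀ i : Fin m, Pf S i n = (μ (σ i) : ℤ) - ((σ i).val : ℤ) := by
    intro i
    rw [Pf, cnt_of_le _ le_rfl, hS i]
    ring
  have hmono : StrictMono σ := by
    intro i i' hlt
    rcases lt_trichotomy (σ i) (σ i') with h | h | h
    · exact h
    · exact absurd (σ.injective h) (ne_of_lt hlt)
    · exfalso
      apply hno
      apply meet_of_sign_change S hlt (Nat.zero_le n) le_rfl
      · rw [Pf_zero, Pf_zero]
        have : i.val < i'.val := hlt
        omega
      · rw [hPfn, hPfn]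
        have h1 : μ (σ i) ≤ μ (σ i') := hanti (le_of_lt h)
        have h2 : (σ i').val < (σ i).val := h
        omega
  have hcard : (Finset.univ : Finset (Fin m)).card = m := by simp
  have h1 : ⇑σ = ⇑(Finset.univ.orderEmbOfFin hcard) :=
    Finset.orderEmbOfFin_unique hcard (fun x => Finset.mem_univ _) hmono
  have h2 : (id : Fin m → Fin m) = ⇑(Finset.univ.orderEmbOfFin hcard) :=
    Finset.orderEmbOfFin_unique hcard (fun x => Finset.mem_univ _) strictMono_id
  apply Equiv.ext
  intro x
  have := congrFun (h1.trans h2.symm) x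
  simpa using this

lemma elemSymZ_eq (k : ℤ) :
    elemSymZ (Fin n) k = ∑ t ∈ Finset.univ.powerset.filter
      (fun t : Finset (Fin n) => (t.card : ℤ) = k), colWgt t := by
  unfold elemSymZ elemSym
  split_ifs with hk
  · rw [Finset.powersetCard_eq_filter]
    apply Finset.sum_congr _ (fun _ _ => rfl)
    apply Finset.filter_congr
    intro t _
    constructor
    · intro h; omega
    · intro h; omega
  · rw [Finset.filter_false_of_mem, Finset.sum_empty]
    intro t _
    intro hc
    omega

lemma det_eq_sum_sigma :
    (Matrix.of fun i j : Fin m =>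
        elemSymZ (Fin n) ((μ i : ℤ) - ((i : ℕ) : ℤ) + ((j : ℕ) : ℤ))).det
      = ∑ p ∈ (Finset.univ.sigma fun σ : Equiv.Perm (Fin m) => colSets (n := n) μ σ),
          (Equiv.Perm.sign p.1 : ℤ) • wgt p.2 := by
  rw [Matrix.det_apply, Finset.sum_sigma]
  apply Finset.sum_congr rfl
  intro σ _
  have hprod : ∏ i : Fin m,
      (Matrix.of fun i j : Fin m =>
        elemSymZ (Fin n) ((μ i : ℤ) - ((i : ℕ) : ℤ) + ((j : ℕ) : ℤ))) (σ i) i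
      = ∑ S ∈ colSets (n := n) μ σ, wgt S := by
    have : ∀ i : Fin m,
        (Matrix.of fun i j : Fin m =>
          elemSymZ (Fin n) ((μ i : ℤ) - ((i : ℕ) : ℤ) + ((j : ℕ) : ℤ))) (σ i) i
        = ∑ t ∈ Finset.univ.powerset.filter
            (fun t : Finset (Fin n) =>
              (t.card : ℤ) = (μ (σ i) : ℤ) - ((σ i).val : ℤ) + (i.val : ℤ)), colWgt t := by
      intro i
      rw [Matrix.of_apply, elemSymZ_eq]
    rw [Finset.prod_congr rfl (fun i _ => this i), Finset.prod_univ_sum]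
    rfl
  rw [hprod, Finset.smul_sum]
  apply Finset.sum_congr rfl
  intro S _
  rw [Units.smul_def]

noncomputable def goodSets : Finset (Fin m → Finset (Fin n)) :=
  Finset.univ.filter fun S =>
    (∀ j, ((S j).card : ℤ) = (μ j : ℤ)) ∧ ¬(meets S).Nonempty

lemma det_side (hanti : Antitone μ) :
    (Matrix.of fun i j : Fin m =>
        elemSymZ (Fin n) ((μ i : ℤ) - ((i : ℕ) : ℤ) + ((j : ℕ) : ℤ))).det
      = ∑ S ∈ goodSets (n := n) μ, wgt S := by
  rw [det_eq_sum_sigma μ,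
    ← Finset.sum_filter_add_sum_filter_not _ (fun p => (meets p.2).Nonempty),
    sum_cross_zero μ, zero_add]
  apply Finset.sum_nbij' (i := fun p => p.2)
    (j := fun S => (⟨1, S⟩ : (_ : Equiv.Perm (Fin m)) × (Fin m → Finset (Fin n))))
  · intro p hp
    rw [Finset.mem_filter] at hp
    obtain ⟨hmem, hno⟩ := hp
    rw [Finset.mem_sigma] at hmem
    have hone : p.1 = 1 := perm_eq_one μ hanti p.1 p.2 hmem.2 hno
    rw [goodSets, Finset.mem_filter]
    refine ⟨Finset.mem_univ _, ?_, hno⟩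
    intro j
    have := (mem_colSets μ).mp hmem.2 j
    rw [hone] at this
    simpa using this
  · intro S hS
    rw [goodSets, Finset.mem_filter] at hS
    obtain ⟨-, hcard, hno⟩ := hS
    rw [Finset.mem_filter]
    refine ⟨Finset.mem_sigma.mpr ⟨Finset.mem_univ _, ?_⟩, hno⟩
    apply (mem_colSets μ).mpr
    intro i
    simpa using hcard i
  · intro p hp
    rw [Finset.mem_filter] at hp
    obtain ⟨hmem, hno⟩ := hp
    rw [Finset.mem_sigma] at hmem
    have hone : p.1 = 1 := perm_eq_one μ hanti p.1 p.2 hmem.2 hno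
    exact Sigma.ext hone.symm (HEq.refl _)
  · intro S _
    rfl
  · intro p hp
    rw [Finset.mem_filter] at hp
    obtain ⟨hmem, hno⟩ := hp
    rw [Finset.mem_sigma] at hmem
    have hone : p.1 = 1 := perm_eq_one μ hanti p.1 p.2 hmem.2 hno
    rw [hone]
    simp

section Tableau

variable (lam : Fin n → ℕ)

lemma conjPart_antitone : Antitone (conjPart lam m) := by
  intro i i' h
  apply Finset.card_le_card
  intro a ha
  rw [Finset.mem_filter] at ha ⊢
  refine ⟨ha.1, ?_⟩
  have hii : (i : ℕ) ≤ (i' : ℕ) := h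
  omega

noncomputable def colCells (j : Fin m) : Finset ((i : Fin n) × Fin (lam i)) :=
  Finset.univ.filter fun c => (c.2 : ℕ) = (j : ℕ)

lemma cell_ext {c c' : (i : Fin n) × Fin (lam i)} (h1 : c.1 = c'.1)
    (h2 : (c.2 : ℕ) = (c'.2 : ℕ)) : c = c' := by
  obtain ⟨a, b⟩ := c
  obtain ⟨a', b'⟩ := c'
  cases h1
  exact congrArg _ (Fin.ext h2)

lemma card_colCells (j : Fin m) : (colCells lam j).card = conjPart lam m j := by
  rw [conjPart]
  apply Finset.card_bij (i := fun c _ => c.1)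
  · intro c hc
    rw [colCells, Finset.mem_filter] at hc
    rw [Finset.mem_filter]
    exact ⟨Finset.mem_univ _, hc.2 ▸ c.2.isLt⟩
  · intro c hc c' hc' h
    rw [colCells, Finset.mem_filter] at hc hc'
    exact cell_ext lam h (by rw [hc.2, hc'.2])
  · intro i hi
    rw [Finset.mem_filter] at hi
    exact ⟨⟨i, ⟨(j : ℕ), hi.2⟩⟩, Finset.mem_filter.mpr ⟨Finset.mem_univ _, rfl⟩, rfl⟩

variable {lam}

lemma lt_conj_of_cell (hlam : Antitone lam) {j : Fin m} {i : Fin n} (h : (j : ℕ) < lam i) :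
    (i : ℕ) < conjPart lam m j := by
  have hsub : Finset.Iic i ⊆ Finset.univ.filter fun a => (j : ℕ) < lam a := by
    intro a ha
    rw [Finset.mem_Iic] at ha
    exact Finset.mem_filter.mpr ⟨Finset.mem_univ _, lt_of_lt_of_le h (hlam ha)⟩
  have := Finset.card_le_card hsub
  rw [Fin.card_Iic] at this
  exact lt_of_lt_of_le (Nat.lt_succ_self _) this

lemma cell_of_lt_conj (hlam : Antitone lam) {j : Fin m} {i : Fin n}
    (h : (i : ℕ) < conjPart lam m j) : (j : ℕ) < lam i := by
  by_contra hcon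
  push_neg at hcon
  have hsub : (Finset.univ.filter fun a => (j : ℕ) < lam a) ⊆ Finset.Iio i := by
    intro a ha
    rw [Finset.mem_filter] at ha
    rw [Finset.mem_Iio]
    by_contra hia
    push_neg at hia
    exact absurd (lt_of_lt_of_le ha.2 (hlam hia)) (not_lt.mpr hcon)
  have := Finset.card_le_card hsub
  rw [Fin.card_Iio] at this
  rw [conjPart] at h
  omega

/-- the `i`-th smallest element of `t` (junk value `i` if out of range) -/
noncomputable def nth (t : Finset (Fin n)) (i : Fin n) : Fin n :=
  if h : (i : ℕ) < t.card then t.orderEmbOfFin rfl ⟨(i : ℕ), h⟩ else i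

lemma nth_mem {t : Finset (Fin n)} {i : Fin n} (h : (i : ℕ) < t.card) : nth t i ∈ t := by
  rw [nth, dif_pos h]
  exact Finset.orderEmbOfFin_mem t rfl _

lemma nth_lt_nth {t : Finset (Fin n)} {i i' : Fin n} (h : i < i') (h' : (i' : ℕ) < t.card) :
    nth t i < nth t i' := by
  have hi : (i : ℕ) < t.card := lt_trans h h'
  rw [nth, nth, dif_pos hi, dif_pos h']
  exact (t.orderEmbOfFin rfl).strictMono (by exact h)

lemma card_filter_lt_fin (N : ℕ) {i : ℕ} (h : i < N) :
    (Finset.univ.filter fun k : Fin N => k.val < i).card = i := by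
  have : (Finset.univ.filter fun k : Fin N => k.val < i) = Finset.Iio ⟨i, h⟩ := by
    ext k
    rw [Finset.mem_filter, Finset.mem_Iio]
    constructor
    · intro hk; exact hk.2
    · intro hk; exact ⟨Finset.mem_univ _, hk⟩
  rw [this, Fin.card_Iio]

lemma nth_le_nth_of_dom {t t' : Finset (Fin n)} (hdom : ∀ l, cnt t' l ≤ cnt t l) {i : Fin n}
    (hi : (i : ℕ) < t.card) (hi' : (i : ℕ) < t'.card) : nth t i ≤ nth t' i := by
  by_contra hgt
  push_neg at hgt
  set a := nth t' i with ha
  -- at least i+1 elements of t' are ≤ a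
  have h1 : (i : ℕ) + 1 ≤ cnt t' (a.val + 1) := by
    have hinj : Set.InjOn (fun k : Fin ((i : ℕ) + 1) =>
        t'.orderEmbOfFin rfl ⟨(k : ℕ), lt_of_le_of_lt (Nat.lt_succ_iff.mp k.isLt) hi'⟩)
        ↑(Finset.univ : Finset (Fin ((i : ℕ) + 1))) := by
      intro x _ y _ hxy
      have := (t'.orderEmbOfFin rfl).injective hxy
      rw [Fin.mk.injEq] at this
      exact Fin.ext this
    have hmaps : ∀ k ∈ (Finset.univ : Finset (Fin ((i : ℕ) + 1))),
        t'.orderEmbOfFin rfl ⟨(k : ℕ), lt_of_le_of_lt (Nat.lt_succ_iff.mp k.isLt) hi'⟩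
          ∈ t'.filter fun x => x.val < a.val + 1 := by
      intro k _
      have hk' : (k : ℕ) < t'.card := lt_of_le_of_lt (Nat.lt_succ_iff.mp k.isLt) hi'
      rw [Finset.mem_filter]
      refine ⟨Finset.orderEmbOfFin_mem t' rfl _, ?_⟩
      have hle : t'.orderEmbOfFin rfl ⟨(k : ℕ), hk'⟩ ≤ t'.orderEmbOfFin rfl ⟨(i : ℕ), hi'⟩ :=
        (t'.orderEmbOfFin rfl).monotone
          (show (⟨(k : ℕ), hk'⟩ : Fin t'.card) ≤ ⟨(i : ℕ), hi'⟩ from Nat.lt_succ_iff.mp k.isLt)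
      have haa : a = t'.orderEmbOfFin rfl ⟨(i : ℕ), hi'⟩ := by rw [ha, nth, dif_pos hi']
      rw [haa]
      exact Nat.lt_succ_of_le (Fin.le_def.mp hle)
    have := Finset.card_le_card_of_injOn _ hmaps hinj
    rw [Finset.card_univ] at this
    simpa [cnt] using this
  -- at most i elements of t are ≤ a
  have h2 : cnt t (a.val + 1) ≤ (i : ℕ) := by
    have hsub : (t.filter fun x => x.val < a.val + 1) ⊆
        (Finset.univ.filter fun k : Fin t.card => k.val < i.val).image
          (fun k => t.orderEmbOfFin rfl k) := by
      intro x hx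
      rw [Finset.mem_filter] at hx
      have hxr : x ∈ Set.range ⇑(t.orderEmbOfFin rfl) := by
        rw [Finset.range_orderEmbOfFin]
        exact Finset.mem_coe.mpr hx.1
      obtain ⟨k, hk⟩ := hxr
      rw [Finset.mem_image]
      refine ⟨k, ?_, hk⟩
      rw [Finset.mem_filter]
      refine ⟨Finset.mem_univ _, ?_⟩
      have hxa : x ≤ a := Nat.lt_succ_iff.mp hx.2
      have hxnth : x < nth t i := lt_of_le_of_lt hxa hgt
      rw [nth, dif_pos hi, ← hk] at hxnth
      exact (t.orderEmbOfFin rfl).strictMono.lt_iff_lt.mp hxnth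
    calc cnt t (a.val + 1)
        ≤ ((Finset.univ.filter fun k : Fin t.card => k.val < i.val).image
          (fun k => t.orderEmbOfFin rfl k)).card := Finset.card_le_card hsub
      _ ≤ (Finset.univ.filter fun k : Fin t.card => k.val < i.val).card :=
          Finset.card_image_le
      _ = (i : ℕ) := card_filter_lt_fin t.card hi
  have := hdom (a.val + 1)
  omega

end Tableau

section Bij

variable {lam : Fin n → ℕ}

/-- tableau conditions, as in `schurPoly` -/
def IsTab (lam : Fin n → ℕ) (T : ((i : Fin n) × Fin (lam i)) → Fin n) : Prop :=
  (∀ c c' : (i : Fin n) × Fin (lam i),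
      c.1 = c'.1 → (c.2 : ℕ) ≤ (c'.2 : ℕ) → T c ≤ T c') ∧
  (∀ c c' : (i : Fin n) × Fin (lam i),
      c.1 < c'.1 → (c.2 : ℕ) = (c'.2 : ℕ) → T c < T c')

noncomputable def tabToCols (T : ((i : Fin n) × Fin (lam i)) → Fin n) :
    Fin m → Finset (Fin n) := fun j => (colCells lam j).image T

noncomputable def colsToTab (hm : ∀ i, lam i ≤ m) (S : Fin m → Finset (Fin n)) :
    ((i : Fin n) × Fin (lam i)) → Fin n :=
  fun c => nth (S ⟨(c.2 : ℕ), lt_of_lt_of_le c.2.isLt (hm c.1)⟩) c.1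

lemma injOn_colCells {T : ((i : Fin n) × Fin (lam i)) → Fin n} (hT : IsTab lam T) (j : Fin m) :
    Set.InjOn T ↑(colCells lam j) := by
  intro c hc c' hc' h
  rw [Finset.mem_coe, colCells, Finset.mem_filter] at hc hc'
  rcases lt_trichotomy c.1 c'.1 with hlt | heq | hgt
  · exact absurd h (ne_of_lt (hT.2 c c' hlt (by rw [hc.2, hc'.2])))
  · exact cell_ext lam heq (by rw [hc.2, hc'.2])
  · exact absurd h.symm (ne_of_lt (hT.2 c' c hgt (by rw [hc.2, hc'.2])))

lemma card_tabToCols {T : ((i : Fin n) × Fin (lam i)) → Fin n} (hT : IsTab lam T) (j : Fin m) :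
    ((tabToCols T : Fin m → Finset (Fin n)) j).card = conjPart lam m j := by
  rw [tabToCols, Finset.card_image_of_injOn (injOn_colCells hT j), card_colCells]

lemma cnt_tabToCols {T : ((i : Fin n) × Fin (lam i)) → Fin n} (hT : IsTab lam T) (j : Fin m)
    (l : ℕ) :
    cnt ((tabToCols T : Fin m → Finset (Fin n)) j) l
      = ((colCells lam j).filter fun c => (T c : ℕ) < l).card := by
  rw [tabToCols, cnt, Finset.filter_image,
    Finset.card_image_of_injOn ((injOn_colCells hT j).mono (by
      intro x hx
      exact Finset.mem_coe.mpr (Finset.filter_subset _ _ (Finset.mem_coe.mp hx))))]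

lemma cnt_tabToCols_succ_le {T : ((i : Fin n) × Fin (lam i)) → Fin n} (hT : IsTab lam T)
    (t : ℕ) (h1 : t + 1 < m) (l : ℕ) :
    cnt ((tabToCols T : Fin m → Finset (Fin n)) ⟨t + 1, h1⟩) l
      ≤ cnt ((tabToCols T : Fin m → Finset (Fin n)) ⟨t, Nat.lt_of_succ_lt h1⟩) l := by
  rw [cnt_tabToCols hT, cnt_tabToCols hT]
  have hmap : ∀ c ∈ (colCells lam (⟨t + 1, h1⟩ : Fin m)).filter fun c => (T c : ℕ) < l,
      ∀ hc2 : (t : ℕ) < lam c.1,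
      (⟨c.1, ⟨t, hc2⟩⟩ : (i : Fin n) × Fin (lam i)) ∈
        (colCells lam (⟨t, Nat.lt_of_succ_lt h1⟩ : Fin m)).filter fun c => (T c : ℕ) < l := by
    intro c hc hc2
    rw [Finset.mem_filter, colCells, Finset.mem_filter] at hc ⊢
    refine ⟨⟨Finset.mem_univ _, rfl⟩, ?_⟩
    have hle : T ⟨c.1, ⟨t, hc2⟩⟩ ≤ T c := hT.1 _ c rfl (by
      have : (c.2 : ℕ) = t + 1 := hc.1.2
      simp only []
      omega)
    have : (T ⟨c.1, ⟨t, hc2⟩⟩ : ℕ) ≤ (T c : ℕ) := hle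
    omega
  apply Finset.card_le_card_of_injOn
    (fun c => if hc2 : (t : ℕ) < lam c.1 then ⟨c.1, ⟨t, hc2⟩⟩ else c)
  · intro c hc
    have hc2 : (t : ℕ) < lam c.1 := by
      rw [Finset.mem_coe, Finset.mem_filter, colCells, Finset.mem_filter] at hc
      have : (c.2 : ℕ) = t + 1 := hc.1.2
      have := c.2.isLt
      omega
    simp only [dif_pos hc2]
    exact Finset.mem_coe.mpr (hmap c (Finset.mem_coe.mp hc) hc2)
  · intro c hc c' hc' heq
    rw [Finset.mem_coe, Finset.mem_filter, colCells, Finset.mem_filter] at hc hc'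
    have hc2 : (t : ℕ) < lam c.1 := by have := c.2.isLt; have : (c.2 : ℕ) = t + 1 := hc.1.2; omega
    have hc2' : (t : ℕ) < lam c'.1 := by
      have := c'.2.isLt; have : (c'.2 : ℕ) = t + 1 := hc'.1.2; omega
    have heq' : (if hc2 : (t : ℕ) < lam c.1 then (⟨c.1, ⟨t, hc2⟩⟩ : (i : Fin n) × Fin (lam i))
        else c) = (if hc2 : (t : ℕ) < lam c'.1 then (⟨c'.1, ⟨t, hc2⟩⟩ : (i : Fin n) × Fin (lam i))
        else c') := heq
    rw [dif_pos hc2, dif_pos hc2'] at heq'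
    have hfst := congrArg Sigma.fst heq'
    exact cell_ext lam hfst (by rw [hc.1.2, hc'.1.2])

lemma Pf_chain {S : Fin m → Finset (Fin n)}
    (hc : ∀ (t : ℕ) (h1 : t + 1 < m) (l : ℕ),
      Pf S ⟨t + 1, h1⟩ l < Pf S ⟨t, Nat.lt_of_succ_lt h1⟩ l)
    {i i' : Fin m} (hlt : i < i') (l : ℕ) : Pf S i' l < Pf S i l := by
  have aux : ∀ d (h : (i : ℕ) + d + 1 < m), Pf S ⟨(i : ℕ) + d + 1, h⟩ l < Pf S i l := by
    intro d
    induction d with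
    | zero =>
      intro h
      have h0 : (⟨(i : ℕ) + 0 + 1, h⟩ : Fin m) = ⟨(i : ℕ) + 1, by omega⟩ := rfl
      rw [h0]
      have := hc (i : ℕ) (by omega) l
      have hieq : (⟨(i : ℕ), Nat.lt_of_succ_lt (by omega : (i : ℕ) + 1 < m)⟩ : Fin m) = i :=
        Fin.ext rfl
      rw [hieq] at this
      exact this
    | succ d ih =>
      intro h
      have h1 : (i : ℕ) + d + 1 < m := by omega
      have h0 : (⟨(i : ℕ) + (d + 1) + 1, h⟩ : Fin m) = ⟨(i : ℕ) + d + 1 + 1, by omega⟩ := rfl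
      rw [h0]
      exact lt_trans (hc ((i : ℕ) + d + 1) (by omega) l) (ih h1)
  have hd : (i' : ℕ) = (i : ℕ) + ((i' : ℕ) - (i : ℕ) - 1) + 1 := by
    have : (i : ℕ) < (i' : ℕ) := hlt
    omega
  have hi' : i' = ⟨(i : ℕ) + ((i' : ℕ) - (i : ℕ) - 1) + 1, by rw [← hd]; exact i'.isLt⟩ :=
    Fin.ext hd
  rw [hi']
  exact aux _ _

lemma noMeets_tabToCols {T : ((i : Fin n) × Fin (lam i)) → Fin n} (hT : IsTab lam T) :
    ¬(meets (tabToCols T : Fin m → Finset (Fin n))).Nonempty := by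
  intro hne
  obtain ⟨l, hl⟩ := hne
  rw [meets, Finset.mem_filter] at hl
  obtain ⟨-, i, i', hlt, heq⟩ := hl
  have := Pf_chain (S := tabToCols T) (fun t h1 l => by
    have hcnt := cnt_tabToCols_succ_le hT t h1 l
    rw [Pf, Pf]
    have : ((⟨t + 1, h1⟩ : Fin m) : ℕ) = t + 1 := rfl
    push_cast
    omega) hlt l
  omega

end Bij

section Bij2

variable {lam : Fin n → ℕ}

lemma conjPart_le_n (lam : Fin n → ℕ) (j : Fin m) : conjPart lam m j ≤ n := by
  rw [conjPart]
  calc (Finset.univ.filter fun a : Fin n => (j : ℕ) < lam a).card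
      ≤ (Finset.univ : Finset (Fin n)).card := Finset.card_filter_le _ _
    _ = n := by simp

lemma isTab_colsToTab (hlam : Antitone lam) (hm : ∀ i, lam i ≤ m) {S : Fin m → Finset (Fin n)}
    (hcard : ∀ j, (S j).card = conjPart lam m j) (hno : ¬(meets S).Nonempty) :
    IsTab lam (colsToTab hm S) := by
  have hdom : ∀ (t : ℕ) (h1 : t + 1 < m) (l : ℕ),
      cnt (S ⟨t + 1, h1⟩) l ≤ cnt (S ⟨t, Nat.lt_of_succ_lt h1⟩) l := by
    intro t h1 l
    rcases le_or_gt l n with hl | hl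
    · have := noMeet_strict S hno
        (show (⟨t, Nat.lt_of_succ_lt h1⟩ : Fin m) < ⟨t + 1, h1⟩ from Nat.lt_succ_self t) hl
      rw [Pf, Pf] at this
      have hv1 : ((⟨t + 1, h1⟩ : Fin m) : ℕ) = t + 1 := rfl
      have hv2 : ((⟨t, Nat.lt_of_succ_lt h1⟩ : Fin m) : ℕ) = t := rfl
      rw [hv1, hv2] at this
      omega
    · rw [cnt_of_le _ (le_of_lt hl), cnt_of_le _ (le_of_lt hl), hcard, hcard]
      exact conjPart_antitone lam (show (⟨t, Nat.lt_of_succ_lt h1⟩ : Fin m) ≤ ⟨t + 1, h1⟩ from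
        Nat.le_succ t)
  have hnth : ∀ (i : Fin n) (a b : Fin m), a ≤ b → (i : ℕ) < (S b).card →
      nth (S a) i ≤ nth (S b) i := by
    intro i a b hab hib
    have aux : ∀ (d : ℕ) (h : (a : ℕ) + d < m), (i : ℕ) < (S ⟨(a : ℕ) + d, h⟩).card →
        nth (S a) i ≤ nth (S ⟨(a : ℕ) + d, h⟩) i := by
      intro d
      induction d with
      | zero =>
        intro h _
        have : (⟨(a : ℕ) + 0, h⟩ : Fin m) = a := rfl
        rw [this]
      | succ d ih =>
        intro h hib'
        have hmid : (a : ℕ) + d < m := by omega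
        have hmidcard : (i : ℕ) < (S ⟨(a : ℕ) + d, hmid⟩).card := by
          rw [hcard] at hib' ⊢
          exact lt_of_lt_of_le hib'
            (conjPart_antitone lam (show (⟨(a : ℕ) + d, hmid⟩ : Fin m) ≤ ⟨(a : ℕ) + (d + 1), h⟩
              from by apply Fin.mk_le_mk.mpr; omega))
        refine le_trans (ih hmid hmidcard) ?_
        have hstep : ∀ l, cnt (S ⟨(a : ℕ) + (d + 1), h⟩) l ≤ cnt (S ⟨(a : ℕ) + d, hmid⟩) l :=
          fun l => hdom ((a : ℕ) + d) h l
        exact nth_le_nth_of_dom hstep hmidcard hib'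
    have hb : b = ⟨(a : ℕ) + ((b : ℕ) - (a : ℕ)), by omega⟩ := Fin.ext (by
      have : (a : ℕ) ≤ (b : ℕ) := hab
      simp only []
      omega)
    rw [hb] at hib ⊢
    exact aux _ _ hib
  constructor
  · -- rows weakly increase
    rintro ⟨i, jj⟩ ⟨i', jj'⟩ h1 h2
    simp only at h1
    subst h1
    show nth (S ⟨(jj : ℕ), _⟩) i ≤ nth (S ⟨(jj' : ℕ), _⟩) i
    apply hnth i _ _ (Fin.mk_le_mk.mpr h2)
    rw [hcard]
    exact lt_conj_of_cell hlam (jj'.isLt : ((⟨(jj' : ℕ), lt_of_lt_of_le jj'.isLt (hm i)⟩ :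
      Fin m) : ℕ) < lam i)
  · -- columns strictly increase
    rintro ⟨i, jj⟩ ⟨i', jj'⟩ h1 h2
    simp only at h1 h2
    show nth (S ⟨(jj : ℕ), _⟩) i < nth (S ⟨(jj' : ℕ), _⟩) i'
    have hcol : (⟨(jj : ℕ), lt_of_lt_of_le jj.isLt (hm i)⟩ : Fin m)
        = ⟨(jj' : ℕ), lt_of_lt_of_le jj'.isLt (hm i')⟩ := Fin.ext h2
    rw [hcol]
    apply nth_lt_nth h1
    rw [hcard]
    exact lt_conj_of_cell hlam (jj'.isLt : ((⟨(jj' : ℕ), lt_of_lt_of_le jj'.isLt (hm i')⟩ :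
      Fin m) : ℕ) < lam i')

lemma colsToTab_tabToCols (hlam : Antitone lam) (hm : ∀ i, lam i ≤ m)
    {T : ((i : Fin n) × Fin (lam i)) → Fin n} (hT : IsTab lam T) :
    colsToTab hm (tabToCols T : Fin m → Finset (Fin n)) = T := by
  funext c
  show nth ((tabToCols T : Fin m → Finset (Fin n))
    ⟨(c.2 : ℕ), lt_of_lt_of_le c.2.isLt (hm c.1)⟩) c.1 = T c
  set j : Fin m := ⟨(c.2 : ℕ), lt_of_lt_of_le c.2.isLt (hm c.1)⟩ with hj
  have hcd : ((tabToCols T : Fin m → Finset (Fin n)) j).card = conjPart lam m j :=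
    card_tabToCols hT j
  have hc1 : (c.1 : ℕ) < ((tabToCols T : Fin m → Finset (Fin n)) j).card := by
    rw [hcd]
    exact lt_conj_of_cell hlam (c.2.isLt : (j : ℕ) < lam c.1)
  -- the enumeration of column j by rows
  have hex : ∀ k : Fin (((tabToCols T : Fin m → Finset (Fin n)) j).card),
      ∃ hk : (k : ℕ) < n, (j : ℕ) < lam ⟨(k : ℕ), hk⟩ := by
    intro k
    have hk1 : (k : ℕ) < conjPart lam m j := hcd ▸ k.isLt
    have hkn : (k : ℕ) < n := lt_of_lt_of_le hk1 (conjPart_le_n lam j)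
    exact ⟨hkn, cell_of_lt_conj hlam hk1⟩
  set g : Fin (((tabToCols T : Fin m → Finset (Fin n)) j).card) → Fin n := fun k =>
    T (if h : ∃ hk : (k : ℕ) < n, (j : ℕ) < lam ⟨(k : ℕ), hk⟩ then
      ⟨⟨(k : ℕ), h.choose⟩, ⟨(j : ℕ), h.choose_spec⟩⟩ else c) with hg
  have hgval : ∀ k, g k = T ⟨⟨(k : ℕ), (hex k).choose⟩, ⟨(j : ℕ), (hex k).choose_spec⟩⟩ := by
    intro k
    rw [hg]
    simp only []
    rw [dif_pos (hex k)]
  have hgmem : ∀ k, g k ∈ (tabToCols T : Fin m → Finset (Fin n)) j := by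
    intro k
    rw [hgval k]
    show T _ ∈ (colCells lam j).image T
    apply Finset.mem_image_of_mem
    rw [colCells, Finset.mem_filter]
    exact ⟨Finset.mem_univ _, rfl⟩
  have hgmono : StrictMono g := by
    intro k k' hkk
    rw [hgval k, hgval k']
    exact hT.2 _ _ (by exact hkk) rfl
  have huniq : g = ⇑(((tabToCols T : Fin m → Finset (Fin n)) j).orderEmbOfFin rfl) :=
    Finset.orderEmbOfFin_unique rfl hgmem hgmono
  rw [nth, dif_pos hc1, ← congrFun huniq ⟨(c.1 : ℕ), hc1⟩, hgval]

lemma tabToCols_colsToTab (hlam : Antitone lam) (hm : ∀ i, lam i ≤ m)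
    {S : Fin m → Finset (Fin n)} (hcard : ∀ j, (S j).card = conjPart lam m j) :
    (tabToCols (colsToTab hm S) : Fin m → Finset (Fin n)) = S := by
  funext j
  ext x
  rw [tabToCols, Finset.mem_image]
  constructor
  · rintro ⟨c, hc, rfl⟩
    rw [colCells, Finset.mem_filter] at hc
    show nth (S ⟨(c.2 : ℕ), lt_of_lt_of_le c.2.isLt (hm c.1)⟩) c.1 ∈ S j
    have hcol : (⟨(c.2 : ℕ), lt_of_lt_of_le c.2.isLt (hm c.1)⟩ : Fin m) = j := Fin.ext hc.2
    rw [hcol]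
    apply nth_mem
    rw [hcard]
    apply lt_conj_of_cell hlam
    rw [← hc.2]
    exact c.2.isLt
  · intro hx
    have hxr : x ∈ Set.range ⇑((S j).orderEmbOfFin rfl) := by
      rw [Finset.range_orderEmbOfFin]
      exact Finset.mem_coe.mpr hx
    obtain ⟨k, hk⟩ := hxr
    have hkc : (k : ℕ) < conjPart lam m j := by rw [← hcard]; exact k.isLt
    have hkn : (k : ℕ) < n := lt_of_lt_of_le hkc (conjPart_le_n lam j)
    have hcell : (j : ℕ) < lam ⟨(k : ℕ), hkn⟩ := cell_of_lt_conj hlam hkc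
    refine ⟨⟨⟨(k : ℕ), hkn⟩, ⟨(j : ℕ), hcell⟩⟩, ?_, ?_⟩
    · rw [colCells, Finset.mem_filter]
      exact ⟨Finset.mem_univ _, rfl⟩
    · show nth (S ⟨(j : ℕ), _⟩) ⟨(k : ℕ), hkn⟩ = x
      rw [show (⟨(j : ℕ), lt_of_lt_of_le hcell (hm ⟨(k : ℕ), hkn⟩)⟩ : Fin m) = j from
        Fin.ext rfl]
      rw [nth, dif_pos (show ((⟨(k : ℕ), hkn⟩ : Fin n) : ℕ) < (S j).card from
        lt_of_lt_of_le hkc (le_of_eq (hcard j).symm))]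
      rw [← hk]

lemma weight_tabToCols (hm : ∀ i, lam i ≤ m) {T : ((i : Fin n) × Fin (lam i)) → Fin n}
    (hT : IsTab lam T) :
    (∏ c : (i : Fin n) × Fin (lam i), (MvPolynomial.X (T c) : MvPolynomial (Fin n) ℤ))
      = wgt (tabToCols T : Fin m → Finset (Fin n)) := by
  rw [wgt]
  have hcol : ∀ j : Fin m, colWgt ((tabToCols T : Fin m → Finset (Fin n)) j)
      = ∏ c ∈ colCells lam j, (MvPolynomial.X (T c) : MvPolynomial (Fin n) ℤ) := by
    intro j
    rw [tabToCols, colWgt]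
    apply Finset.prod_image
    intro x hx y hy hxy
    exact injOn_colCells hT j (Finset.mem_coe.mpr hx) (Finset.mem_coe.mpr hy) hxy
  rw [Finset.prod_congr rfl fun j _ => hcol j]
  have := Finset.prod_fiberwise_of_maps_to (s := (Finset.univ : Finset ((i : Fin n) × Fin (lam i))))
    (t := (Finset.univ : Finset (Fin m)))
    (g := fun c => (⟨(c.2 : ℕ), lt_of_lt_of_le c.2.isLt (hm c.1)⟩ : Fin m))
    (fun c _ => Finset.mem_univ _)
    (fun c => (MvPolynomial.X (T c) : MvPolynomial (Fin n) ℤ))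
  rw [← this]
  apply Finset.prod_congr rfl
  intro j _
  apply Finset.prod_congr _ fun _ _ => rfl
  rw [colCells]
  apply Finset.filter_congr
  intro c _
  rw [Fin.ext_iff]

end Bij2

lemma schur_side {lam : Fin n → ℕ} (hlam : Antitone lam) (hm : ∀ i, lam i ≤ m) :
    schurPoly n lam = ∑ S ∈ goodSets (n := n) (conjPart lam m), wgt S := by
  rw [schurPoly]
  apply Finset.sum_nbij' (i := fun T => (tabToCols T : Fin m → Finset (Fin n)))
    (j := fun S => colsToTab hm S)
  · intro T hT
    rw [Finset.mem_filter] at hT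
    have hT' : IsTab lam T := ⟨hT.2.1, hT.2.2⟩
    rw [goodSets, Finset.mem_filter]
    refine ⟨Finset.mem_univ _, fun j => ?_, noMeets_tabToCols hT'⟩
    exact_mod_cast congrArg (Nat.cast : ℕ → ℤ) (card_tabToCols hT' j)
  · intro S hS
    rw [goodSets, Finset.mem_filter] at hS
    obtain ⟨-, hcardZ, hno⟩ := hS
    have hcard : ∀ j, (S j).card = conjPart lam m j := fun j => by exact_mod_cast hcardZ j
    have hT := isTab_colsToTab hlam hm hcard hno
    rw [Finset.mem_filter]
    exact ⟨Finset.mem_univ _, hT.1, hT.2⟩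
  · intro T hT
    rw [Finset.mem_filter] at hT
    exact colsToTab_tabToCols hlam hm ⟨hT.2.1, hT.2.2⟩
  · intro S hS
    rw [goodSets, Finset.mem_filter] at hS
    obtain ⟨-, hcardZ, -⟩ := hS
    exact tabToCols_colsToTab hlam hm (fun j => by exact_mod_cast hcardZ j)
  · intro T hT
    rw [Finset.mem_filter] at hT
    exact weight_tabToCols hm ⟨hT.2.1, hT.2.2⟩

end DJT

/-- **Dual Jacobi–Trudi identity**: for a partition `λ_1 ≥ ⋯ ≥ λ_n ≥ 0` with
conjugate `λ̃` and any `m ≥ λ_1`,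
`s_λ(x_1,…,x_n) = det( e_{λ̃_i − i + j} )_{1 ≤ i,j ≤ m}`, with the conventions
`e_0 = 1`, `e_k = 0` for `k < 0` and for `k > n` (0-indexed: `λ̃_i - i + j`). -/
theorem dual_jacobi_trudi_identity (n m : ℕ) (lam : Fin n → ℕ) (hlam : Antitone lam)
    (hm : ∀ i, lam i ≤ m) :
    schurPoly n lam =
      Matrix.det (Matrix.of fun i j : Fin m =>
        elemSymZ (Fin n) ((conjPart lam m i : ℤ) - ((i : ℕ) : ℤ) + ((j : ℕ) : ℤ))) := by
  rw [DJT.schur_side hlam hm]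
  exact (DJT.det_side (conjPart lam m) (DJT.conjPart_antitone lam)).symm
end

section
/- Pieri rule: for a partition λ = (λ_1 ≥ ⋯ ≥ λ_n ≥ 0) and a natural number k, in ℤ[x_1,…,x_n] one has s_λ(x_1,…,x_n) · h_k(x_1,…,x_n) = Σ_μ s_μ(x_1,…,x_n), where the sum runs over all weakly decreasing tuples μ = (μ_1 ≥ ⋯ ≥ μ_n) of nonnegative integers satisfying μ_1 ≥ λ_1 ≥ μ_2 ≥ λ_2 ≥ ⋯ ≥ μ_n ≥ λ_n and Σ_i (μ_i − λ_i) = k (i.e. μ/λ is a horizontal strip of size k with no two added boxes in the same column). -/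
namespace PieriAux

def ssum (n : ℕ) (f : ℕ → ℕ) : ℕ := ∑ i ∈ Finset.range n, f i

structure IsChain (n : ℕ) (a : ℕ → ℕ → ℕ) : Prop where
  zero : ∀ i, a 0 i = 0
  mono : ∀ t i, a t i ≤ a (t+1) i
  strip : ∀ t i, a (t+1) (i+1) ≤ a t i
  stab : ∀ t, n ≤ t → a t = a n
  supp : ∀ t i, n ≤ i → a t i = 0

structure IsStrip (n : ℕ) (lam mu : ℕ → ℕ) (k : ℕ) : Prop where
  le : ∀ i, lam i ≤ mu i
  bound : ∀ i, mu (i+1) ≤ lam i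
  size : ssum n mu = ssum n lam + k

structure IsMult (n k : ℕ) (m : ℕ → ℕ) : Prop where
  supp : ∀ t, n ≤ t → m t = 0
  size : ssum n m = k

lemma IsChain.le_of_le {n a} (h : IsChain n a) {t t'} (htt : t ≤ t') (i : ℕ) :
    a t i ≤ a t' i := by
  induction t' with
  | zero => simp [Nat.le_zero.mp htt]
  | succ t' ih =>
    rcases Nat.lt_or_ge t (t'+1) with h1 | h1
    · exact le_trans (ih (Nat.lt_succ_iff.mp h1)) (h.mono t' i)
    · have : t = t' + 1 := by omega
      subst this; exact le_rfl

lemma IsChain.diag {n a} (h : IsChain n a) : ∀ t i, t ≤ i → a t i = 0 := by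
  intro t
  induction t with
  | zero => intro i _; exact h.zero i
  | succ t ih =>
    intro i hi
    obtain ⟨i', rfl⟩ : ∃ i', i = i' + 1 := ⟨i - 1, by omega⟩
    exact Nat.le_zero.mp ((h.strip t i').trans_eq (ih i' (by omega)))

lemma IsChain.anti {n a} (h : IsChain n a) : ∀ t i, a t (i+1) ≤ a t i := by
  intro t i
  cases t with
  | zero => simp [h.zero]
  | succ t => exact (h.strip t i).trans (h.le_of_le (Nat.le_succ t) i)

def reflect (n k : ℕ) (lam rho nu : ℕ → ℕ) : ℕ → ℕ := fun i =>
  if i = 0 then max (lam 0) (rho 0) + (k - (ssum n rho - ssum n nu))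
  else if i ≤ n then max (lam i) (rho i) + min (lam (i-1)) (rho (i-1)) - nu (i-1)
  else 0

def invreflect (n : ℕ) (lam rho mu : ℕ → ℕ) : ℕ → ℕ := fun i =>
  if i < n then max (lam (i+1)) (rho (i+1)) + min (lam i) (rho i) - mu (i+1) else 0

lemma reflect_succ (n k : ℕ) (lam rho nu : ℕ → ℕ) (i : ℕ) (hi : i < n) :
    reflect n k lam rho nu (i+1)
      = max (lam (i+1)) (rho (i+1)) + min (lam i) (rho i) - nu i := by
  simp [reflect, Nat.succ_le_of_lt hi]

lemma reflect_zero (n k : ℕ) (lam rho nu : ℕ → ℕ) :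
    reflect n k lam rho nu 0
      = max (lam 0) (rho 0) + (k - (ssum n rho - ssum n nu)) := by
  simp [reflect]

lemma reflect_supp (n k : ℕ) (lam rho nu : ℕ → ℕ) (i : ℕ) (hi : n + 1 ≤ i) :
    reflect n k lam rho nu i = 0 := by
  simp only [reflect]
  rw [if_neg (by omega), if_neg (by omega)]

/-- Forward core lemma. -/
lemma reflect_spec (n k j : ℕ) (lam rho nu : ℕ → ℕ)
    (hlam_anti : ∀ i, lam (i+1) ≤ lam i)
    (hlam_supp : ∀ i, n + 1 ≤ i → lam i = 0)
    (hnu_supp : ∀ i, n ≤ i → nu i = 0)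
    (hrho_supp : ∀ i, n ≤ i → rho i = 0)
    (hnl : ∀ i, nu i ≤ lam i) (hln : ∀ i, lam (i+1) ≤ nu i)
    (hnr : ∀ i, nu i ≤ rho i) (hrn : ∀ i, rho (i+1) ≤ nu i)
    (hjr : ssum n rho = ssum n nu + j) (hjk : j ≤ k) :
    (∀ i, lam i ≤ reflect n k lam rho nu i) ∧
    (∀ i, reflect n k lam rho nu (i+1) ≤ lam i) ∧
    (∀ i, rho i ≤ reflect n k lam rho nu i) ∧
    (∀ i, reflect n k lam rho nu (i+1) ≤ rho i) ∧
    ssum (n+1) (reflect n k lam rho nu) = ssum (n+1) lam + k ∧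
    invreflect n lam rho (reflect n k lam rho nu) = nu ∧
    reflect n k lam rho nu 0 - max (lam 0) (rho 0) = k - j := by
  set mu := reflect n k lam rho nu with hmu
  have hnu_min : ∀ i, nu i ≤ min (lam i) (rho i) := fun i => le_min (hnl i) (hnr i)
  have hnu_max : ∀ i, max (lam (i+1)) (rho (i+1)) ≤ nu i :=
    fun i => max_le (hln i) (hrn i)
  have hsucc : ∀ i, i < n →
      mu (i+1) = max (lam (i+1)) (rho (i+1)) + min (lam i) (rho i) - nu i :=
    fun i hi => reflect_succ n k lam rho nu i hi
  have hsucc_ge : ∀ i, i < n → max (lam (i+1)) (rho (i+1)) ≤ mu (i+1) := by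
    intro i hi; rw [hsucc i hi]
    have := hnu_min i
    omega
  have hsucc_le : ∀ i, i < n → mu (i+1) ≤ min (lam i) (rho i) := by
    intro i hi; rw [hsucc i hi]
    have := hnu_max i
    omega
  have hzero : mu 0 = max (lam 0) (rho 0) + (k - j) := by
    rw [hmu, reflect_zero, hjr]
    congr 1
    omega
  have hsupp : ∀ i, n + 1 ≤ i → mu i = 0 := fun i hi => reflect_supp n k lam rho nu i hi
  have R1 : ∀ i, lam i ≤ mu i := by
    intro i
    rcases Nat.eq_zero_or_pos i with rfl | hpos
    · rw [hzero]; exact le_add_of_le_of_nonneg (le_max_left _ _) (Nat.zero_le _)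
    · obtain ⟨i', rfl⟩ : ∃ i', i = i' + 1 := ⟨i - 1, by omega⟩
      rcases Nat.lt_or_ge i' n with hi | hi
      · exact le_trans (le_max_left _ _) (hsucc_ge i' hi)
      · rw [hlam_supp _ (by omega)]; exact Nat.zero_le _
  have R3 : ∀ i, rho i ≤ mu i := by
    intro i
    rcases Nat.eq_zero_or_pos i with rfl | hpos
    · rw [hzero]; exact le_add_of_le_of_nonneg (le_max_right _ _) (Nat.zero_le _)
    · obtain ⟨i', rfl⟩ : ∃ i', i = i' + 1 := ⟨i - 1, by omega⟩
      rcases Nat.lt_or_ge i' n with hi | hi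
      · exact le_trans (le_max_right _ _) (hsucc_ge i' hi)
      · rw [hrho_supp _ (by omega)]; exact Nat.zero_le _
  have R2 : ∀ i, mu (i+1) ≤ lam i := by
    intro i
    rcases Nat.lt_or_ge i n with hi | hi
    · exact le_trans (hsucc_le i hi) (min_le_left _ _)
    · rw [hsupp _ (by omega)]; exact Nat.zero_le _
  have R4 : ∀ i, mu (i+1) ≤ rho i := by
    intro i
    rcases Nat.lt_or_ge i n with hi | hi
    · exact le_trans (hsucc_le i hi) (min_le_right _ _)
    · rw [hsupp _ (by omega)]; exact Nat.zero_le _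
  -- sum identity
  have e0 : ssum (n+1) mu = (∑ i ∈ Finset.range n, mu (i+1)) + mu 0 :=
    Finset.sum_range_succ' mu n
  have e1 : (∑ i ∈ Finset.range n, mu (i+1)) + ssum n nu
      = ∑ i ∈ Finset.range n, (max (lam (i+1)) (rho (i+1)) + min (lam i) (rho i)) := by
    rw [ssum, ← Finset.sum_add_distrib]
    refine Finset.sum_congr rfl ?_
    intro i hi
    rw [hsucc i (Finset.mem_range.mp hi)]
    have h1 := hnu_min i
    have h2 := hnu_max i
    omega
  have e2 : (∑ i ∈ Finset.range n, (max (lam (i+1)) (rho (i+1)) + min (lam i) (rho i)))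
        + max (lam 0) (rho 0)
      = ssum (n+1) lam + ssum n nu + j := by
    rw [Finset.sum_add_distrib]
    have e21 : (∑ i ∈ Finset.range n, max (lam (i+1)) (rho (i+1))) + max (lam 0) (rho 0)
        = ∑ i ∈ Finset.range (n+1), max (lam i) (rho i) :=
      (Finset.sum_range_succ' (fun i => max (lam i) (rho i)) n).symm
    have e22 : (∑ i ∈ Finset.range n, min (lam i) (rho i))
        = ∑ i ∈ Finset.range (n+1), min (lam i) (rho i) := by
      rw [Finset.sum_range_succ, hrho_supp n le_rfl]
      simp
    have e23 : (∑ i ∈ Finset.range (n+1), max (lam i) (rho i))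
          + (∑ i ∈ Finset.range (n+1), min (lam i) (rho i))
        = ssum (n+1) lam + ssum (n+1) rho := by
      rw [ssum, ssum, ← Finset.sum_add_distrib, ← Finset.sum_add_distrib]
      refine Finset.sum_congr rfl fun i _ => ?_
      omega
    have e24 : ssum (n+1) rho = ssum n nu + j := by
      rw [ssum, Finset.sum_range_succ, hrho_supp n le_rfl, add_zero, ← ssum, hjr]
    omega
  have R5 : ssum (n+1) mu = ssum (n+1) lam + k := by omega
  have R6 : invreflect n lam rho mu = nu := by
    funext i
    by_cases hi : i < n
    · simp only [invreflect, if_pos hi]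
      rw [hsucc i hi]
      have h1 := hnu_min i
      have h2 := hnu_max i
      omega
    · simp only [invreflect, if_neg hi]
      exact (hnu_supp i (by omega)).symm
  have R7 : mu 0 - max (lam 0) (rho 0) = k - j := by omega
  exact ⟨R1, R2, R3, R4, R5, R6, R7⟩



/-- Inverse core lemma. -/
lemma invreflect_spec (n k : ℕ) (lam rho mu : ℕ → ℕ)
    (hlam_anti : ∀ i, lam (i+1) ≤ lam i)
    (hlam_supp : ∀ i, n + 1 ≤ i → lam i = 0)
    (hrho_supp : ∀ i, n ≤ i → rho i = 0)
    (hmu_supp : ∀ i, n + 1 ≤ i → mu i = 0)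
    (hml : ∀ i, lam i ≤ mu i) (hml2 : ∀ i, mu (i+1) ≤ lam i)
    (hrm : ∀ i, rho i ≤ mu i) (hmr : ∀ i, mu (i+1) ≤ rho i)
    (hsize : ssum (n+1) mu = ssum (n+1) lam + k) :
    (∀ i, invreflect n lam rho mu i ≤ lam i) ∧
    (∀ i, lam (i+1) ≤ invreflect n lam rho mu i) ∧
    (∀ i, invreflect n lam rho mu i ≤ rho i) ∧
    (∀ i, rho (i+1) ≤ invreflect n lam rho mu i) ∧
    ssum n rho + (mu 0 - max (lam 0) (rho 0)) = ssum n (invreflect n lam rho mu) + k ∧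
    mu 0 - max (lam 0) (rho 0) ≤ k ∧
    reflect n k lam rho (invreflect n lam rho mu) = mu := by
  set nu := invreflect n lam rho mu with hnu
  have hmu_min : ∀ i, mu (i+1) ≤ min (lam i) (rho i) := fun i => le_min (hml2 i) (hmr i)
  have hmu_max : ∀ i, max (lam (i+1)) (rho (i+1)) ≤ mu (i+1) :=
    fun i => max_le (hml (i+1)) (hrm (i+1))
  have hnu_def : ∀ i, i < n →
      nu i = max (lam (i+1)) (rho (i+1)) + min (lam i) (rho i) - mu (i+1) :=
    fun i hi => by simp only [hnu, invreflect, if_pos hi]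
  have hnu_supp : ∀ i, n ≤ i → nu i = 0 :=
    fun i hi => by simp only [hnu, invreflect, if_neg (by omega : ¬ i < n)]
  have hnu_ge : ∀ i, i < n → max (lam (i+1)) (rho (i+1)) ≤ nu i := by
    intro i hi; rw [hnu_def i hi]; have := hmu_min i; omega
  have hnu_le : ∀ i, i < n → nu i ≤ min (lam i) (rho i) := by
    intro i hi; rw [hnu_def i hi]; have := hmu_max i; omega
  have I1 : ∀ i, nu i ≤ lam i := by
    intro i
    rcases Nat.lt_or_ge i n with hi | hi
    · exact (hnu_le i hi).trans (min_le_left _ _)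
    · rw [hnu_supp i hi]; exact Nat.zero_le _
  have I3 : ∀ i, nu i ≤ rho i := by
    intro i
    rcases Nat.lt_or_ge i n with hi | hi
    · exact (hnu_le i hi).trans (min_le_right _ _)
    · rw [hnu_supp i hi]; exact Nat.zero_le _
  have I2 : ∀ i, lam (i+1) ≤ nu i := by
    intro i
    rcases Nat.lt_or_ge i n with hi | hi
    · exact (le_max_left _ _).trans (hnu_ge i hi)
    · rw [hlam_supp (i+1) (by omega)]; exact Nat.zero_le _
  have I4 : ∀ i, rho (i+1) ≤ nu i := by
    intro i
    rcases Nat.lt_or_ge i n with hi | hi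
    · exact (le_max_right _ _).trans (hnu_ge i hi)
    · rw [hrho_supp (i+1) (by omega)]; exact Nat.zero_le _
  have hmax0 : max (lam 0) (rho 0) ≤ mu 0 := max_le (hml 0) (hrm 0)
  -- sum bookkeeping
  have e0 : ssum (n+1) mu = (∑ i ∈ Finset.range n, mu (i+1)) + mu 0 :=
    Finset.sum_range_succ' mu n
  have e1 : ssum n nu + (∑ i ∈ Finset.range n, mu (i+1))
      = ∑ i ∈ Finset.range n, (max (lam (i+1)) (rho (i+1)) + min (lam i) (rho i)) := by
    rw [ssum, ← Finset.sum_add_distrib]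
    refine Finset.sum_congr rfl ?_
    intro i hi
    rw [hnu_def i (Finset.mem_range.mp hi)]
    have h1 := hmu_min i
    have h2 := hmu_max i
    omega
  have e2 : (∑ i ∈ Finset.range n, (max (lam (i+1)) (rho (i+1)) + min (lam i) (rho i)))
        + max (lam 0) (rho 0)
      = ssum (n+1) lam + ssum (n+1) rho := by
    rw [Finset.sum_add_distrib]
    have e21 : (∑ i ∈ Finset.range n, max (lam (i+1)) (rho (i+1))) + max (lam 0) (rho 0)
        = ∑ i ∈ Finset.range (n+1), max (lam i) (rho i) :=
      (Finset.sum_range_succ' (fun i => max (lam i) (rho i)) n).symm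
    have e22 : (∑ i ∈ Finset.range n, min (lam i) (rho i))
        = ∑ i ∈ Finset.range (n+1), min (lam i) (rho i) := by
      rw [Finset.sum_range_succ, hrho_supp n le_rfl]
      simp
    have e23 : (∑ i ∈ Finset.range (n+1), max (lam i) (rho i))
          + (∑ i ∈ Finset.range (n+1), min (lam i) (rho i))
        = ssum (n+1) lam + ssum (n+1) rho := by
      rw [ssum, ssum, ← Finset.sum_add_distrib, ← Finset.sum_add_distrib]
      refine Finset.sum_congr rfl fun i _ => ?_
      omega
    omega
  have e3 : ssum (n+1) rho = ssum n rho := by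
    rw [ssum, Finset.sum_range_succ, hrho_supp n le_rfl, add_zero, ssum]
  have e4 : ssum n nu ≤ ssum n rho :=
    Finset.sum_le_sum fun i _ => I3 i
  have I5 : ssum n rho + (mu 0 - max (lam 0) (rho 0)) = ssum n nu + k := by omega
  have I5b : mu 0 - max (lam 0) (rho 0) ≤ k := by omega
  have I6 : reflect n k lam rho nu = mu := by
    funext i
    rcases Nat.eq_zero_or_pos i with rfl | hpos
    · rw [reflect_zero]
      omega
    · obtain ⟨i', rfl⟩ : ∃ i', i = i' + 1 := ⟨i - 1, by omega⟩
      rcases Nat.lt_or_ge i' n with hi | hi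
      · rw [reflect_succ n k lam rho nu i' hi, hnu_def i' hi]
        have h1 := hmu_min i'
        have h2 := hmu_max i'
        omega
      · rw [reflect_supp n k lam rho nu _ (by omega), hmu_supp _ (by omega)]
  exact ⟨I1, I2, I3, I4, I5, I5b, I6⟩

end PieriAux

namespace PieriAux

def PHI : ℕ → (ℕ → ℕ → ℕ) → (ℕ → ℕ) → ℕ → ℕ → ℕ
  | 0, a, _ => a
  | n+1, a, m => fun t =>
    if t ≤ n then PHI n (fun t' => a (min t' n)) (fun t' => if t' < n then m t' else 0) t
    else reflect n (ssum (n+1) m) (a (n+1))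
      (PHI n (fun t' => a (min t' n)) (fun t' => if t' < n then m t' else 0) n) (a n)

def PSI : ℕ → (ℕ → ℕ) → (ℕ → ℕ → ℕ) → (ℕ → ℕ → ℕ) × (ℕ → ℕ)
  | 0, _, b => (b, fun _ => 0)
  | n+1, lam, b =>
    (fun t => if t ≤ n then
        (PSI n (invreflect n lam (b n) (b (n+1))) (fun t' => b (min t' n))).1 t else lam,
     fun t => if t = n then b (n+1) 0 - max (lam 0) (b n 0)
       else (PSI n (invreflect n lam (b n) (b (n+1))) (fun t' => b (min t' n))).2 t)

lemma ssum_supp_ext {f : ℕ → ℕ} {n n' : ℕ} (hn : n ≤ n') (hf : ∀ i, n ≤ i → f i = 0) :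
    ssum n' f = ssum n f := by
  unfold ssum
  rw [← Finset.sum_subset (Finset.range_subset_range.mpr hn)]
  intro x hx hnx
  exact hf x (by simpa using hnx)

lemma trunc_chain {n : ℕ} {a : ℕ → ℕ → ℕ} (h : IsChain (n+1) a) :
    IsChain n (fun t => a (min t n)) := by
  constructor
  · intro i; simpa using h.zero i
  · intro t i
    exact h.le_of_le (by omega : min t n ≤ min (t+1) n) i
  · intro t i
    rcases Nat.lt_or_ge t n with ht | ht
    · have h1 : min (t+1) n = t+1 := by omega
      have h2 : min t n = t := by omega
      rw [h1, h2]; exact h.strip t i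
    · have h1 : min (t+1) n = n := by omega
      have h2 : min t n = n := by omega
      rw [h1, h2]; exact h.anti n i
  · intro t ht
    simp only [min_self]
    rw [min_eq_right ht]
  · intro t i hi
    exact h.diag (min t n) i (le_trans (min_le_right t n) hi)

lemma trunc_mult {n k : ℕ} {m : ℕ → ℕ} (_ : IsMult (n+1) k m) :
    IsMult n (ssum n m) (fun t => if t < n then m t else 0) := by
  constructor
  · intro t ht; simp [Nat.not_lt.mpr ht]
  · unfold ssum
    exact Finset.sum_congr rfl fun i hi => if_pos (Finset.mem_range.mp hi)

theorem MAIN : ∀ (n : ℕ) (lam : ℕ → ℕ) (k : ℕ) (a : ℕ → ℕ → ℕ) (m : ℕ → ℕ),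
    IsChain n a → a n = lam → IsMult n k m →
    IsChain n (PHI n a m) ∧
    IsStrip n lam (PHI n a m n) k ∧
    (∀ t, ssum n (PHI n a m (t+1)) + ssum n (a t)
        = ssum n (a (t+1)) + ssum n (PHI n a m t) + m t) ∧
    PSI n lam (PHI n a m) = (a, m) := by
  intro n
  induction n with
  | zero =>
    intro lam k a m hch ha hm
    have hk : k = 0 := by
      have := hm.size; simpa [ssum] using this.symm
    have hm0 : ∀ t, m t = 0 := fun t => hm.supp t (Nat.zero_le t)
    have hPHI : PHI 0 a m = a := rfl
    refine ⟨by rw [hPHI]; exact hch, ?_, ?_, ?_⟩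
    · rw [hPHI]
      constructor
      · intro i; rw [ha]
      · intro i
        rw [← ha, hch.zero (i+1)]
        exact Nat.zero_le _
      · simp [ssum, hk]
    · intro t
      simp [hPHI, ssum, hm0]
    · rw [hPHI]
      show (a, fun _ => 0) = (a, m)
      exact Prod.ext rfl (funext fun t => (hm0 t).symm)
  | succ n IH =>
    intro lam k a m hch ha hm
    set a' : ℕ → ℕ → ℕ := fun t => a (min t n) with ha'
    set m' : ℕ → ℕ := fun t => if t < n then m t else 0 with hm'
    set j : ℕ := ssum n m with hj
    have hch' : IsChain n a' := trunc_chain hch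
    have hm'' : IsMult n j m' := trunc_mult hm
    have ha'n : a' n = a n := by simp [ha']
    obtain ⟨hbch, hbstrip, hbwt, hbpsi⟩ := IH (a n) j a' m' hch' ha'n hm''
    set b' : ℕ → ℕ → ℕ := PHI n a' m' with hb'
    set rho : ℕ → ℕ := b' n with hrho
    have hkj : k = j + m n := by
      have h1 : ssum (n+1) m = ssum n m + m n := Finset.sum_range_succ m n
      have h2 := hm.size
      omega
    -- reflect spec
    obtain ⟨R1, R2, R3, R4, R5, R6, R7⟩ :=
      reflect_spec n k j lam rho (a n)
        (fun i => ha ▸ hch.anti (n+1) i)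
        (fun i hi => ha ▸ hch.supp (n+1) i hi)
        (fun i hi => hch.diag n i hi)
        (fun i hi => hbch.supp n i hi)
        (fun i => ha ▸ hch.mono n i)
        (fun i => ha ▸ hch.strip n i)
        (fun i => hbstrip.le i)
        (fun i => hbstrip.bound i)
        hbstrip.size (by omega)
    set mu : ℕ → ℕ := reflect n k lam rho (a n) with hmudef
    have hB : ∀ t, PHI (n+1) a m t = if t ≤ n then b' t else mu := by
      intro t
      show (if t ≤ n then b' t
        else reflect n (ssum (n+1) m) (a (n+1)) (b' n) (a n)) = _
      rw [hm.size, ha]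
    have hmu_anti : ∀ i, mu (i+1) ≤ mu i := fun i => le_trans (R2 i) (R1 i)
    have hBch : IsChain (n+1) (PHI (n+1) a m) := by
      constructor
      · intro i; rw [hB 0, if_pos (Nat.zero_le n)]; exact hbch.zero i
      · intro t i
        rw [hB t, hB (t+1)]
        rcases Nat.lt_or_ge t n with ht | ht
        · rw [if_pos (by omega), if_pos (by omega)]; exact hbch.mono t i
        · rcases Nat.eq_or_lt_of_le ht with rfl | ht2
          · rw [if_pos le_rfl, if_neg (by omega)]; exact R3 i
          · rw [if_neg (by omega), if_neg (by omega)]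
      · intro t i
        rw [hB t, hB (t+1)]
        rcases Nat.lt_or_ge t n with ht | ht
        · rw [if_pos (by omega), if_pos (by omega)]; exact hbch.strip t i
        · rcases Nat.eq_or_lt_of_le ht with rfl | ht2
          · rw [if_pos le_rfl, if_neg (by omega)]; exact R4 i
          · rw [if_neg (by omega), if_neg (by omega)]; exact hmu_anti i
      · intro t ht
        funext i
        rw [hB t, hB (n+1), if_neg (by omega), if_neg (by omega)]
      · intro t i hi
        rw [hB t]
        rcases Nat.lt_or_ge t (n+1) with ht | ht
        · rw [if_pos (by omega)]; exact hbch.supp t i (by omega)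
        · rw [if_neg (by omega)]; exact reflect_supp n k lam rho (a n) i hi
    have hBtop : PHI (n+1) a m (n+1) = mu := by rw [hB (n+1), if_neg (by omega)]
    refine ⟨hBch, ?_, ?_, ?_⟩
    · rw [hBtop]; exact ⟨R1, R2, R5⟩
    · -- weight
      intro t
      have hbsupp : ∀ t, b' t n = 0 := fun t => hbch.supp t n le_rfl
      rcases Nat.lt_or_ge t n with ht | ht
      · rw [hB t, hB (t+1), if_pos (by omega), if_pos (by omega)]
        have e1 : ssum (n+1) (b' (t+1)) = ssum n (b' (t+1)) :=
          ssum_supp_ext (Nat.le_succ n) (fun i hi => hbch.supp (t+1) i hi)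
        have e2 : ssum (n+1) (b' t) = ssum n (b' t) :=
          ssum_supp_ext (Nat.le_succ n) (fun i hi => hbch.supp t i hi)
        have e3 : ssum (n+1) (a t) = ssum n (a t) :=
          ssum_supp_ext (Nat.le_succ n) (fun i hi => hch.diag t i (by omega))
        have e4 : ssum (n+1) (a (t+1)) = ssum n (a (t+1)) :=
          ssum_supp_ext (Nat.le_succ n) (fun i hi => hch.diag (t+1) i (by omega))
        have e5 := hbwt t
        have e6 : a' t = a t := by simp [ha', min_eq_left (by omega : t ≤ n)]
        have e7 : a' (t+1) = a (t+1) := by simp [ha', min_eq_left (by omega : t+1 ≤ n)]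
        rw [e6, e7] at e5
        have e8 : m' t = m t := if_pos ht
        omega
      · rcases Nat.eq_or_lt_of_le ht with heq | ht2
        · subst heq
          rw [hB n, hB (n+1), if_pos le_rfl, if_neg (by omega)]
          have e1 : ssum (n+1) mu = ssum (n+1) lam + k := R5
          have e2 : ssum (n+1) (a n) = ssum n (a n) :=
            ssum_supp_ext (Nat.le_succ n) (fun i hi => hch.diag n i hi)
          have e3 : ssum (n+1) (b' n) = ssum n rho :=
            ssum_supp_ext (Nat.le_succ n) (fun i hi => hbch.supp n i hi)
          have e4 : ssum n rho = ssum n (a n) + j := hbstrip.size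
          have e5 : ssum (n+1) (a (n+1)) = ssum (n+1) lam := by rw [ha]
          omega
        · rw [hB t, hB (t+1), if_neg (by omega), if_neg (by omega)]
          have e1 : a t = lam := by rw [hch.stab t (by omega), ha]
          have e2 : a (t+1) = lam := by rw [hch.stab (t+1) (by omega), ha]
          have e3 : m t = 0 := hm.supp t (by omega)
          rw [e1, e2, e3]
          omega
    · -- PSI round trip
      have hBn : PHI (n+1) a m n = rho := by rw [hB n, if_pos le_rfl]
      have hBB : (fun t' => PHI (n+1) a m (min t' n)) = b' := by
        funext t'
        rw [hB (min t' n), if_pos (min_le_right t' n)]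
        rcases Nat.lt_or_ge t' n with ht | ht
        · rw [min_eq_left (by omega)]
        · rw [min_eq_right (by omega)]
          exact (hbch.stab t' ht).symm
      show (fun t => if t ≤ n then
          (PSI n (invreflect n lam (PHI (n+1) a m n) (PHI (n+1) a m (n+1)))
            (fun t' => PHI (n+1) a m (min t' n))).1 t else lam,
        fun t => if t = n then PHI (n+1) a m (n+1) 0 - max (lam 0) (PHI (n+1) a m n 0)
          else (PSI n (invreflect n lam (PHI (n+1) a m n) (PHI (n+1) a m (n+1)))
            (fun t' => PHI (n+1) a m (min t' n))).2 t) = (a, m)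
      rw [hBn, hBtop, hBB, R6, hbpsi]
      refine Prod.ext (funext fun t => ?_) (funext fun t => ?_)
      · show (if t ≤ n then a' t else lam) = a t
        rcases Nat.lt_or_ge t (n+1) with ht | ht
        · rw [if_pos (by omega)]
          simp [ha', min_eq_left (by omega : t ≤ n)]
        · rw [if_neg (by omega), ← ha, hch.stab t ht]
      · show (if t = n then mu 0 - max (lam 0) (rho 0) else m' t) = m t
        rcases eq_or_ne t n with rfl | ht
        · rw [if_pos rfl, R7]; omega
        · rw [if_neg ht]
          show (if t < n then m t else 0) = m t
          rcases Nat.lt_or_ge t n with h2 | h2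
          · exact if_pos h2
          · rw [if_neg (by omega)]
            exact (hm.supp t (by omega)).symm

theorem MAIN2 : ∀ (n : ℕ) (lam : ℕ → ℕ) (k : ℕ) (b : ℕ → ℕ → ℕ),
    IsChain n b → IsStrip n lam (b n) k →
    (∀ i, lam (i+1) ≤ lam i) → (∀ i, n ≤ i → lam i = 0) →
    IsChain n (PSI n lam b).1 ∧ (PSI n lam b).1 n = lam ∧ IsMult n k (PSI n lam b).2 ∧
    PHI n (PSI n lam b).1 (PSI n lam b).2 = b := by
  intro n
  induction n with
  | zero =>
    intro lam k b hch hs _ _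
    have hlam0 : ∀ i, lam i = 0 := fun i =>
      Nat.le_zero.mp ((hs.le i).trans_eq (hch.zero i))
    have hk : k = 0 := by
      have := hs.size; simp [ssum] at this; omega
    refine ⟨hch, ?_, ?_, rfl⟩
    · show b 0 = lam
      funext i; rw [hch.zero i, hlam0 i]
    · exact ⟨fun t _ => rfl, by simp [ssum, hk]⟩
  | succ n IH =>
    intro lam k b hch hs hanti hsupp
    set mu : ℕ → ℕ := b (n+1) with hmu
    set rho : ℕ → ℕ := b n with hrho
    obtain ⟨I1, I2, I3, I4, I5, I5b, I6⟩ :=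
      invreflect_spec n k lam rho mu hanti (fun i hi => hsupp i hi)
        (fun i hi => hch.diag n i hi) (fun i hi => hch.supp (n+1) i hi)
        hs.le hs.bound (fun i => hch.mono n i) (fun i => hch.strip n i) hs.size
    set nu : ℕ → ℕ := invreflect n lam rho mu with hnu
    set mn : ℕ := mu 0 - max (lam 0) (rho 0) with hmn
    set j : ℕ := k - mn with hj
    have hsum_le : ssum n nu ≤ ssum n rho := Finset.sum_le_sum fun i _ => I3 i
    have hjmn : j + mn = k := by omega
    have hjr : ssum n rho = ssum n nu + j := by omega
    have hnu_supp : ∀ i, n ≤ i → nu i = 0 := fun i hi => by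
      simp only [hnu, invreflect, if_neg (by omega : ¬ i < n)]
    have hnu_anti : ∀ i, nu (i+1) ≤ nu i := fun i => (I1 (i+1)).trans (I2 i)
    set BB : ℕ → ℕ → ℕ := fun t => b (min t n) with hBB
    have hBBch : IsChain n BB := trunc_chain hch
    have hBBn : BB n = rho := by simp [hBB, hrho]
    have hBBstrip : IsStrip n nu (BB n) j := by
      rw [hBBn]; exact ⟨I3, I4, hjr⟩
    obtain ⟨hAch, hAtop, hMmult, hphi⟩ := IH nu j BB hBBch hBBstrip hnu_anti hnu_supp
    set A : ℕ → ℕ → ℕ := (PSI n nu BB).1 with hA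
    set M : ℕ → ℕ := (PSI n nu BB).2 with hM
    have hPSI1 : (PSI (n+1) lam b).1 = fun t => if t ≤ n then A t else lam := rfl
    have hPSI2 : (PSI (n+1) lam b).2 = fun t => if t = n then mn else M t := rfl
    rw [hPSI1, hPSI2]
    set As : ℕ → ℕ → ℕ := fun t => if t ≤ n then A t else lam with hAs
    set Ms : ℕ → ℕ := fun t => if t = n then mn else M t with hMs
    have hAs_app : ∀ t, As t = if t ≤ n then A t else lam := fun _ => rfl
    have hMs_app : ∀ t, Ms t = if t = n then mn else M t := fun _ => rfl
    have hMsum : ssum (n+1) Ms = k := by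
      have h1 : ssum (n+1) Ms = (∑ t ∈ Finset.range n, Ms t) + Ms n :=
        Finset.sum_range_succ _ n
      have h2 : (∑ t ∈ Finset.range n, Ms t) = ∑ t ∈ Finset.range n, M t := by
        refine Finset.sum_congr rfl fun t ht => ?_
        rw [hMs_app t, if_neg (by have := Finset.mem_range.mp ht; omega)]
      have h3 : Ms n = mn := by rw [hMs_app n, if_pos rfl]
      have h4 : ssum n M = j := hMmult.size
      have h5 : (∑ t ∈ Finset.range n, M t) = ssum n M := rfl
      omega
    refine ⟨?_, ?_, ?_, ?_⟩
    · constructor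
      · intro i; rw [hAs_app 0, if_pos (Nat.zero_le n)]; exact hAch.zero i
      · intro t i
        rw [hAs_app t, hAs_app (t+1)]
        rcases Nat.lt_or_ge t n with ht | ht
        · rw [if_pos (by omega), if_pos (by omega)]; exact hAch.mono t i
        · rcases Nat.eq_or_lt_of_le ht with heq | ht2
          · subst heq
            rw [if_pos le_rfl, if_neg (by omega), hAtop]; exact I1 i
          · rw [if_neg (by omega), if_neg (by omega)]
      · intro t i
        rw [hAs_app t, hAs_app (t+1)]
        rcases Nat.lt_or_ge t n with ht | ht
        · rw [if_pos (by omega), if_pos (by omega)]; exact hAch.strip t i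
        · rcases Nat.eq_or_lt_of_le ht with heq | ht2
          · subst heq
            rw [if_pos le_rfl, if_neg (by omega), hAtop]; exact I2 i
          · rw [if_neg (by omega), if_neg (by omega)]; exact hanti i
      · intro t ht
        funext i
        rw [hAs_app t, hAs_app (n+1), if_neg (by omega), if_neg (by omega)]
      · intro t i hi
        rw [hAs_app t]
        rcases Nat.lt_or_ge t (n+1) with ht | ht
        · rw [if_pos (by omega)]; exact hAch.supp t i (by omega)
        · rw [if_neg (by omega)]; exact hsupp i (by omega)
    · rw [hAs_app (n+1), if_neg (by omega)]
    · constructor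
      · intro t ht
        rw [hMs_app t, if_neg (by omega)]
        exact hMmult.supp t (by omega)
      · exact hMsum
    · -- PHI round trip
      have hA' : (fun t' => As (min t' n)) = A := by
        funext t'
        rw [hAs_app (min t' n), if_pos (min_le_right t' n)]
        rcases Nat.lt_or_ge t' n with ht | ht
        · rw [min_eq_left (by omega)]
        · rw [min_eq_right (by omega)]
          exact (hAch.stab t' ht).symm
      have hM' : (fun t' => if t' < n then Ms t' else 0) = M := by
        funext t'
        rcases Nat.lt_or_ge t' n with ht | ht
        · rw [if_pos ht, hMs_app t', if_neg (by omega)]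
        · rw [if_neg (by omega)]
          exact (hMmult.supp t' ht).symm
      funext t
      show (if t ≤ n then
          PHI n (fun t' => As (min t' n)) (fun t' => if t' < n then Ms t' else 0) t
        else reflect n (ssum (n+1) Ms) (As (n+1))
          (PHI n (fun t' => As (min t' n)) (fun t' => if t' < n then Ms t' else 0) n)
          (As n)) = b t
      rw [hA', hM', hphi, hMsum]
      rcases Nat.lt_or_ge t (n+1) with ht | ht
      · rw [if_pos (by omega)]
        show b (min t n) = b t
        rw [min_eq_left (by omega)]
      · rw [if_neg (by omega)]
        have h1 : As (n+1) = lam := by rw [hAs_app (n+1), if_neg (by omega)]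
        have h2 : As n = nu := by rw [hAs_app n, if_pos le_rfl, hAtop]
        rw [h1, h2, hBBn, I6]
        exact (hch.stab t ht).symm

/-! ### Boundary: tableaux ↔ chains -/

lemma lower_char {n : ℕ} {S : Finset ℕ} (hsub : S ⊆ Finset.range n)
    (hdc : ∀ x ∈ S, ∀ y, y ≤ x → y ∈ S) {s : ℕ} (hs : s < n) : s ∈ S ↔ s < S.card := by
  have hS : S = Finset.range S.card := by
    have h1 : S ⊆ Finset.range S.card := by
      intro x hx
      have h2 : Finset.range (x+1) ⊆ S := fun y hy =>
        hdc x hx y (Nat.lt_succ_iff.mp (Finset.mem_range.mp hy))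
      have h3 := Finset.card_le_card h2
      rw [Finset.card_range] at h3
      exact Finset.mem_range.mpr (by omega)
    exact Finset.eq_of_subset_of_card_le h1 (by simp)
  conv_lhs => rw [hS]
  rw [Finset.mem_range]

lemma card_fin_lt (m c : ℕ) (h : c ≤ m) :
    (Finset.univ.filter (fun j : Fin m => (j : ℕ) < c)).card = c := by
  rw [Finset.card_filter]
  induction m with
  | zero => simp; omega
  | succ m ih =>
    rw [Fin.sum_univ_castSucc]
    rcases Nat.eq_or_lt_of_le h with rfl | h2
    · have h3 : ∀ j : Fin m, ((Fin.castSucc j : Fin (m+1)) : ℕ) < m + 1 := fun j => by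
        simp [Fin.coe_castSucc]
      simp only [Fin.coe_castSucc, Fin.val_last]
      rw [if_pos (by omega)]
      have : (∑ j : Fin m, if (j : ℕ) < m + 1 then 1 else 0) = ∑ j : Fin m, 1 := by
        refine Finset.sum_congr rfl fun j _ => if_pos (by have := j.2; omega)
      rw [this]
      simp
    · have hc : c ≤ m := by omega
      simp only [Fin.coe_castSucc, Fin.val_last]
      rw [if_neg (by omega), ih hc, add_zero]

def vcard (n : ℕ) (b : ℕ → ℕ → ℕ) (i j : ℕ) : ℕ :=
  ((Finset.range n).filter (fun t => b (t+1) i ≤ j)).card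

lemma vcard_le (n b i j) : vcard n b i j ≤ n := by
  have := Finset.card_le_card (Finset.filter_subset (fun t => b (t+1) i ≤ j) (Finset.range n))
  simpa [vcard] using this

lemma vcard_lt_n {n : ℕ} (b : ℕ → ℕ → ℕ) {i j : ℕ} (hn : 0 < n) (hj : j < b n i) :
    vcard n b i j < n := by
  rcases Nat.lt_or_ge (vcard n b i j) n with h | h
  · exact h
  · exfalso
    have he : ((Finset.range n).filter (fun t => b (t+1) i ≤ j)) = Finset.range n := by
      refine Finset.eq_of_subset_of_card_le (Finset.filter_subset _ _) ?_
      rw [Finset.card_range]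
      exact le_trans h (le_of_eq rfl)
    have : n - 1 ∈ (Finset.range n).filter (fun t => b (t+1) i ≤ j) := by
      rw [he]; exact Finset.mem_range.mpr (by omega)
    rw [Finset.mem_filter] at this
    have h2 : n - 1 + 1 = n := by omega
    rw [h2] at this
    omega

lemma vcard_char {n : ℕ} {b : ℕ → ℕ → ℕ} (hch : IsChain n b) (i j : ℕ) {t : ℕ}
    (ht : t < n) : b (t+1) i ≤ j ↔ t < vcard n b i j := by
  show b (t+1) i ≤ j ↔ t < ((Finset.range n).filter (fun t => b (t+1) i ≤ j)).card
  have h := lower_char (S := (Finset.range n).filter (fun t => b (t+1) i ≤ j))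
    (Finset.filter_subset _ _) ?_ ht
  · rw [← h, Finset.mem_filter]
    constructor
    · intro hb; exact ⟨Finset.mem_range.mpr ht, hb⟩
    · intro hb; exact hb.2
  · intro x hx y hy
    rw [Finset.mem_filter] at hx ⊢
    refine ⟨Finset.mem_range.mpr (by have := Finset.mem_range.mp hx.1; omega), ?_⟩
    exact le_trans (hch.le_of_le (by omega : y + 1 ≤ x + 1) i) hx.2

lemma vcard_mono (n : ℕ) (b : ℕ → ℕ → ℕ) (i : ℕ) {j j' : ℕ} (h : j ≤ j') :
    vcard n b i j ≤ vcard n b i j' := by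
  refine Finset.card_le_card ?_
  intro t ht
  rw [Finset.mem_filter] at ht ⊢
  exact ⟨ht.1, le_trans ht.2 h⟩

/-- adjacent column strictness for decoded tableaux -/
lemma vcard_adj {n : ℕ} {b : ℕ → ℕ → ℕ} (hch : IsChain n b) {i j : ℕ}
    (hj : j < b n (i+1)) (hn : 0 < n) :
    vcard n b i j < vcard n b (i+1) j := by
  set v := vcard n b (i+1) j with hv
  have hvn : v < n := vcard_lt_n b hn hj
  have hnv : ¬ (b (v+1) (i+1) ≤ j) := by
    intro hcon
    have := (vcard_char hch (i+1) j hvn).mp hcon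
    omega
  have h1 : j < b (v+1) (i+1) := by omega
  have h2 : b (v+1) (i+1) ≤ b v i := hch.strip v i
  have hvpos : 0 < v := by
    by_contra h0
    have hv0 : v = 0 := by omega
    have h5 : b v i = 0 := by rw [hv0]; exact hch.zero i
    omega
  have h3 : ¬ (b (v-1+1) i ≤ j) := by
    have hveq : v - 1 + 1 = v := by omega
    rw [hveq]; omega
  have h4 : ¬ (v - 1 < vcard n b i j) := by
    intro hcon
    exact h3 ((vcard_char hch i j (by omega)).mpr hcon)
  omega

/-- general column strictness -/
lemma vcard_strict {n : ℕ} {b : ℕ → ℕ → ℕ} (hch : IsChain n b) (hn : 0 < n) :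
    ∀ (d i j : ℕ), j < b n (i + d + 1) → vcard n b i j < vcard n b (i + d + 1) j := by
  intro d
  induction d with
  | zero => intro i j hj; exact vcard_adj hch hj hn
  | succ d ih =>
    intro i j hj
    have hj' : j < b n (i + d + 1) := lt_of_lt_of_le hj (hch.anti n (i + d + 1))
    have h1 := ih i j hj'
    have h2 : vcard n b (i + d + 1) j < vcard n b (i + d + 1 + 1) j :=
      vcard_adj hch hj hn
    have he : i + (d + 1) + 1 = i + d + 1 + 1 := by omega
    rw [he]
    omega

def Tdec (n : ℕ) (b : ℕ → ℕ → ℕ) (sh : Fin n → ℕ) (c : (i : Fin n) × Fin (sh i)) :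
    Fin n :=
  if h : (c.2 : ℕ) < b n (c.1 : ℕ) then ⟨vcard n b c.1 c.2, vcard_lt_n b c.1.pos h⟩
  else ⟨0, c.1.pos⟩

lemma Tdec_val {n : ℕ} (b : ℕ → ℕ → ℕ) (sh : Fin n → ℕ) (c : (i : Fin n) × Fin (sh i))
    (h : (c.2 : ℕ) < b n (c.1 : ℕ)) :
    (Tdec n b sh c : ℕ) = vcard n b c.1 c.2 := by
  rw [Tdec, dif_pos h]

lemma Tdec_ssyt {n : ℕ} {b : ℕ → ℕ → ℕ} (hch : IsChain n b) (sh : Fin n → ℕ)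
    (hsh : ∀ i : Fin n, sh i = b n (i : ℕ)) :
    (∀ c c' : (i : Fin n) × Fin (sh i),
        c.1 = c'.1 → (c.2 : ℕ) ≤ (c'.2 : ℕ) → Tdec n b sh c ≤ Tdec n b sh c') ∧
    (∀ c c' : (i : Fin n) × Fin (sh i),
        c.1 < c'.1 → (c.2 : ℕ) = (c'.2 : ℕ) → Tdec n b sh c < Tdec n b sh c') := by
  have hbnd : ∀ c : (i : Fin n) × Fin (sh i), (c.2 : ℕ) < b n (c.1 : ℕ) := by
    intro c
    exact lt_of_lt_of_le c.2.2 (le_of_eq (hsh c.1))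
  constructor
  · rintro ⟨i, j⟩ ⟨i', j'⟩ h1 h2
    dsimp only at h1
    subst h1
    rw [Fin.le_def, Tdec_val b sh ⟨i, j⟩ (hbnd _), Tdec_val b sh ⟨i, j'⟩ (hbnd _)]
    exact vcard_mono n b i h2
  · rintro ⟨i, j⟩ ⟨i', j'⟩ h1 h2
    dsimp only at h1 h2
    rw [Fin.lt_def, Tdec_val b sh ⟨i, j⟩ (hbnd _), Tdec_val b sh ⟨i', j'⟩ (hbnd _)]
    dsimp only
    have hii' : (i : ℕ) < (i' : ℕ) := h1
    obtain ⟨d, hd⟩ : ∃ d, (i' : ℕ) = (i : ℕ) + d + 1 := ⟨(i' : ℕ) - (i : ℕ) - 1, by omega⟩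
    have hb : (j' : ℕ) < b n (i' : ℕ) := hbnd ⟨i', j'⟩
    rw [h2, hd]
    exact vcard_strict hch i.pos d (i : ℕ) (j' : ℕ) (by rw [← hd]; exact hb)

def chainOf (n : ℕ) (sh : Fin n → ℕ) (T : ((i : Fin n) × Fin (sh i)) → Fin n) :
    ℕ → ℕ → ℕ := fun t i =>
  if h : i < n then
    (Finset.univ.filter (fun j : Fin (sh ⟨i, h⟩) => ((T ⟨⟨i, h⟩, j⟩ : Fin n) : ℕ) < t)).card
  else 0

lemma chainOf_pos {n : ℕ} (sh : Fin n → ℕ) (T : ((i : Fin n) × Fin (sh i)) → Fin n)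
    (t : ℕ) (i : Fin n) :
    chainOf n sh T t (i : ℕ)
      = (Finset.univ.filter (fun j : Fin (sh i) => ((T ⟨i, j⟩ : Fin n) : ℕ) < t)).card := by
  rw [chainOf, dif_pos i.2]

lemma range_filter_lt {m n : ℕ} (h : m ≤ n) :
    (Finset.range n).filter (fun t => t < m) = Finset.range m := by
  ext t
  simp only [Finset.mem_filter, Finset.mem_range]
  omega

section Encode

variable {n : ℕ} {sh : Fin n → ℕ} {T : ((i : Fin n) × Fin (sh i)) → Fin n}

lemma chainOf_char
    (hrow : ∀ c c' : (i : Fin n) × Fin (sh i),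
      c.1 = c'.1 → (c.2 : ℕ) ≤ (c'.2 : ℕ) → T c ≤ T c')
    (i : Fin n) (t : ℕ) (j : Fin (sh i)) :
    ((T ⟨i, j⟩ : Fin n) : ℕ) < t ↔ (j : ℕ) < chainOf n sh T t (i : ℕ) := by
  rw [chainOf_pos]
  constructor
  · intro hT
    have hsub : Finset.univ.filter (fun j' : Fin (sh i) => (j' : ℕ) < (j : ℕ) + 1)
        ⊆ Finset.univ.filter (fun j' : Fin (sh i) => ((T ⟨i, j'⟩ : Fin n) : ℕ) < t) := by
      intro j' hj'
      rw [Finset.mem_filter] at hj' ⊢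
      refine ⟨Finset.mem_univ _, ?_⟩
      have hle : T ⟨i, j'⟩ ≤ T ⟨i, j⟩ :=
        hrow ⟨i, j'⟩ ⟨i, j⟩ rfl (show (j' : ℕ) ≤ (j : ℕ) by omega)
      rw [Fin.le_def] at hle
      omega
    have hcard := Finset.card_le_card hsub
    rw [card_fin_lt (sh i) ((j : ℕ) + 1) j.2] at hcard
    omega
  · intro hcard
    by_contra hT
    push_neg at hT
    have hsub : Finset.univ.filter (fun j' : Fin (sh i) => ((T ⟨i, j'⟩ : Fin n) : ℕ) < t)
        ⊆ Finset.univ.filter (fun j' : Fin (sh i) => (j' : ℕ) < (j : ℕ)) := by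
      intro j' hj'
      rw [Finset.mem_filter] at hj' ⊢
      refine ⟨Finset.mem_univ _, ?_⟩
      by_contra hjj
      push_neg at hjj
      have hle : T ⟨i, j⟩ ≤ T ⟨i, j'⟩ :=
        hrow ⟨i, j⟩ ⟨i, j'⟩ rfl (show (j : ℕ) ≤ (j' : ℕ) from hjj)
      rw [Fin.le_def] at hle
      omega
    have hc2 := Finset.card_le_card hsub
    rw [card_fin_lt (sh i) (j : ℕ) (le_of_lt j.2)] at hc2
    omega

lemma chainOf_isChain
    (hrow : ∀ c c' : (i : Fin n) × Fin (sh i),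
      c.1 = c'.1 → (c.2 : ℕ) ≤ (c'.2 : ℕ) → T c ≤ T c')
    (hcol : ∀ c c' : (i : Fin n) × Fin (sh i),
      c.1 < c'.1 → (c.2 : ℕ) = (c'.2 : ℕ) → T c < T c')
    (hanti : ∀ i i' : Fin n, i ≤ i' → sh i' ≤ sh i) :
    IsChain n (chainOf n sh T) := by
  constructor
  · intro i
    by_cases h : i < n
    · rw [chainOf, dif_pos h]
      simp
    · rw [chainOf, dif_neg h]
  · intro t i
    by_cases h : i < n
    · rw [chainOf, dif_pos h, chainOf, dif_pos h]
      refine Finset.card_le_card ?_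
      intro j hj
      rw [Finset.mem_filter] at hj ⊢
      exact ⟨Finset.mem_univ _, by omega⟩
    · rw [chainOf, dif_neg h, chainOf, dif_neg h]
  · intro t i
    by_cases h : i + 1 < n
    · have hi : i < n := by omega
      rw [chainOf, dif_pos h, chainOf, dif_pos hi]
      have hle : sh ⟨i+1, h⟩ ≤ sh ⟨i, hi⟩ :=
        hanti ⟨i, hi⟩ ⟨i+1, h⟩ (by rw [Fin.mk_le_mk]; omega)
      refine Finset.card_le_card_of_injOn
        (fun j => (⟨(j : ℕ), lt_of_lt_of_le j.2 hle⟩ : Fin (sh ⟨i, hi⟩))) ?_ ?_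
      · intro j hj
        rw [Finset.mem_coe, Finset.mem_filter] at hj ⊢
        refine ⟨Finset.mem_univ _, ?_⟩
        show ((T ⟨⟨i, hi⟩, ⟨(j : ℕ), lt_of_lt_of_le j.2 hle⟩⟩ : Fin n) : ℕ) < t
        have hlt : T ⟨⟨i, hi⟩, ⟨(j : ℕ), lt_of_lt_of_le j.2 hle⟩⟩ < T ⟨⟨i+1, h⟩, j⟩ :=
          hcol _ _ (by rw [Fin.mk_lt_mk]; omega) rfl
        rw [Fin.lt_def] at hlt
        omega
      · intro x _ y _ hxy
        simp only [Fin.mk.injEq] at hxy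
        exact Fin.ext hxy
    · rw [chainOf, dif_neg h]
      exact Nat.zero_le _
  · intro t ht
    funext i
    by_cases h : i < n
    · rw [chainOf, dif_pos h, chainOf, dif_pos h]
      congr 1
      refine Finset.filter_congr fun j _ => ?_
      have h1 : ((T ⟨⟨i, h⟩, j⟩ : Fin n) : ℕ) < n := (T _).2
      constructor <;> intro <;> omega
    · rw [chainOf, dif_neg h, chainOf, dif_neg h]
  · intro t i hi
    rw [chainOf, dif_neg (by omega)]

lemma chainOf_top (i : Fin n) : chainOf n sh T n (i : ℕ) = sh i := by
  rw [chainOf_pos]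
  rw [Finset.filter_true_of_mem (fun j _ => (T ⟨i, j⟩).2)]
  simp

lemma roundtrip1
    (hrow : ∀ c c' : (i : Fin n) × Fin (sh i),
      c.1 = c'.1 → (c.2 : ℕ) ≤ (c'.2 : ℕ) → T c ≤ T c') :
    Tdec n (chainOf n sh T) sh = T := by
  funext c
  obtain ⟨i, j⟩ := c
  have hbnd : (j : ℕ) < chainOf n sh T n (i : ℕ) := by
    rw [chainOf_top]; exact j.2
  refine Fin.ext ?_
  rw [Tdec_val _ _ _ hbnd]
  show vcard n (chainOf n sh T) (i : ℕ) (j : ℕ) = _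
  rw [vcard]
  have hfe : (Finset.range n).filter (fun t => chainOf n sh T (t+1) (i : ℕ) ≤ (j : ℕ))
      = (Finset.range n).filter (fun t => t < ((T ⟨i, j⟩ : Fin n) : ℕ)) := by
    refine Finset.filter_congr fun t _ => ?_
    have hc := chainOf_char hrow i (t+1) j
    constructor
    · intro hle
      have : ¬ ((T ⟨i, j⟩ : Fin n) : ℕ) < t + 1 := fun hcon => by
        have := hc.mp hcon; omega
      omega
    · intro hlt
      by_contra hcon
      push_neg at hcon
      have := hc.mpr (by omega)
      omega
  rw [hfe, range_filter_lt (le_of_lt (T ⟨i, j⟩).2), Finset.card_range]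

end Encode

lemma roundtrip2 {n : ℕ} {b : ℕ → ℕ → ℕ} (hch : IsChain n b) (sh : Fin n → ℕ)
    (hsh : ∀ i : Fin n, sh i = b n (i : ℕ)) :
    chainOf n sh (Tdec n b sh) = b := by
  funext t i
  by_cases h : i < n
  · set iF : Fin n := ⟨i, h⟩ with hiF
    have hsh' : sh iF = b n i := hsh iF
    have hval : ∀ j : Fin (sh iF), ((Tdec n b sh ⟨iF, j⟩ : Fin n) : ℕ) = vcard n b i (j : ℕ) := by
      intro j
      exact Tdec_val b sh ⟨iF, j⟩ (by rw [← hsh']; exact j.2)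
    have hpos : chainOf n sh (Tdec n b sh) t i
        = (Finset.univ.filter
            (fun j : Fin (sh iF) => ((Tdec n b sh ⟨iF, j⟩ : Fin n) : ℕ) < t)).card := by
      rw [show (i : ℕ) = ((iF : Fin n) : ℕ) from rfl, chainOf_pos]
    rw [hpos]
    rcases Nat.eq_zero_or_pos t with rfl | htpos
    · rw [hch.zero i]
      convert Finset.card_empty
      rw [Finset.filter_eq_empty_iff]
      intro j _
      omega
    · rcases Nat.lt_or_ge t (n+1) with htn | htn
      · obtain ⟨t', rfl⟩ : ∃ t', t = t' + 1 := ⟨t - 1, by omega⟩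
        have ht'n : t' < n := by omega
        have hfe : (Finset.univ.filter
              (fun j : Fin (sh iF) => ((Tdec n b sh ⟨iF, j⟩ : Fin n) : ℕ) < t' + 1))
            = Finset.univ.filter (fun j : Fin (sh iF) => (j : ℕ) < b (t'+1) i) := by
          refine Finset.filter_congr fun j _ => ?_
          rw [hval j]
          have hc := vcard_char hch i (j : ℕ) ht'n
          constructor
          · intro hlt
            by_contra hcon
            push_neg at hcon
            have := hc.mp hcon
            omega
          · intro hlt
            have : ¬ (t' < vcard n b i (j : ℕ)) := fun hcon => by
              have := hc.mpr hcon; omega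
            omega
        rw [hfe, card_fin_lt]
        rw [hsh']
        exact hch.le_of_le (by omega) i
      · -- t ≥ n+1 : everything counted
        have hstab : b t i = b n i := by rw [hch.stab t (by omega)]
        have hfe : (Finset.univ.filter
              (fun j : Fin (sh iF) => ((Tdec n b sh ⟨iF, j⟩ : Fin n) : ℕ) < t))
            = Finset.univ := by
          rw [Finset.filter_true_of_mem]
          intro j _
          rw [hval j]
          have := vcard_le n b i (j : ℕ)
          omega
        rw [hfe, hstab, ← hsh']
        simp
  · rw [chainOf, dif_neg h, hch.supp t i (by omega)]

/-! ### entries, Sym encodings, helpers -/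

open MvPolynomial in
lemma multiset_map_sum_prod {ι σ : Type*} (s : Finset ι) (f : ι → Multiset σ)
    (g : σ → MvPolynomial σ ℤ) :
    ((∑ i ∈ s, f i).map g).prod = ∏ i ∈ s, ((f i).map g).prod := by
  induction s using Finset.cons_induction with
  | empty => simp
  | cons a s ha ih =>
    rw [Finset.sum_cons, Finset.prod_cons, Multiset.map_add, Multiset.prod_add, ih]

def entries (n : ℕ) (sh : Fin n → ℕ) (T : ((i : Fin n) × Fin (sh i)) → Fin n) :
    Multiset (Fin n) :=
  ∑ i : Fin n, (Finset.univ.val.map (fun j : Fin (sh i) => T ⟨i, j⟩))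

open MvPolynomial in
lemma prod_X_entries {n : ℕ} (sh : Fin n → ℕ) (T : ((i : Fin n) × Fin (sh i)) → Fin n) :
    (∏ c : (i : Fin n) × Fin (sh i), (MvPolynomial.X (T c) : MvPolynomial (Fin n) ℤ))
      = ((entries n sh T).map MvPolynomial.X).prod := by
  rw [entries, multiset_map_sum_prod]
  rw [← Finset.univ_sigma_univ, Finset.prod_sigma]
  refine Finset.prod_congr rfl fun i _ => ?_
  rw [Multiset.map_map, Finset.prod_eq_multiset_prod]
  rfl

lemma count_filter_card {n : ℕ} {α : Type*} [DecidableEq α] (M : Multiset α) :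
    True := trivial

lemma sum_count_card {n : ℕ} (M : Multiset (Fin n)) :
    ∑ v : Fin n, M.count v = Multiset.card M := by
  induction M using Multiset.induction with
  | empty => simp
  | cons a M ih =>
    simp only [Multiset.count_cons, Multiset.card_cons, Finset.sum_add_distrib, ih]
    rw [Finset.sum_ite_eq' Finset.univ a (fun _ => 1)]
    simp

lemma ssum_eq_fin {n : ℕ} (f : ℕ → ℕ) : ssum n f = ∑ i : Fin n, f (i : ℕ) :=
  (Fin.sum_univ_eq_sum_range f n).symm

lemma count_entries {n : ℕ} {sh : Fin n → ℕ} {T : ((i : Fin n) × Fin (sh i)) → Fin n}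
    (hrow : ∀ c c' : (i : Fin n) × Fin (sh i),
      c.1 = c'.1 → (c.2 : ℕ) ≤ (c'.2 : ℕ) → T c ≤ T c')
    (v : Fin n) :
    Multiset.count v (entries n sh T) + ssum n (chainOf n sh T (v : ℕ))
      = ssum n (chainOf n sh T ((v : ℕ) + 1)) := by
  have hcnt : ∀ i : Fin n,
      Multiset.count v (Finset.univ.val.map (fun j : Fin (sh i) => T ⟨i, j⟩))
        = (Finset.univ.filter (fun j : Fin (sh i) => v = T ⟨i, j⟩)).card := by
    intro i
    rw [Multiset.count_map]
    rfl
  have hrowlem : ∀ i : Fin n,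
      (Finset.univ.filter (fun j : Fin (sh i) => v = T ⟨i, j⟩)).card
        + chainOf n sh T (v : ℕ) (i : ℕ) = chainOf n sh T ((v : ℕ) + 1) (i : ℕ) := by
    intro i
    rw [chainOf_pos, chainOf_pos]
    have hsplit : Finset.univ.filter
          (fun j : Fin (sh i) => ((T ⟨i, j⟩ : Fin n) : ℕ) < (v : ℕ) + 1)
        = (Finset.univ.filter (fun j : Fin (sh i) => v = T ⟨i, j⟩))
          ∪ (Finset.univ.filter (fun j : Fin (sh i) => ((T ⟨i, j⟩ : Fin n) : ℕ) < (v : ℕ))) := by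
      rw [← Finset.filter_or]
      refine Finset.filter_congr fun j _ => ?_
      rw [Fin.ext_iff]
      constructor
      · intro h; omega
      · intro h; rcases h with h | h <;> omega
    have hdisj : Disjoint
        (Finset.univ.filter (fun j : Fin (sh i) => v = T ⟨i, j⟩))
        (Finset.univ.filter (fun j : Fin (sh i) => ((T ⟨i, j⟩ : Fin n) : ℕ) < (v : ℕ))) := by
      rw [Finset.disjoint_left]
      intro j hj1 hj2
      rw [Finset.mem_filter] at hj1 hj2
      have h1 : (v : ℕ) = ((T ⟨i, j⟩ : Fin n) : ℕ) := congrArg Fin.val hj1.2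
      omega
    rw [hsplit, Finset.card_union_of_disjoint hdisj]
  rw [entries, Multiset.count_sum', ssum_eq_fin, ssum_eq_fin, ← Finset.sum_add_distrib]
  refine Finset.sum_congr rfl fun i _ => ?_
  rw [hcnt i, hrowlem i]

def mOf (n : ℕ) {α : Type*} (M : Multiset (Fin n)) : ℕ → ℕ :=
  fun t => if h : t < n then M.count ⟨t, h⟩ else 0

def msetOf (n : ℕ) (m : ℕ → ℕ) : Multiset (Fin n) :=
  ∑ v : Fin n, Multiset.replicate (m (v : ℕ)) v

lemma mOf_isMult {n : ℕ} (M : Multiset (Fin n)) :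
    IsMult n (Multiset.card M) (mOf n (α := ℕ) M) := by
  constructor
  · intro t ht; rw [mOf, dif_neg (by omega)]
  · rw [ssum_eq_fin, ← sum_count_card M]
    refine Finset.sum_congr rfl fun v _ => ?_
    rw [mOf, dif_pos v.2, Fin.eta]

lemma count_msetOf {n : ℕ} (m : ℕ → ℕ) (v : Fin n) :
    (msetOf n m).count v = m (v : ℕ) := by
  rw [msetOf, Multiset.count_sum']
  rw [Finset.sum_congr rfl (fun w _ => Multiset.count_replicate v w (m (w : ℕ)))]
  rw [Finset.sum_ite_eq' Finset.univ v (fun w => m (w : ℕ))]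
  simp

lemma card_msetOf {n : ℕ} (m : ℕ → ℕ) :
    Multiset.card (msetOf n m) = ssum n m := by
  rw [ssum_eq_fin, msetOf]
  induction (Finset.univ : Finset (Fin n)) using Finset.cons_induction with
  | empty => simp
  | cons a s ha ih =>
    rw [Finset.sum_cons, Finset.sum_cons, Multiset.card_add, Multiset.card_replicate, ih]

lemma msetOf_mOf {n : ℕ} (M : Multiset (Fin n)) : msetOf n (mOf n (α := ℕ) M) = M := by
  refine Multiset.ext.mpr fun v => ?_
  rw [count_msetOf, mOf, dif_pos v.2, Fin.eta]

lemma mOf_msetOf {n : ℕ} (m : ℕ → ℕ) (hsupp : ∀ t, n ≤ t → m t = 0) :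
    mOf n (α := ℕ) (msetOf n m) = m := by
  funext t
  by_cases h : t < n
  · rw [mOf, dif_pos h, count_msetOf]
  · rw [mOf, dif_neg h, hsupp t (by omega)]

lemma strip_bound {n : ℕ} {lam mu : ℕ → ℕ} {k : ℕ} (hst : IsStrip n lam mu k)
    {i : ℕ} (hi : i < n) : mu i ≤ lam i + k := by
  have h1 := hst.size
  have hmem : i ∈ Finset.range n := Finset.mem_range.mpr hi
  have h2 : mu i + ∑ x ∈ (Finset.range n).erase i, mu x = ssum n mu :=
    Finset.add_sum_erase _ mu hmem
  have h3 : lam i + ∑ x ∈ (Finset.range n).erase i, lam x = ssum n lam :=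
    Finset.add_sum_erase _ lam hmem
  have h4 : ∑ x ∈ (Finset.range n).erase i, lam x ≤ ∑ x ∈ (Finset.range n).erase i, mu x :=
    Finset.sum_le_sum fun x _ => hst.le x
  omega

lemma g_antitone {n : ℕ} {lam g : Fin n → ℕ}
    (h1 : ∀ i, lam i ≤ g i)
    (h2 : ∀ i j : Fin n, (i : ℕ) + 1 = (j : ℕ) → g j ≤ lam i) :
    ∀ i j : Fin n, i ≤ j → g j ≤ g i := by
  have key : ∀ (d : ℕ) (i j : Fin n), (j : ℕ) = (i : ℕ) + d → g j ≤ g i := by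
    intro d
    induction d with
    | zero =>
      intro i j hij
      have : j = i := Fin.ext (by omega)
      rw [this]
    | succ d ih =>
      intro i j hij
      have hmid : (i : ℕ) + d < n := by have := j.2; omega
      set mid : Fin n := ⟨(i : ℕ) + d, hmid⟩ with hm
      have hstep : g j ≤ lam mid := h2 mid j (by simp [hm]; omega)
      exact le_trans (le_trans hstep (h1 mid)) (ih i mid (by simp [hm]))
  intro i j hij
  exact key ((j : ℕ) - (i : ℕ)) i j (by have : (i:ℕ) ≤ (j:ℕ) := hij; omega)

def lamN {n : ℕ} (lam : Fin n → ℕ) : ℕ → ℕ :=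
  fun i => if h : i < n then lam ⟨i, h⟩ else 0

lemma lamN_pos {n : ℕ} (lam : Fin n → ℕ) (i : Fin n) : lamN lam (i : ℕ) = lam i := by
  rw [lamN, dif_pos i.2, Fin.eta]

lemma lamN_supp {n : ℕ} (lam : Fin n → ℕ) : ∀ i, n ≤ i → lamN lam i = 0 :=
  fun i hi => dif_neg (by omega)

lemma lamN_anti {n : ℕ} {lam : Fin n → ℕ} (hlam : Antitone lam) :
    ∀ i, lamN lam (i + 1) ≤ lamN lam i := by
  intro i
  by_cases h : i + 1 < n
  · rw [lamN, dif_pos h, lamN, dif_pos (by omega : i < n)]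
    exact hlam (by rw [Fin.mk_le_mk]; omega)
  · rw [lamN, dif_neg h]
    exact Nat.zero_le _

lemma fin_sub_sum {n : ℕ} {lam g : Fin n → ℕ} (h1 : ∀ i, lam i ≤ g i) :
    (∑ i, (g i - lam i)) + ∑ i, lam i = ∑ i, g i := by
  rw [← Finset.sum_add_distrib]
  exact Finset.sum_congr rfl fun i _ => by have := h1 i; omega

lemma cod_pack {n k : ℕ} (lam : Fin n → ℕ) (hlam : Antitone lam)
    (μ : (i : Fin n) → Fin (lam i + k + 1))
    (S : ((i : Fin n) × Fin ((μ i : ℕ))) → Fin n)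
    (h1 : ∀ i, lam i ≤ (μ i : ℕ))
    (h2 : ∀ i j : Fin n, (i : ℕ) + 1 = (j : ℕ) → (μ j : ℕ) ≤ lam i)
    (h3 : (∑ i, ((μ i : ℕ) - lam i)) = k)
    (hrow : ∀ c c' : (i : Fin n) × Fin ((μ i : ℕ)),
      c.1 = c'.1 → (c.2 : ℕ) ≤ (c'.2 : ℕ) → S c ≤ S c')
    (hcol : ∀ c c' : (i : Fin n) × Fin ((μ i : ℕ)),
      c.1 < c'.1 → (c.2 : ℕ) = (c'.2 : ℕ) → S c < S c') :
    IsChain n (chainOf n (fun i => (μ i : ℕ)) S) ∧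
    IsStrip n (lamN lam) (chainOf n (fun i => (μ i : ℕ)) S n) k := by
  set sh : Fin n → ℕ := fun i => (μ i : ℕ) with hshdef
  have hanti : ∀ i i' : Fin n, i ≤ i' → sh i' ≤ sh i := g_antitone h1 h2
  have hbch : IsChain n (chainOf n sh S) := chainOf_isChain hrow hcol hanti
  refine ⟨hbch, ?_, ?_, ?_⟩
  · intro i
    by_cases h : i < n
    · rw [lamN, dif_pos h]
      have e : chainOf n sh S n i = sh ⟨i, h⟩ := chainOf_top (⟨i, h⟩ : Fin n)
      rw [e]
      exact h1 ⟨i, h⟩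
    · rw [lamN, dif_neg h]
      exact Nat.zero_le _
  · intro i
    by_cases h : i + 1 < n
    · have hi : i < n := by omega
      rw [lamN, dif_pos hi]
      have e : chainOf n sh S n (i+1) = sh ⟨i+1, h⟩ := chainOf_top (⟨i+1, h⟩ : Fin n)
      rw [e]
      exact h2 ⟨i, hi⟩ ⟨i+1, h⟩ rfl
    · rw [hbch.supp n (i+1) (by omega)]
      exact Nat.zero_le _
  · have e1 : ssum n (chainOf n sh S n) = ∑ i : Fin n, sh i := by
      rw [ssum_eq_fin]
      exact Finset.sum_congr rfl fun i _ => chainOf_top i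
    have e2 : ssum n (lamN lam) = ∑ i : Fin n, lam i := by
      rw [ssum_eq_fin]
      exact Finset.sum_congr rfl fun i _ => lamN_pos lam i
    have e3 := fin_sub_sum h1 (g := sh)
    have h3' : (∑ i, (sh i - lam i)) = k := h3
    rw [e1, e2]
    omega

end PieriAux

open scoped Classical
open MvPolynomial

/-- The complete homogeneous symmetric polynomial `h_k` in variables indexed by
a finite type `σ`. -/
noncomputable def completeHomog (σ : Type*) [Fintype σ] (k : ℕ) : MvPolynomial σ ℤ :=
  ∑ s ∈ Finset.univ.sym k, ((Sym.toMultiset s).map MvPolynomial.X).prod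

/-- **Pieri rule**: `s_λ · h_k = Σ_μ s_μ` where `μ` runs over all weakly
decreasing tuples with `μ_1 ≥ λ_1 ≥ μ_2 ≥ λ_2 ≥ ⋯ ≥ μ_n ≥ λ_n` and
`Σ_i (μ_i − λ_i) = k` (i.e. `μ/λ` is a horizontal strip of size `k`).
Any such `μ` satisfies `μ_i ≤ λ_i + k`, which is enforced by the codomain
`Fin (λ_i + k + 1)`; the interleaving conditions are `λ_i ≤ μ_i` and
`μ_{i+1} ≤ λ_i`. -/
theorem pieri_rule (n k : ℕ) (lam : Fin n → ℕ) (hlam : Antitone lam) :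
    schurPoly n lam * completeHomog (Fin n) k =
      ∑ μ ∈ Finset.univ.filter
          (fun μ : (i : Fin n) → Fin (lam i + k + 1) =>
            (∀ i, lam i ≤ (μ i : ℕ)) ∧
            (∀ i j : Fin n, (i : ℕ) + 1 = (j : ℕ) → (μ j : ℕ) ≤ lam i) ∧
            (∑ i, ((μ i : ℕ) - lam i)) = k),
        schurPoly n fun i => (μ i : ℕ) := by
  simp only [schurPoly, completeHomog]
  rw [Finset.sum_mul_sum, ← Finset.sum_product', Finset.sum_sigma']
  refine (Finset.sum_bij (fun y hy =>
    ((PieriAux.Tdec n (PieriAux.PSI n (PieriAux.lamN lam)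
        (PieriAux.chainOf n (fun i => ((y.1 i : ℕ))) y.2)).1 lam),
     (⟨PieriAux.msetOf n (PieriAux.PSI n (PieriAux.lamN lam)
        (PieriAux.chainOf n (fun i => ((y.1 i : ℕ))) y.2)).2, by
        have hy' := Finset.mem_sigma.mp hy
        have h123 := (Finset.mem_filter.mp hy'.1).2
        have hQ := (Finset.mem_filter.mp hy'.2).2
        obtain ⟨hb, hstrip⟩ := PieriAux.cod_pack lam hlam y.1 y.2
          h123.1 h123.2.1 h123.2.2 hQ.1 hQ.2
        obtain ⟨_, _, hM, _⟩ := PieriAux.MAIN2 n (PieriAux.lamN lam) k _ hb hstrip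
          (PieriAux.lamN_anti hlam) (PieriAux.lamN_supp lam)
        rw [PieriAux.card_msetOf]
        exact hM.size⟩ : Sym (Fin n) k)))
    ?_ ?_ ?_ ?_).symm
  · -- maps into the product set
    intro y hy
    have hy' := Finset.mem_sigma.mp hy
    have h123 := (Finset.mem_filter.mp hy'.1).2
    have hQ := (Finset.mem_filter.mp hy'.2).2
    obtain ⟨hb, hstrip⟩ := PieriAux.cod_pack lam hlam y.1 y.2
      h123.1 h123.2.1 h123.2.2 hQ.1 hQ.2
    obtain ⟨hach, hatop, hM, hphi⟩ := PieriAux.MAIN2 n (PieriAux.lamN lam) k _ hb hstrip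
      (PieriAux.lamN_anti hlam) (PieriAux.lamN_supp lam)
    refine Finset.mem_product.mpr ?_
    constructor
    · rw [Finset.mem_filter]
      refine ⟨Finset.mem_univ _, ?_⟩
      exact PieriAux.Tdec_ssyt hach lam
        (fun i => by rw [hatop, PieriAux.lamN_pos])
    · have hinst : (fun (a b : Fin n) => Classical.propDecidable (a = b)) = instDecidableEqFin n := by
        funext a b
        exact Subsingleton.elim _ _
      rw [hinst, Finset.sym_univ]
      exact Finset.mem_univ _
  · -- injectivity
    intro y₁ hy₁ y₂ hy₂ heq
    obtain ⟨μ₁, S₁⟩ := y₁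
    obtain ⟨μ₂, S₂⟩ := y₂
    have hy₁' := Finset.mem_sigma.mp hy₁
    have h123₁ := (Finset.mem_filter.mp hy₁'.1).2
    have hQ₁ := (Finset.mem_filter.mp hy₁'.2).2
    obtain ⟨hb₁, hstrip₁⟩ := PieriAux.cod_pack lam hlam μ₁ S₁
      h123₁.1 h123₁.2.1 h123₁.2.2 hQ₁.1 hQ₁.2
    obtain ⟨hach₁, hatop₁, hM₁, hphi₁⟩ := PieriAux.MAIN2 n (PieriAux.lamN lam) k _ hb₁ hstrip₁
      (PieriAux.lamN_anti hlam) (PieriAux.lamN_supp lam)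
    have hy₂' := Finset.mem_sigma.mp hy₂
    have h123₂ := (Finset.mem_filter.mp hy₂'.1).2
    have hQ₂ := (Finset.mem_filter.mp hy₂'.2).2
    obtain ⟨hb₂, hstrip₂⟩ := PieriAux.cod_pack lam hlam μ₂ S₂
      h123₂.1 h123₂.2.1 h123₂.2.2 hQ₂.1 hQ₂.2
    obtain ⟨hach₂, hatop₂, hM₂, hphi₂⟩ := PieriAux.MAIN2 n (PieriAux.lamN lam) k _ hb₂ hstrip₂
      (PieriAux.lamN_anti hlam) (PieriAux.lamN_supp lam)
    set A₁ := (PieriAux.PSI n (PieriAux.lamN lam)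
      (PieriAux.chainOf n (fun i => ((μ₁ i : ℕ))) S₁)).1 with hA₁
    set M₁ := (PieriAux.PSI n (PieriAux.lamN lam)
      (PieriAux.chainOf n (fun i => ((μ₁ i : ℕ))) S₁)).2 with hM₁d
    set A₂ := (PieriAux.PSI n (PieriAux.lamN lam)
      (PieriAux.chainOf n (fun i => ((μ₂ i : ℕ))) S₂)).1 with hA₂
    set M₂ := (PieriAux.PSI n (PieriAux.lamN lam)
      (PieriAux.chainOf n (fun i => ((μ₂ i : ℕ))) S₂)).2 with hM₂d
    have hTeq : PieriAux.Tdec n A₁ lam = PieriAux.Tdec n A₂ lam := congrArg Prod.fst heq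
    have hseq : PieriAux.msetOf n M₁ = PieriAux.msetOf n M₂ := by
      have := congrArg (fun p => (Prod.snd p : Sym (Fin n) k).toMultiset) heq
      exact this
    have hMeq : M₁ = M₂ := by
      rw [← PieriAux.mOf_msetOf (n := n) M₁ hM₁.supp, ← PieriAux.mOf_msetOf (n := n) M₂ hM₂.supp,
        hseq]
    have hAeq : A₁ = A₂ := by
      have e₁ : PieriAux.chainOf n lam (PieriAux.Tdec n A₁ lam) = A₁ :=
        PieriAux.roundtrip2 hach₁ lam (fun i => by rw [hatop₁, PieriAux.lamN_pos])
      have e₂ : PieriAux.chainOf n lam (PieriAux.Tdec n A₂ lam) = A₂ :=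
        PieriAux.roundtrip2 hach₂ lam (fun i => by rw [hatop₂, PieriAux.lamN_pos])
      rw [← e₁, ← e₂, hTeq]
    have hbeq : PieriAux.chainOf n (fun i => ((μ₁ i : ℕ))) S₁
        = PieriAux.chainOf n (fun i => ((μ₂ i : ℕ))) S₂ := by
      rw [← hphi₁, ← hphi₂, hAeq, hMeq]
    have hμeq : μ₁ = μ₂ := by
      funext i
      refine Fin.ext ?_
      have e₁ : (μ₁ i : ℕ) = PieriAux.chainOf n (fun i => ((μ₁ i : ℕ))) S₁ n (i : ℕ) :=
        (PieriAux.chainOf_top (sh := fun i => ((μ₁ i : ℕ))) (T := S₁) i).symm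
      have e₂ : (μ₂ i : ℕ) = PieriAux.chainOf n (fun i => ((μ₂ i : ℕ))) S₂ n (i : ℕ) :=
        (PieriAux.chainOf_top (sh := fun i => ((μ₂ i : ℕ))) (T := S₂) i).symm
      rw [e₁, e₂, hbeq]
    subst hμeq
    have hSeq : S₁ = S₂ := by
      have e₁ : PieriAux.Tdec n (PieriAux.chainOf n (fun i => ((μ₁ i : ℕ))) S₁)
          (fun i => (μ₁ i : ℕ)) = S₁ := PieriAux.roundtrip1 hQ₁.1
      have e₂ : PieriAux.Tdec n (PieriAux.chainOf n (fun i => ((μ₁ i : ℕ))) S₂)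
          (fun i => (μ₁ i : ℕ)) = S₂ := PieriAux.roundtrip1 hQ₂.1
      rw [← e₁, ← e₂, hbeq]
    rw [hSeq]
  · -- surjectivity
    intro x hx
    obtain ⟨T, s⟩ := x
    replace hx := Finset.mem_product.mp hx
    have hT := (Finset.mem_filter.mp hx.1).2
    set a := PieriAux.chainOf n lam T with hadef
    have hach : PieriAux.IsChain n a :=
      PieriAux.chainOf_isChain hT.1 hT.2 (fun i i' h => hlam h)
    have hatop : a n = PieriAux.lamN lam := by
      funext i
      by_cases h : i < n
      · have e : a n i = lam ⟨i, h⟩ := PieriAux.chainOf_top (⟨i, h⟩ : Fin n)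
        rw [e, PieriAux.lamN, dif_pos h]
      · rw [hach.supp n i (by omega), PieriAux.lamN, dif_neg h]
    set m := PieriAux.mOf n (α := ℕ) (Sym.toMultiset s) with hmdef
    have hm : PieriAux.IsMult n k m := by
      have h0 := PieriAux.mOf_isMult (n := n) (Sym.toMultiset s)
      have hcard : Multiset.card (Sym.toMultiset s) = k := s.2
      rwa [hcard] at h0
    obtain ⟨hBch, hBstrip, hwt, hpsi⟩ := PieriAux.MAIN n (PieriAux.lamN lam) k a m hach hatop hm
    set B := PieriAux.PHI n a m with hBdef
    have hbound : ∀ i : Fin n, B n (i : ℕ) < lam i + k + 1 := by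
      intro i
      have h1 := PieriAux.strip_bound hBstrip i.2
      rw [PieriAux.lamN_pos] at h1
      omega
    set μF : (i : Fin n) → Fin (lam i + k + 1) := fun i => ⟨B n (i : ℕ), hbound i⟩ with hμF
    set SF := PieriAux.Tdec n B (fun i => ((μF i : ℕ))) with hSF
    have hshF : ∀ i : Fin n, (μF i : ℕ) = B n (i : ℕ) := fun i => rfl
    have hSsyt := PieriAux.Tdec_ssyt hBch (fun i => ((μF i : ℕ))) hshF
    refine ⟨⟨μF, SF⟩, ?_, ?_⟩
    · rw [Finset.mem_sigma]
      constructor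
      · rw [Finset.mem_filter]
        refine ⟨Finset.mem_univ _, ?_, ?_, ?_⟩
        · intro i
          have := hBstrip.le (i : ℕ)
          rwa [PieriAux.lamN_pos] at this
        · intro i j hij
          show (μF j : ℕ) ≤ lam i
          rw [hshF j, ← hij]
          have := hBstrip.bound (i : ℕ)
          rwa [PieriAux.lamN_pos] at this
        · show (∑ i, ((μF i : ℕ) - lam i)) = k
          have hsz := hBstrip.size
          have e1 : PieriAux.ssum n (B n) = ∑ i : Fin n, (μF i : ℕ) := by
            rw [PieriAux.ssum_eq_fin]
          have e2 : PieriAux.ssum n (PieriAux.lamN lam) = ∑ i : Fin n, lam i := by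
            rw [PieriAux.ssum_eq_fin]
            exact Finset.sum_congr rfl fun i _ => PieriAux.lamN_pos lam i
          have e3 : (∑ i, ((μF i : ℕ) - lam i)) + ∑ i, lam i = ∑ i, (μF i : ℕ) :=
            PieriAux.fin_sub_sum (g := fun i => (μF i : ℕ))
            (fun i => by
              show lam i ≤ (μF i : ℕ)
              rw [hshF i]
              have h5 := hBstrip.le (i : ℕ)
              rwa [PieriAux.lamN_pos] at h5)
          rw [e1, e2] at hsz
          omega
      · rw [Finset.mem_filter]
        exact ⟨Finset.mem_univ _, hSsyt⟩
    have hcB : PieriAux.chainOf n (fun i => ((μF i : ℕ))) SF = B :=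
      PieriAux.roundtrip2 hBch _ hshF
    show (PieriAux.Tdec n (PieriAux.PSI n (PieriAux.lamN lam)
        (PieriAux.chainOf n (fun i => ((μF i : ℕ))) SF)).1 lam,
      (⟨PieriAux.msetOf n (PieriAux.PSI n (PieriAux.lamN lam)
        (PieriAux.chainOf n (fun i => ((μF i : ℕ))) SF)).2, _⟩ : Sym (Fin n) k)) = (T, s)
    have hPSIeq : PieriAux.PSI n (PieriAux.lamN lam)
        (PieriAux.chainOf n (fun i => ((μF i : ℕ))) SF) = (a, m) := by
      rw [hcB]; exact hpsi
    refine Prod.ext ?_ ?_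
    · show PieriAux.Tdec n (PieriAux.PSI n (PieriAux.lamN lam)
        (PieriAux.chainOf n (fun i => ((μF i : ℕ))) SF)).1 lam = T
      rw [hPSIeq]
      exact PieriAux.roundtrip1 hT.1
    · refine Subtype.ext ?_
      show PieriAux.msetOf n (PieriAux.PSI n (PieriAux.lamN lam)
        (PieriAux.chainOf n (fun i => ((μF i : ℕ))) SF)).2 = _
      rw [hPSIeq]
      exact PieriAux.msetOf_mOf (Sym.toMultiset s)
  · -- term equality
    intro y hy
    have hy' := Finset.mem_sigma.mp hy
    have h123 := (Finset.mem_filter.mp hy'.1).2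
    have hQ := (Finset.mem_filter.mp hy'.2).2
    obtain ⟨hb, hstrip⟩ := PieriAux.cod_pack lam hlam y.1 y.2
      h123.1 h123.2.1 h123.2.2 hQ.1 hQ.2
    obtain ⟨hach, hatop, hM, hphi⟩ := PieriAux.MAIN2 n (PieriAux.lamN lam) k _ hb hstrip
      (PieriAux.lamN_anti hlam) (PieriAux.lamN_supp lam)
    set b := PieriAux.chainOf n (fun i => ((y.1 i : ℕ))) y.2 with hbdef
    set A := (PieriAux.PSI n (PieriAux.lamN lam) b).1 with hAdef
    set M := (PieriAux.PSI n (PieriAux.lamN lam) b).2 with hMdef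
    obtain ⟨_, _, hwt, _⟩ := PieriAux.MAIN n (PieriAux.lamN lam) k A M hach hatop hM
    rw [hphi] at hwt
    set T' := PieriAux.Tdec n A lam with hT'def
    have hsh' : ∀ i : Fin n, lam i = A n (i : ℕ) :=
      fun i => by rw [hatop, PieriAux.lamN_pos]
    have hT'ssyt := PieriAux.Tdec_ssyt hach lam hsh'
    have hcA : PieriAux.chainOf n lam T' = A := PieriAux.roundtrip2 hach lam hsh'
    have hent : PieriAux.entries n (fun i => ((y.1 i : ℕ))) y.2
        = PieriAux.entries n lam T' + PieriAux.msetOf n M := by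
      refine Multiset.ext.mpr fun v => ?_
      rw [Multiset.count_add]
      have c1 := PieriAux.count_entries hQ.1 v
      rw [← hbdef] at c1
      have c2 := PieriAux.count_entries hT'ssyt.1 v
      rw [hcA] at c2
      have c3 := PieriAux.count_msetOf (n := n) M v
      have c4 := hwt (v : ℕ)
      rw [← hT'def] at c2
      omega
    show (∏ c : (i : Fin n) × Fin ((y.1 i : ℕ)), MvPolynomial.X (y.2 c)) = _
    rw [PieriAux.prod_X_entries, hent, Multiset.map_add, Multiset.prod_add,
      ← PieriAux.prod_X_entries]
    rfl
end

section
/- Branching rule for U(n) ↓ U(n−1) at the level of Schur polynomials: for a partition λ = (λ_1 ≥ ⋯ ≥ λ_n ≥ 0), substituting x_n = 1 gives s_λ(x_1,…,x_{n−1},1) = Σ_μ s_μ(x_1,…,x_{n−1}), where the sum runs over all partitions μ = (μ_1 ≥ ⋯ ≥ μ_{n−1}) that interleave λ, i.e. λ_1 ≥ μ_1 ≥ λ_2 ≥ μ_2 ≥ ⋯ ≥ λ_{n−1} ≥ μ_{n−1} ≥ λ_n, as an identity in ℤ[x_1,…,x_{n−1}]. -/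
open scoped Classical
open MvPolynomial

namespace SchurBranch

abbrev Cell {m : ℕ} (g : Fin m → ℕ) := (i : Fin m) × Fin (g i)

theorem cell_eq {m : ℕ} {g : Fin m → ℕ} {i i' : Fin m} {j : Fin (g i)} {j' : Fin (g i')}
    (h1 : i = i') (h2 : (j : ℕ) = (j' : ℕ)) : (⟨i, j⟩ : Cell g) = ⟨i', j'⟩ := by
  subst h1
  exact congrArg _ (Fin.ext h2)

theorem mem_iff_lt_card {m : ℕ} (S : Finset (Fin m))
    (hS : ∀ a b : Fin m, a ≤ b → b ∈ S → a ∈ S) (j : Fin m) :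
    j ∈ S ↔ (j : ℕ) < S.card := by
  constructor
  · intro hj
    have h1 : Finset.Iic j ⊆ S := fun a ha => hS a j (Finset.mem_Iic.mp ha) hj
    have := Finset.card_le_card h1
    rw [Fin.card_Iic] at this
    omega
  · intro hj
    by_contra h
    have h1 : S ⊆ Finset.Iio j := by
      intro a ha
      rw [Finset.mem_Iio]
      by_contra hge
      exact h (hS j a (not_lt.mp hge) ha)
    have := Finset.card_le_card h1
    rw [Fin.card_Iio] at this
    omega

theorem card_filter_lt {m k : ℕ} (hk : k ≤ m) :
    (Finset.univ.filter (fun j : Fin m => (j : ℕ) < k)).card = k := by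
  have := Finset.card_bij'
    (s := Finset.univ.filter (fun j : Fin m => (j : ℕ) < k))
    (t := (Finset.univ : Finset (Fin k)))
    (fun j hj => ⟨(j : ℕ), by simpa using hj⟩)
    (fun j _ => ⟨(j : ℕ), lt_of_lt_of_le j.isLt hk⟩)
    (by intros; simp)
    (by intro a _; simp [a.isLt])
    (by intro a ha; exact Fin.ext rfl)
    (by intro a ha; exact Fin.ext rfl)
  simpa using this

variable {n : ℕ} (lam : Fin (n + 1) → ℕ)

def Row {N m : ℕ} (g : Fin m → ℕ) (T : Cell g → Fin N) : Prop :=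
  ∀ c c' : Cell g, c.1 = c'.1 → (c.2 : ℕ) ≤ (c'.2 : ℕ) → T c ≤ T c'

def Col {N m : ℕ} (g : Fin m → ℕ) (T : Cell g → Fin N) : Prop :=
  ∀ c c' : Cell g, c.1 < c'.1 → (c.2 : ℕ) = (c'.2 : ℕ) → T c < T c'

def muOf (T : Cell lam → Fin (n + 1)) (i : Fin n) : ℕ :=
  (Finset.univ.filter (fun j : Fin (lam i.castSucc) => ((T ⟨i.castSucc, j⟩ : ℕ) < n))).card

theorem muOf_le (T : Cell lam → Fin (n + 1)) (i : Fin n) : muOf lam T i ≤ lam i.castSucc :=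
  (Finset.card_filter_le _ _).trans (by simp)

theorem lt_iff_lt_muOf {T : Cell lam → Fin (n + 1)} (hrow : Row lam T) (i : Fin n)
    (j : Fin (lam i.castSucc)) :
    ((T ⟨i.castSucc, j⟩ : ℕ) < n) ↔ (j : ℕ) < muOf lam T i := by
  have h := mem_iff_lt_card
    (Finset.univ.filter (fun j : Fin (lam i.castSucc) => ((T ⟨i.castSucc, j⟩ : ℕ) < n)))
    ?_ j
  · simpa [muOf] using h
  · intro a b hab hb
    simp only [Finset.mem_filter, Finset.mem_univ, true_and] at hb ⊢
    have h1 : T ⟨i.castSucc, a⟩ ≤ T ⟨i.castSucc, b⟩ := hrow ⟨i.castSucc, a⟩ ⟨i.castSucc, b⟩ rfl hab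
    have h2 := Fin.le_def.mp h1
    omega

theorem le_val {T : Cell lam → Fin (n + 1)} (hcol : Col lam T) (hlam : Antitone lam) :
    ∀ (k : ℕ) (c : Cell lam), (c.1 : ℕ) = k → k ≤ (T c : ℕ) := by
  intro k
  induction k with
  | zero => intro c _; exact Nat.zero_le _
  | succ k ih =>
    rintro ⟨i, j⟩ hik
    have hik' : (i : ℕ) = k + 1 := hik
    have hk' : k < n + 1 := by omega
    have hle : lam i ≤ lam ⟨k, hk'⟩ := hlam (by rw [Fin.le_def]; simp; omega)
    have hj : (j : ℕ) < lam ⟨k, hk'⟩ := lt_of_lt_of_le j.isLt hle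
    have hlt := hcol ⟨⟨k, hk'⟩, ⟨(j : ℕ), hj⟩⟩ ⟨i, j⟩ (by rw [Fin.lt_def]; simp; omega) rfl
    have h1 := ih ⟨⟨k, hk'⟩, ⟨(j : ℕ), hj⟩⟩ rfl
    have h2 := Fin.lt_def.mp hlt
    omega

theorem lam_succ_le_muOf {T : Cell lam → Fin (n + 1)} (hrow : Row lam T) (hcol : Col lam T)
    (hlam : Antitone lam) (i : Fin n) : lam i.succ ≤ muOf lam T i := by
  by_contra h
  push_neg at h
  have hcs : lam i.succ ≤ lam i.castSucc := hlam (Fin.castSucc_le_succ i)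
  have hj : muOf lam T i < lam i.castSucc := lt_of_lt_of_le h hcs
  have h1 : ¬ ((T ⟨i.castSucc, ⟨muOf lam T i, hj⟩⟩ : ℕ) < n) := by
    rw [lt_iff_lt_muOf lam hrow]
    simp
  have h2 := hcol ⟨i.castSucc, ⟨muOf lam T i, hj⟩⟩ ⟨i.succ, ⟨muOf lam T i, h⟩⟩
    (Fin.castSucc_lt_succ) rfl
  have h3 := Fin.lt_def.mp h2
  have h4 : (T ⟨i.succ, ⟨muOf lam T i, h⟩⟩ : ℕ) < n + 1 := Fin.isLt _
  omega

def gnat (μ : (i : Fin n) → Fin (lam i.castSucc + 1))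
    (T' : Cell (fun i : Fin n => (μ i : ℕ)) → Fin n) (a b : ℕ) : Fin (n + 1) :=
  if h : a < n then
    if h2 : b < (μ ⟨a, h⟩ : ℕ) then (T' ⟨⟨a, h⟩, ⟨b, h2⟩⟩).castSucc else Fin.last n
  else Fin.last n

def gT (μ : (i : Fin n) → Fin (lam i.castSucc + 1))
    (T' : Cell (fun i : Fin n => (μ i : ℕ)) → Fin n) : Cell lam → Fin (n + 1) :=
  fun c => gnat lam μ T' (c.1 : ℕ) (c.2 : ℕ)

theorem gT_row (μ : (i : Fin n) → Fin (lam i.castSucc + 1))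
    (T' : Cell (fun i : Fin n => (μ i : ℕ)) → Fin n)
    (hrow' : Row (fun i : Fin n => (μ i : ℕ)) T') : Row lam (gT lam μ T') := by
  rintro ⟨i, j⟩ ⟨i', j'⟩ h1 h2
  dsimp only at h1
  subst h1
  show gnat lam μ T' (i : ℕ) (j : ℕ) ≤ gnat lam μ T' (i : ℕ) (j' : ℕ)
  unfold gnat
  by_cases h : (i : ℕ) < n
  · rw [dif_pos h, dif_pos h]
    by_cases h2' : (j' : ℕ) < (μ ⟨(i : ℕ), h⟩ : ℕ)
    · rw [dif_pos h2', dif_pos (lt_of_le_of_lt h2 h2')]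
      exact Fin.castSucc_le_castSucc_iff.mpr
        (hrow' ⟨⟨(i : ℕ), h⟩, ⟨(j : ℕ), lt_of_le_of_lt h2 h2'⟩⟩ ⟨⟨(i : ℕ), h⟩, ⟨(j' : ℕ), h2'⟩⟩ rfl h2)
    · rw [dif_neg h2']
      exact Fin.le_last _
  · rw [dif_neg h, dif_neg h]

theorem gT_col (μ : (i : Fin n) → Fin (lam i.castSucc + 1))
    (T' : Cell (fun i : Fin n => (μ i : ℕ)) → Fin n)
    (hlam : Antitone lam) (hp : ∀ i : Fin n, lam i.succ ≤ (μ i : ℕ))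
    (hcol' : Col (fun i : Fin n => (μ i : ℕ)) T') : Col lam (gT lam μ T') := by
  rintro ⟨i, j⟩ ⟨i', j'⟩ h1 h2
  dsimp only at h1 h2
  have hii' : (i : ℕ) < (i' : ℕ) := Fin.lt_def.mp h1
  have hi : (i : ℕ) < n := by have := i'.isLt; omega
  have hlt1 : (i : ℕ) + 1 < n + 1 := by omega
  have hji : (j : ℕ) < (μ ⟨(i : ℕ), hi⟩ : ℕ) := by
    have e1 : (j' : ℕ) < lam i' := j'.isLt
    have e2 : lam i' ≤ lam ⟨(i : ℕ) + 1, hlt1⟩ := hlam (by rw [Fin.le_def]; simp; omega)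
    have e4 : ((⟨(i : ℕ), hi⟩ : Fin n).succ) = ⟨(i : ℕ) + 1, hlt1⟩ := Fin.ext rfl
    have e3 : lam ((⟨(i : ℕ), hi⟩ : Fin n).succ) ≤ (μ ⟨(i : ℕ), hi⟩ : ℕ) := hp _
    rw [e4] at e3
    omega
  show gnat lam μ T' (i : ℕ) (j : ℕ) < gnat lam μ T' (i' : ℕ) (j' : ℕ)
  unfold gnat
  rw [dif_pos hi, dif_pos hji]
  by_cases h : (i' : ℕ) < n
  · rw [dif_pos h]
    by_cases h2' : (j' : ℕ) < (μ ⟨(i' : ℕ), h⟩ : ℕ)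
    · rw [dif_pos h2']
      exact Fin.castSucc_lt_castSucc_iff.mpr
        (hcol' ⟨⟨(i : ℕ), hi⟩, ⟨(j : ℕ), hji⟩⟩ ⟨⟨(i' : ℕ), h⟩, ⟨(j' : ℕ), h2'⟩⟩ hii' h2)
    · rw [dif_neg h2']
      exact Fin.castSucc_lt_last _
  · rw [dif_neg h]
    exact Fin.castSucc_lt_last _

theorem muOf_gT (μ : (i : Fin n) → Fin (lam i.castSucc + 1))
    (T' : Cell (fun i : Fin n => (μ i : ℕ)) → Fin n) (i : Fin n) :
    muOf lam (gT lam μ T') i = (μ i : ℕ) := by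
  unfold muOf
  have hi : ((i.castSucc : Fin (n + 1)) : ℕ) < n := by simp
  have hEq : (⟨((i.castSucc : Fin (n + 1)) : ℕ), hi⟩ : Fin n) = i := Fin.ext (by simp)
  have hval : ((μ (⟨((i.castSucc : Fin (n + 1)) : ℕ), hi⟩ : Fin n)) : ℕ) = (μ i : ℕ) := by
    rw [hEq]
  have hkey : ∀ j : Fin (lam i.castSucc),
      ((gT lam μ T' ⟨i.castSucc, j⟩ : ℕ) < n) ↔ (j : ℕ) < (μ i : ℕ) := by
    intro j
    show ((gnat lam μ T' ((i.castSucc : Fin (n + 1)) : ℕ) (j : ℕ) : Fin (n + 1)) : ℕ) < n ↔ _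
    unfold gnat
    rw [dif_pos hi]
    by_cases h2 : (j : ℕ) < ((μ (⟨((i.castSucc : Fin (n + 1)) : ℕ), hi⟩ : Fin n)) : ℕ)
    · rw [dif_pos h2]
      simp only [Fin.coe_castSucc]
      exact iff_of_true (Fin.isLt _) (by omega)
    · rw [dif_neg h2]
      simp only [Fin.val_last]
      exact iff_of_false (lt_irrefl n) (by omega)
  calc (Finset.univ.filter
        (fun j : Fin (lam i.castSucc) => ((gT lam μ T' ⟨i.castSucc, j⟩ : ℕ) < n))).card
      = (Finset.univ.filter (fun j : Fin (lam i.castSucc) => (j : ℕ) < (μ i : ℕ))).card := by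
        congr 1
        apply Finset.filter_congr
        intro j _
        simp only [hkey j]
    _ = (μ i : ℕ) := card_filter_lt (Nat.lt_succ_iff.mp (μ i).isLt)

def res (μ : (i : Fin n) → Fin (lam i.castSucc + 1)) (T : Cell lam → Fin (n + 1))
    (hrow : Row lam T) (hμ : ∀ i, muOf lam T i = (μ i : ℕ)) :
    Cell (fun i : Fin n => (μ i : ℕ)) → Fin n := fun c =>
  ⟨(T ⟨c.1.castSucc, ⟨(c.2 : ℕ),
      lt_of_lt_of_le c.2.isLt (Nat.lt_succ_iff.mp (μ c.1).isLt)⟩⟩ : ℕ),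
    (lt_iff_lt_muOf lam hrow c.1 _).mpr (by rw [hμ]; exact c.2.isLt)⟩

theorem res_row (μ : (i : Fin n) → Fin (lam i.castSucc + 1)) (T : Cell lam → Fin (n + 1))
    (hrow : Row lam T) (hμ : ∀ i, muOf lam T i = (μ i : ℕ)) :
    Row (fun i : Fin n => (μ i : ℕ)) (res lam μ T hrow hμ) := by
  rintro ⟨i, j⟩ ⟨i', j'⟩ h1 h2
  dsimp only at h1
  subst h1
  rw [Fin.le_def]
  exact Fin.le_def.mp (hrow _ _ rfl h2)

theorem res_col (μ : (i : Fin n) → Fin (lam i.castSucc + 1)) (T : Cell lam → Fin (n + 1))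
    (hrow : Row lam T) (hcol : Col lam T) (hμ : ∀ i, muOf lam T i = (μ i : ℕ)) :
    Col (fun i : Fin n => (μ i : ℕ)) (res lam μ T hrow hμ) := by
  rintro ⟨i, j⟩ ⟨i', j'⟩ h1 h2
  dsimp only at h1 h2
  rw [Fin.lt_def]
  exact Fin.lt_def.mp (hcol _ _ (Fin.castSucc_lt_castSucc_iff.mpr h1) h2)

theorem gT_res (μ : (i : Fin n) → Fin (lam i.castSucc + 1)) (T : Cell lam → Fin (n + 1))
    (hlam : Antitone lam) (hrow : Row lam T) (hcol : Col lam T)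
    (hμ : ∀ i, muOf lam T i = (μ i : ℕ)) :
    gT lam μ (res lam μ T hrow hμ) = T := by
  funext c
  obtain ⟨i, j⟩ := c
  show gnat lam μ (res lam μ T hrow hμ) (i : ℕ) (j : ℕ) = T ⟨i, j⟩
  unfold gnat
  by_cases h : (i : ℕ) < n
  · rw [dif_pos h]
    have hcell : ∀ (hj : (j : ℕ) < lam ((⟨(i : ℕ), h⟩ : Fin n).castSucc)),
        (⟨(⟨(i : ℕ), h⟩ : Fin n).castSucc, ⟨(j : ℕ), hj⟩⟩ : Cell lam) = ⟨i, j⟩ :=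
      fun hj => cell_eq (Fin.ext rfl) rfl
    by_cases h2 : (j : ℕ) < ((μ (⟨(i : ℕ), h⟩ : Fin n)) : ℕ)
    · rw [dif_pos h2]
      apply Fin.ext
      rw [Fin.coe_castSucc]
      show (T ⟨(⟨(i : ℕ), h⟩ : Fin n).castSucc, ⟨(j : ℕ), _⟩⟩ : ℕ) = _
      rw [hcell _]
    · rw [dif_neg h2]
      have hj' : (j : ℕ) < lam ((⟨(i : ℕ), h⟩ : Fin n).castSucc) := by
        have he : ((⟨(i : ℕ), h⟩ : Fin n).castSucc) = i := Fin.ext rfl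
        rw [he]
        exact j.isLt
      have hkey := lt_iff_lt_muOf lam hrow (⟨(i : ℕ), h⟩ : Fin n) ⟨(j : ℕ), hj'⟩
      rw [hμ, hcell hj'] at hkey
      have hval := Nat.lt_succ_iff.mp (Fin.isLt (T ⟨i, j⟩))
      apply Fin.ext
      rw [Fin.val_last]
      simp only [] at hkey
      omega
  · rw [dif_neg h]
    have h1 := le_val lam hcol hlam (i : ℕ) ⟨i, j⟩ rfl
    have h2 : (T ⟨i, j⟩ : ℕ) < n + 1 := Fin.isLt _
    have h3 := i.isLt
    apply Fin.ext
    rw [Fin.val_last]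
    omega

theorem res_gT (μ : (i : Fin n) → Fin (lam i.castSucc + 1))
    (T' : Cell (fun i : Fin n => (μ i : ℕ)) → Fin n)
    (hrow : Row lam (gT lam μ T')) (hμ : ∀ i, muOf lam (gT lam μ T') i = (μ i : ℕ)) :
    res lam μ (gT lam μ T') hrow hμ = T' := by
  funext c
  obtain ⟨i, j⟩ := c
  apply Fin.ext
  show (gnat lam μ T' ((i.castSucc : Fin (n + 1)) : ℕ) (((⟨(j : ℕ),
      lt_of_lt_of_le j.isLt (Nat.lt_succ_iff.mp (μ i).isLt)⟩ : Fin (lam i.castSucc)) : ℕ)) : ℕ)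
      = ((T' ⟨i, j⟩ : Fin n) : ℕ)
  have hi : ((i.castSucc : Fin (n + 1)) : ℕ) < n := by simp
  have hEq : (⟨((i.castSucc : Fin (n + 1)) : ℕ), hi⟩ : Fin n) = i := Fin.ext (by simp)
  unfold gnat
  rw [dif_pos hi]
  have h2 : (((⟨(j : ℕ),
      lt_of_lt_of_le j.isLt (Nat.lt_succ_iff.mp (μ i).isLt)⟩ : Fin (lam i.castSucc)) : ℕ))
      < ((μ (⟨((i.castSucc : Fin (n + 1)) : ℕ), hi⟩ : Fin n)) : ℕ) := by
    rw [hEq]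
    exact j.isLt
  rw [dif_pos h2, Fin.coe_castSucc]
  exact congrArg (fun c => ((T' c : Fin n) : ℕ))
    (cell_eq (g := fun i : Fin n => ((μ i : Fin (lam i.castSucc + 1)) : ℕ))
      (i := ⟨((i.castSucc : Fin (n + 1)) : ℕ), hi⟩) (i' := i) (j := ⟨_, h2⟩) (j' := j) hEq rfl)

theorem prod_eq (hlam : Antitone lam) (μ : (i : Fin n) → Fin (lam i.castSucc + 1))
    (T : Cell lam → Fin (n + 1)) (hrow : Row lam T) (hcol : Col lam T)
    (hμ : ∀ i, muOf lam T i = (μ i : ℕ)) :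
    (∏ c : Cell lam, (if h : ((T c : Fin (n + 1)) : ℕ) < n
        then (X ⟨((T c : Fin (n + 1)) : ℕ), h⟩ : MvPolynomial (Fin n) ℤ) else 1)) =
    ∏ c : Cell (fun i : Fin n => (μ i : ℕ)), (X (res lam μ T hrow hμ c) : MvPolynomial (Fin n) ℤ) := by
  rw [← Finset.prod_subset
      (Finset.filter_subset (fun c : Cell lam => ((T c : Fin (n + 1)) : ℕ) < n) Finset.univ)
      (by
        intro c _ hc
        rw [Finset.mem_filter] at hc
        rw [dif_neg]
        intro hlt
        exact hc ⟨Finset.mem_univ _, hlt⟩)]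
  have pf1 : ∀ c ∈ Finset.univ.filter (fun c : Cell lam => ((T c : Fin (n + 1)) : ℕ) < n),
      (c.1 : ℕ) < n := by
    intro c hc
    exact lt_of_le_of_lt (le_val lam hcol hlam (c.1 : ℕ) c rfl) (Finset.mem_filter.mp hc).2
  have hjlt : ∀ (c : Cell lam) (h : (c.1 : ℕ) < n),
      (c.2 : ℕ) < lam ((⟨(c.1 : ℕ), h⟩ : Fin n).castSucc) := by
    intro c h
    have he : ((⟨(c.1 : ℕ), h⟩ : Fin n).castSucc) = c.1 := Fin.ext rfl
    rw [he]
    exact c.2.isLt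
  have hcell : ∀ (c : Cell lam) (h : (c.1 : ℕ) < n),
      (⟨(⟨(c.1 : ℕ), h⟩ : Fin n).castSucc, ⟨(c.2 : ℕ), hjlt c h⟩⟩ : Cell lam) = c := by
    rintro ⟨i, j⟩ h
    exact cell_eq (Fin.ext rfl) rfl
  have pf2 : ∀ c (hc : c ∈ Finset.univ.filter
      (fun c : Cell lam => ((T c : Fin (n + 1)) : ℕ) < n)),
      (c.2 : ℕ) < ((μ (⟨(c.1 : ℕ), pf1 c hc⟩ : Fin n)) : ℕ) := by
    intro c hc
    have hkey := lt_iff_lt_muOf lam hrow (⟨(c.1 : ℕ), pf1 c hc⟩ : Fin n)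
      ⟨(c.2 : ℕ), hjlt c (pf1 c hc)⟩
    rw [hμ, hcell c (pf1 c hc)] at hkey
    exact hkey.mp (Finset.mem_filter.mp hc).2
  have bpf : ∀ c : Cell (fun i : Fin n => (μ i : ℕ)), (c.2 : ℕ) < lam c.1.castSucc :=
    fun c => lt_of_lt_of_le c.2.isLt (Nat.lt_succ_iff.mp (μ c.1).isLt)
  refine Finset.prod_bij'
    (fun c hc => (⟨⟨(c.1 : ℕ), pf1 c hc⟩, ⟨(c.2 : ℕ), pf2 c hc⟩⟩ : Cell (fun i : Fin n => (μ i : ℕ))))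
    (fun c _ => (⟨c.1.castSucc, ⟨(c.2 : ℕ), bpf c⟩⟩ : Cell lam))
    (fun c hc => Finset.mem_univ _)
    ?_ ?_ ?_ ?_
  · intro c _
    rw [Finset.mem_filter]
    refine ⟨Finset.mem_univ _, ?_⟩
    exact (lt_iff_lt_muOf lam hrow c.1 ⟨(c.2 : ℕ), bpf c⟩).mpr (by rw [hμ]; exact c.2.isLt)
  · intro c hc
    exact cell_eq (Fin.ext rfl) rfl
  · intro c hc
    exact cell_eq (g := fun i : Fin n => ((μ i : Fin (lam i.castSucc + 1)) : ℕ)) (Fin.ext rfl) rfl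
  · intro c hc
    rw [dif_pos (Finset.mem_filter.mp hc).2]
    refine congrArg X (Fin.ext ?_)
    show ((T c : Fin (n + 1)) : ℕ) = (res lam μ T hrow hμ _ : ℕ)
    show ((T c : Fin (n + 1)) : ℕ) = ((T ⟨(⟨(c.1 : ℕ), pf1 c hc⟩ : Fin n).castSucc, ⟨(c.2 : ℕ), _⟩⟩ : Fin (n + 1)) : ℕ)
    exact (congrArg (fun d => ((T d : Fin (n + 1)) : ℕ)) (hcell c (pf1 c hc))).symm
  

end SchurBranch

open SchurBranch in
/-- **Branching rule for `U(n) ↓ U(n−1)`** (here with `n+1` in place of `n`):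
substituting `x_{n+1} = 1` in `s_λ(x_1,…,x_{n+1})` gives
`Σ_μ s_μ(x_1,…,x_n)`, summed over all partitions `μ` interleaving `λ`, i.e.
`λ_1 ≥ μ_1 ≥ λ_2 ≥ μ_2 ≥ ⋯ ≥ λ_n ≥ μ_n ≥ λ_{n+1}`.  The upper bound
`μ_i ≤ λ_i` is enforced by the codomain `Fin (λ_i + 1)`. -/
theorem schur_branching_substitute_one (n : ℕ) (lam : Fin (n + 1) → ℕ)
    (hlam : Antitone lam) :
    aeval (fun i : Fin (n + 1) =>
        if h : (i : ℕ) < n then (X ⟨(i : ℕ), h⟩ : MvPolynomial (Fin n) ℤ) else 1)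
      (schurPoly (n + 1) lam) =
      ∑ μ ∈ Finset.univ.filter
          (fun μ : (i : Fin n) → Fin (lam i.castSucc + 1) =>
            ∀ i : Fin n, lam i.succ ≤ (μ i : ℕ)),
        schurPoly n fun i => (μ i : ℕ) := by
  classical
  rw [schurPoly, map_sum]
  simp only [map_prod, aeval_X]
  rw [← Finset.sum_fiberwise_of_maps_to
      (t := (Finset.univ : Finset ((i : Fin n) → Fin (lam i.castSucc + 1))))
      (g := fun T : Cell lam → Fin (n + 1) =>
        (fun i : Fin n => (⟨muOf lam T i, Nat.lt_succ_of_le (muOf_le lam T i)⟩ :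
          Fin (lam i.castSucc + 1))))
      (fun _ _ => Finset.mem_univ _)]
  conv_rhs => rw [Finset.sum_filter]
  refine Finset.sum_congr rfl fun μ _ => ?_
  by_cases hp : ∀ i : Fin n, lam i.succ ≤ (μ i : ℕ)
  · rw [if_pos hp, schurPoly]
    refine Finset.sum_bij'
      (fun T hT => res lam μ T
        (fun c c' => ((Finset.mem_filter.mp ((Finset.mem_filter.mp hT).1)).2.1 c c'))
        (fun i => congrArg Fin.val (congrFun (Finset.mem_filter.mp hT).2 i)))
      (fun T' _ => gT lam μ T')
      ?_ ?_ ?_ ?_ ?_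
    · intro T hT
      rw [Finset.mem_filter]
      have hrow := (Finset.mem_filter.mp ((Finset.mem_filter.mp hT).1)).2.1
      have hcol := (Finset.mem_filter.mp ((Finset.mem_filter.mp hT).1)).2.2
      exact ⟨Finset.mem_univ _, res_row lam μ T _ _, res_col lam μ T hrow hcol _⟩
    · intro T' hT'
      have hrow' := (Finset.mem_filter.mp hT').2.1
      have hcol' := (Finset.mem_filter.mp hT').2.2
      rw [Finset.mem_filter]
      refine ⟨?_, ?_⟩
      · rw [Finset.mem_filter]
        exact ⟨Finset.mem_univ _, gT_row lam μ T' hrow', gT_col lam μ T' hlam hp hcol'⟩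
      · funext i
        exact Fin.ext (muOf_gT lam μ T' i)
    · intro T hT
      have hcol := (Finset.mem_filter.mp ((Finset.mem_filter.mp hT).1)).2.2
      exact gT_res lam μ T hlam _ hcol _
    · intro T' hT'
      exact res_gT lam μ T' _ _
    · intro T hT
      have hrow := (Finset.mem_filter.mp ((Finset.mem_filter.mp hT).1)).2.1
      have hcol := (Finset.mem_filter.mp ((Finset.mem_filter.mp hT).1)).2.2
      exact prod_eq lam hlam μ T hrow hcol _
  · rw [if_neg hp]
    have he : (Finset.univ.filter
        (fun T : Cell lam → Fin (n + 1) =>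
          (∀ c c' : Cell lam, c.1 = c'.1 → (c.2 : ℕ) ≤ (c'.2 : ℕ) → T c ≤ T c') ∧
          (∀ c c' : Cell lam, c.1 < c'.1 → (c.2 : ℕ) = (c'.2 : ℕ) → T c < T c'))).filter
        (fun T => (fun i : Fin n => (⟨muOf lam T i, Nat.lt_succ_of_le (muOf_le lam T i)⟩ :
          Fin (lam i.castSucc + 1))) = μ) = ∅ := by
      rw [Finset.eq_empty_iff_forall_notMem]
      intro T hT
      have hrow := (Finset.mem_filter.mp ((Finset.mem_filter.mp hT).1)).2.1
      have hcol := (Finset.mem_filter.mp ((Finset.mem_filter.mp hT).1)).2.2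
      have hμ : ∀ i, muOf lam T i = (μ i : ℕ) :=
        fun i => congrArg Fin.val (congrFun (Finset.mem_filter.mp hT).2 i)
      exact hp fun i => (hμ i) ▸ lam_succ_le_muOf lam hrow hcol hlam i
    rw [he, Finset.sum_empty]
end

section
/- Weyl dimension branching identity: for every weakly decreasing tuple λ = (λ_1 ≥ ⋯ ≥ λ_n) of nonnegative integers, the rational number ∏_{1 ≤ i < j ≤ n} (λ_i − λ_j + j − i)/(j − i) equals the sum, over all partitions μ = (μ_1 ≥ ⋯ ≥ μ_{n−1}) interleaving λ (i.e. λ_1 ≥ μ_1 ≥ λ_2 ≥ μ_2 ≥ ⋯ ≥ μ_{n−1} ≥ λ_n), of ∏_{1 ≤ i < j ≤ n−1} (μ_i − μ_j + j − i)/(j − i). -/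
open scoped Classical
open Finset Polynomial
open scoped Nat

/-- Falling factorial polynomial evaluated at a rational. -/
noncomputable def wdbD (k : ℕ) (x : ℚ) : ℚ := (descPochhammer ℚ k).eval x

lemma wdbD_zero (x : ℚ) : wdbD 0 x = 1 := by simp [wdbD]

lemma wdbD_step (k : ℕ) (x : ℚ) :
    wdbD (k + 1) (x + 1) - wdbD (k + 1) x = (k + 1) * wdbD k x := by
  have h1 : wdbD (k + 1) (x + 1) = (x + 1) * wdbD k x := by
    simp [wdbD, descPochhammer_succ_left, eval_comp]
  have h2 : wdbD (k + 1) x = wdbD k x * (x - k) := descPochhammer_succ_eval k x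
  rw [h1, h2]; ring

lemma wdbD_range (k q : ℕ) :
    wdbD (k + 1) (q : ℚ) = (k + 1) * ∑ b ∈ range q, wdbD k (b : ℚ) := by
  induction q with
  | zero => simp [wdbD, descPochhammer_succ_left]
  | succ q ih =>
      have := wdbD_step k (q : ℚ)
      rw [sum_range_succ, mul_add, ← ih]
      push_cast
      linarith [wdbD_step k (q : ℚ)]

lemma wdbD_Ico (k p q : ℕ) (h : p ≤ q) :
    ((k : ℚ) + 1) * ∑ b ∈ Finset.Ico p q, wdbD k (b : ℚ) =
      wdbD (k + 1) (q : ℚ) - wdbD (k + 1) (p : ℚ) := by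
  rw [Finset.sum_Ico_eq_sub _ h, mul_sub, ← wdbD_range, ← wdbD_range]

lemma wdb_prod_pairs {M : Type*} [CommMonoid M] (m : ℕ) (f : Fin m → Fin m → M) :
    ∏ p ∈ Finset.univ.filter (fun p : Fin m × Fin m => p.1 < p.2), f p.1 p.2 =
      ∏ i : Fin m, ∏ j ∈ Finset.Ioi i, f i j := by
  refine Eq.trans ?_ (Finset.prod_sigma Finset.univ (fun i => Finset.Ioi i)
    (fun x => f x.1 x.2))
  refine Finset.prod_nbij' (fun p => ⟨p.1, p.2⟩) (fun s => (s.1, s.2)) ?_ ?_ ?_ ?_ ?_ <;>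
    simp [Finset.mem_sigma, Finset.mem_filter]

lemma wdb_sum_pairs {M : Type*} [AddCommMonoid M] (m : ℕ) (f : Fin m → Fin m → M) :
    ∑ p ∈ Finset.univ.filter (fun p : Fin m × Fin m => p.1 < p.2), f p.1 p.2 =
      ∑ i : Fin m, ∑ j ∈ Finset.Ioi i, f i j := by
  refine Eq.trans ?_ (Finset.sum_sigma Finset.univ (fun i => Finset.Ioi i)
    (fun x => f x.1 x.2))
  refine Finset.sum_nbij' (fun p => ⟨p.1, p.2⟩) (fun s => (s.1, s.2)) ?_ ?_ ?_ ?_ ?_ <;>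
    simp [Finset.mem_sigma, Finset.mem_filter]

lemma wdb_det_dd (m : ℕ) (v : Fin m → ℚ) :
    (Matrix.of fun p i : Fin m => wdbD (i : ℕ) (v p)).det =
      ∏ i : Fin m, ∏ j ∈ Finset.Ioi i, (v j - v i) := by
  rw [← Matrix.det_vandermonde,
    Matrix.det_eval_matrixOfPolynomials_eq_det_vandermonde v
      (fun j => descPochhammer ℚ (j : ℕ))
      (fun i => descPochhammer_natDegree ℚ _)
      (fun i => monic_descPochhammer _ _)]
  rfl

lemma wdb_core (n : ℕ) (A : Fin (n + 1) → ℕ) (hA : ∀ j : Fin n, A j.succ ≤ A j.castSucc) :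
    (n ! : ℚ) * ∑ b ∈ Fintype.piFinset (fun j : Fin n => Finset.Ico (A j.succ) (A j.castSucc)),
        ∏ i : Fin n, ∏ j ∈ Finset.Ioi i, ((b j : ℚ) - (b i : ℚ)) =
      (-1 : ℚ) ^ n * ∏ i : Fin (n + 1), ∏ j ∈ Finset.Ioi i, ((A j : ℚ) - (A i : ℚ)) := by
  set S : Fin n → Finset ℕ := fun j => Finset.Ico (A j.succ) (A j.castSucc) with hS
  set F : Matrix (Fin (n + 1)) (Fin (n + 1)) ℚ :=
    Matrix.of (fun p i : Fin (n + 1) => wdbD (i : ℕ) ((A p : ℚ))) with hF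
  set N : Matrix (Fin (n + 1)) (Fin (n + 1)) ℚ :=
    Matrix.of (fun p k : Fin (n + 1) => if (k : ℕ) = (p : ℕ) + 1 then 1 else 0) with hN
  set C : Matrix (Fin n) (Fin n) ℚ :=
    Matrix.of (fun p i : Fin n =>
      wdbD ((i : ℕ) + 1) ((A p.castSucc : ℚ)) - wdbD ((i : ℕ) + 1) ((A p.succ : ℚ))) with hC
  set T : Matrix (Fin n) (Fin n) ℚ :=
    Matrix.of (fun p i : Fin n => ∑ x ∈ S p, wdbD (i : ℕ) (x : ℚ)) with hT
  -- Step 1+2: the sum of determinants is the determinant of the sums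
  have step12 :
      ∑ b ∈ Fintype.piFinset S, ∏ i : Fin n, ∏ j ∈ Finset.Ioi i, ((b j : ℚ) - (b i : ℚ)) =
        T.det := by
    have h1 : ∀ b : (j : Fin n) → ℕ,
        ∏ i : Fin n, ∏ j ∈ Finset.Ioi i, ((b j : ℚ) - (b i : ℚ)) =
          (Matrix.of fun p i : Fin n => wdbD (i : ℕ) ((b p : ℚ))).det := by
      intro b; rw [wdb_det_dd]
    rw [Finset.sum_congr rfl fun b _ => h1 b]
    have hml := (Matrix.detRowAlternating (R := ℚ) (n := Fin n)).toMultilinearMap.map_sum_finset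
      (A := S) (g := fun p (x : ℕ) => fun i : Fin n => wdbD (i : ℕ) ((x : ℚ)))
    have hrows : (fun p : Fin n => ∑ x ∈ S p, fun i : Fin n => wdbD (i : ℕ) ((x : ℚ))) =
        fun p (i : Fin n) => ∑ x ∈ S p, wdbD (i : ℕ) ((x : ℚ)) := by
      funext p i; simp
    rw [hrows] at hml
    exact hml.symm
  -- Step 3: n! * det T = det C
  have step3 : (n ! : ℚ) * T.det = C.det := by
    have hscale : (Matrix.of fun p i : Fin n => ((i : ℕ) + 1 : ℚ) * T p i).det =
        (∏ i : Fin n, ((i : ℕ) + 1 : ℚ)) * T.det := Matrix.det_mul_row _ _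
    have hfac : (∏ i : Fin n, ((i : ℕ) + 1 : ℚ)) = (n ! : ℚ) := by
      rw [Fin.prod_univ_eq_prod_range (fun i => ((i : ℕ) + 1 : ℚ))]
      exact_mod_cast congrArg (Nat.cast (R := ℚ)) (Finset.prod_range_add_one_eq_factorial n)
    have hentries : (Matrix.of fun p i : Fin n => ((i : ℕ) + 1 : ℚ) * T p i) = C := by
      ext p i
      simp only [Matrix.of_apply, hT, hC, hS]
      exact wdbD_Ico (i : ℕ) _ _ (hA p)
    rw [← hfac, ← hscale, hentries]
  -- Step 4: entries of N * F
  have hNF : ∀ (p i : Fin (n + 1)),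
      (N * F) p i = if hp : (p : ℕ) < n then F ⟨(p : ℕ) + 1, by omega⟩ i else 0 := by
    intro p i
    rw [Matrix.mul_apply]
    by_cases hp : (p : ℕ) < n
    · rw [dif_pos hp, Finset.sum_eq_single (⟨(p : ℕ) + 1, by omega⟩ : Fin (n + 1))]
      · simp [hN]
      · intro k _ hk
        have hk' : ¬((k : ℕ) = (p : ℕ) + 1) := fun h => hk (Fin.ext h)
        simp [hN, hk']
      · simp
    · rw [dif_neg hp]
      apply Finset.sum_eq_zero
      intro k _
      have hk := k.isLt
      have hp' := p.isLt
      have hk' : ¬((k : ℕ) = (p : ℕ) + 1) := by omega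
      simp [hN, hk']
  -- Step 5: det (1 - N) = 1
  have hdetU : (1 - N).det = 1 := by
    have hBT : Matrix.BlockTriangular (1 - N) id := by
      intro i j hij
      have hne : i ≠ j := fun h => by simp [h] at hij
      have h2 : N i j = 0 := by
        have : ¬((j : ℕ) = (i : ℕ) + 1) := by
          have : (j : ℕ) < (i : ℕ) := hij
          omega
        simp [hN, this]
      rw [Matrix.sub_apply, h2, Matrix.one_apply_ne hne, sub_zero]
    rw [Matrix.det_of_upperTriangular hBT]
    apply Finset.prod_eq_one
    intro i _
    have : ¬((i : ℕ) = (i : ℕ) + 1) := by omega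
    simp [Matrix.sub_apply, hN, Matrix.one_apply, this]
  set G := (1 - N) * F with hG
  have hdetG : G.det = F.det := by rw [hG, Matrix.det_mul, hdetU, one_mul]
  have hGentry : ∀ p i, G p i = F p i - (N * F) p i := by
    intro p i
    rw [hG, Matrix.sub_mul, Matrix.one_mul, Matrix.sub_apply]
  have hF0 : ∀ q : Fin (n + 1), F q 0 = 1 := fun q => by simp [hF, wdbD]
  have hG0 : ∀ p : Fin (n + 1), G p 0 = if p = Fin.last n then 1 else 0 := by
    intro p
    rw [hGentry, hNF]
    by_cases hp : (p : ℕ) < n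
    · have hpl : p ≠ Fin.last n := by
        intro h
        rw [h, Fin.val_last] at hp
        omega
      rw [dif_pos hp, hF0, hF0, if_neg hpl, sub_self]
    · have hpl : p = Fin.last n := by
        apply Fin.ext
        have := p.isLt
        rw [Fin.val_last]
        omega
      rw [dif_neg hp, hF0, if_pos hpl, sub_zero]
  -- Step 6: Laplace expansion along column 0
  have hsum : G.det = (-1 : ℚ) ^ n * (G.submatrix (Fin.last n).succAbove Fin.succ).det := by
    rw [Matrix.det_succ_column_zero G, Finset.sum_eq_single (Fin.last n)]
    · rw [hG0, if_pos rfl, Fin.val_last, mul_one]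
    · intro p _ hp
      rw [hG0, if_neg hp, mul_zero, zero_mul]
    · simp
  have hsubC : G.submatrix (Fin.last n).succAbove Fin.succ = C := by
    ext q i
    rw [Matrix.submatrix_apply, Fin.succAbove_last, hGentry, hNF]
    have hq : ((q.castSucc : Fin (n + 1)) : ℕ) < n := by
      rw [Fin.coe_castSucc]
      exact q.isLt
    rw [dif_pos hq]
    have hqq : (⟨((q.castSucc : Fin (n + 1)) : ℕ) + 1, by omega⟩ : Fin (n + 1)) = q.succ := by
      apply Fin.ext
      simp
    rw [hqq]
    simp [hF, hC]
  have hdetF : F.det = ∏ i : Fin (n + 1), ∏ j ∈ Finset.Ioi i, ((A j : ℚ) - (A i : ℚ)) :=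
    wdb_det_dd _ _
  have hGC : G.det = (-1 : ℚ) ^ n * C.det := by rw [hsum, hsubC]
  have hneg : (-1 : ℚ) ^ n * (-1 : ℚ) ^ n = 1 := by
    rw [← pow_add]
    exact Even.neg_one_pow ⟨n, rfl⟩
  rw [step12, step3]
  rw [← hdetF, ← hdetG, hGC, ← mul_assoc, hneg, one_mul]

lemma wdb_card (m : ℕ) :
    (Finset.univ.filter (fun p : Fin m × Fin m => p.1 < p.2)).card = ∑ k ∈ range m, k := by
  rw [Finset.card_eq_sum_ones, wdb_sum_pairs m (fun _ _ => 1)]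
  have h1 : ∀ i : Fin m, ∑ _j ∈ Finset.Ioi i, 1 = m - 1 - (i : ℕ) := by
    intro i
    rw [Finset.sum_const, smul_eq_mul, mul_one, Fin.card_Ioi]
  rw [Finset.sum_congr rfl fun i _ => h1 i, Fin.sum_univ_eq_sum_range]
  exact Finset.sum_range_reflect (fun k => k) m

lemma wdb_sign (m : ℕ) (x : Fin m → ℚ) :
    ∏ p ∈ Finset.univ.filter (fun p : Fin m × Fin m => p.1 < p.2), (x p.1 - x p.2) =
      (-1 : ℚ) ^ (∑ k ∈ range m, k) * ∏ i : Fin m, ∏ j ∈ Finset.Ioi i, (x j - x i) := by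
  have h : ∀ p ∈ Finset.univ.filter (fun p : Fin m × Fin m => p.1 < p.2),
      x p.1 - x p.2 = (-1 : ℚ) * (x p.2 - x p.1) := by
    intro p _; ring
  rw [Finset.prod_congr rfl h, Finset.prod_mul_distrib, Finset.prod_const, wdb_card,
    wdb_prod_pairs m (fun i j => x j - x i)]

lemma wdb_Ioc_fact (a b : ℕ) (h : a ≤ b) :
    ∏ x ∈ Finset.Ioc a b, ((x : ℚ) - (a : ℚ)) = ((b - a)! : ℚ) := by
  induction b, h using Nat.le_induction with
  | base => simp
  | succ b hb ih =>
      rw [Finset.prod_Ioc_succ_top (by omega), ih]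
      have h1 : b + 1 - a = (b - a) + 1 := by omega
      have h2 : ((b : ℚ) + 1) - a = ((b - a : ℕ) : ℚ) + 1 := by
        have : ((b - a : ℕ) : ℚ) = (b : ℚ) - a := by
          have : ((b - a : ℕ) : ℚ) + (a : ℚ) = (b : ℚ) := by
            exact_mod_cast congrArg (Nat.cast (R := ℚ)) (by omega : (b - a) + a = b)
          linarith
        rw [this]; ring
      rw [h1]
      have h3 : (((b - a) + 1)! : ℚ) = ((b - a)! : ℚ) * (((b - a : ℕ) : ℚ) + 1) := by
        rw [Nat.factorial_succ]; push_cast; ring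
      rw [h3]
      push_cast
      rw [h2]

lemma wdb_inner_fact (m : ℕ) (i : Fin m) :
    ∏ j ∈ Finset.Ioi i, (((j : ℕ) : ℚ) - ((i : ℕ) : ℚ)) = ((m - 1 - (i : ℕ))! : ℚ) := by
  have hmap := Fin.map_valEmbedding_Ioi i
  have : ∏ j ∈ Finset.Ioi i, (((j : ℕ) : ℚ) - ((i : ℕ) : ℚ)) =
      ∏ x ∈ Finset.Ioc (i : ℕ) (m - 1), ((x : ℚ) - ((i : ℕ) : ℚ)) := by
    rw [show Finset.Ioc (i : ℕ) (m - 1) = Finset.Ioo (i : ℕ) m by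
      ext x; simp only [Finset.mem_Ioc, Finset.mem_Ioo]; constructor <;> intro h <;> omega,
      ← hmap, Finset.prod_map]
    rfl
  rw [this, wdb_Ioc_fact _ _ (by have := i.isLt; omega)]

lemma wdb_D (m : ℕ) :
    ∏ p ∈ Finset.univ.filter (fun p : Fin m × Fin m => p.1 < p.2),
        (((p.2 : ℕ) : ℚ) - ((p.1 : ℕ) : ℚ)) = ∏ k ∈ range m, (k ! : ℚ) := by
  rw [wdb_prod_pairs m (fun i j => ((j : ℕ) : ℚ) - ((i : ℕ) : ℚ)),
    Finset.prod_congr rfl fun i _ => wdb_inner_fact m i,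
    Fin.prod_univ_eq_prod_range (fun k => ((m - 1 - k)! : ℚ)) m]
  exact Finset.prod_range_reflect (fun k => (k ! : ℚ)) m

lemma wdb_bij (n : ℕ) (lam : Fin (n + 1) → ℕ) (hml : ∀ i : Fin n, lam i.succ ≤ lam i.castSucc)
    (f : (Fin n → ℕ) → ℚ) :
    ∑ μ ∈ Finset.univ.filter
        (fun μ : (i : Fin n) → Fin (lam i.castSucc + 1) => ∀ i : Fin n, lam i.succ ≤ (μ i : ℕ)),
      f (fun i => (μ i : ℕ) + (n - 1 - (i : ℕ))) =
    ∑ b ∈ Fintype.piFinset (fun j : Fin n =>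
        Finset.Ico (lam j.succ + (n - ((j : ℕ) + 1))) (lam j.castSucc + (n - (j : ℕ)))),
      f b := by
  apply Finset.sum_nbij' (i := fun μ => fun i : Fin n => (μ i : ℕ) + (n - 1 - (i : ℕ)))
    (j := fun b => fun i : Fin n =>
      (⟨min (b i - (n - 1 - (i : ℕ))) (lam i.castSucc),
        Nat.lt_succ_of_le (min_le_right _ _)⟩ : Fin (lam i.castSucc + 1)))
  · intro μ hμ
    rw [Finset.mem_filter] at hμ
    rw [Fintype.mem_piFinset]
    intro i
    have h1 := hμ.2 i
    have h2 := (μ i).isLt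
    have h3 := i.isLt
    rw [Finset.mem_Ico]
    omega
  · intro b hb
    rw [Fintype.mem_piFinset] at hb
    rw [Finset.mem_filter]
    refine ⟨Finset.mem_univ _, fun i => ?_⟩
    have h1 := hb i
    rw [Finset.mem_Ico] at h1
    have h3 := i.isLt
    have h4 := hml i
    simp only
    omega
  · intro μ hμ
    rw [Finset.mem_filter] at hμ
    funext i
    apply Fin.ext
    have h2 := (μ i).isLt
    simp only
    omega
  · intro b hb
    rw [Fintype.mem_piFinset] at hb
    funext i
    have h1 := hb i
    rw [Finset.mem_Ico] at h1
    have h3 := i.isLt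
    simp only
    omega
  · intro μ hμ
    rfl

/-- **Weyl dimension branching identity** (here with `n+1` in place of `n`):
for a weakly decreasing tuple `λ = (λ_1 ≥ ⋯ ≥ λ_{n+1})` of naturals,
`∏_{i<j} (λ_i − λ_j + j − i)/(j − i)` equals the sum, over all partitions `μ`
interleaving `λ` (`λ_1 ≥ μ_1 ≥ λ_2 ≥ ⋯ ≥ μ_n ≥ λ_{n+1}`), of
`∏_{i<j} (μ_i − μ_j + j − i)/(j − i)`, as rational numbers.  The upper bound
`μ_i ≤ λ_i` is enforced by the codomain `Fin (λ_i + 1)`. -/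
theorem weyl_dimension_branching (n : ℕ) (lam : Fin (n + 1) → ℕ) (hlam : Antitone lam) :
    (∏ p ∈ Finset.univ.filter (fun p : Fin (n + 1) × Fin (n + 1) => p.1 < p.2),
        (((lam p.1 : ℚ) - (lam p.2 : ℚ) + ((p.2 : ℕ) : ℚ) - ((p.1 : ℕ) : ℚ)) /
          (((p.2 : ℕ) : ℚ) - ((p.1 : ℕ) : ℚ)))) =
      ∑ μ ∈ Finset.univ.filter
          (fun μ : (i : Fin n) → Fin (lam i.castSucc + 1) =>
            ∀ i : Fin n, lam i.succ ≤ (μ i : ℕ)),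
        ∏ p ∈ Finset.univ.filter (fun p : Fin n × Fin n => p.1 < p.2),
          ((((μ p.1 : ℕ) : ℚ) - ((μ p.2 : ℕ) : ℚ) + ((p.2 : ℕ) : ℚ) - ((p.1 : ℕ) : ℚ)) /
            (((p.2 : ℕ) : ℚ) - ((p.1 : ℕ) : ℚ))) := by
  set A : Fin (n + 1) → ℕ := fun j => lam j + (n - (j : ℕ)) with hAdef
  have hml : ∀ i : Fin n, lam i.succ ≤ lam i.castSucc := fun i => hlam (Fin.castSucc_le_succ i)
  have hA : ∀ j : Fin n, A j.succ ≤ A j.castSucc := by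
    intro j
    have h1 := hml j
    have h2 := j.isLt
    simp only [hAdef, Fin.val_succ, Fin.coe_castSucc]
    omega
  have hAc : ∀ j : Fin (n + 1), ((A j : ℕ) : ℚ) = (lam j : ℚ) + (n : ℚ) - ((j : ℕ) : ℚ) := by
    intro j
    have hj : (j : ℕ) ≤ n := by have := j.isLt; omega
    simp only [hAdef]
    push_cast [Nat.cast_sub hj]
    ring
  set V : (Fin n → ℕ) → ℚ :=
    fun b => ∏ i : Fin n, ∏ j ∈ Finset.Ioi i, ((b j : ℚ) - (b i : ℚ)) with hV
  set VA : ℚ := ∏ i : Fin (n + 1), ∏ j ∈ Finset.Ioi i, ((A j : ℚ) - (A i : ℚ)) with hVA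
  -- LHS
  have hLHS : (∏ p ∈ Finset.univ.filter (fun p : Fin (n + 1) × Fin (n + 1) => p.1 < p.2),
        (((lam p.1 : ℚ) - (lam p.2 : ℚ) + ((p.2 : ℕ) : ℚ) - ((p.1 : ℕ) : ℚ)) /
          (((p.2 : ℕ) : ℚ) - ((p.1 : ℕ) : ℚ)))) =
      ((-1 : ℚ) ^ (∑ k ∈ range (n + 1), k) * VA) / (∏ k ∈ range (n + 1), (k ! : ℚ)) := by
    rw [Finset.prod_div_distrib, wdb_D]
    congr 1
    have hpt : ∀ p ∈ Finset.univ.filter (fun p : Fin (n + 1) × Fin (n + 1) => p.1 < p.2),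
        (lam p.1 : ℚ) - (lam p.2 : ℚ) + ((p.2 : ℕ) : ℚ) - ((p.1 : ℕ) : ℚ) =
          ((A p.1 : ℕ) : ℚ) - ((A p.2 : ℕ) : ℚ) := by
      intro p _
      rw [hAc, hAc]
      ring
    rw [Finset.prod_congr rfl hpt, wdb_sign (n + 1) (fun j => ((A j : ℕ) : ℚ))]
  -- RHS terms
  have hterm : ∀ μ ∈ Finset.univ.filter
      (fun μ : (i : Fin n) → Fin (lam i.castSucc + 1) => ∀ i : Fin n, lam i.succ ≤ (μ i : ℕ)),
      (∏ p ∈ Finset.univ.filter (fun p : Fin n × Fin n => p.1 < p.2),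
          ((((μ p.1 : ℕ) : ℚ) - ((μ p.2 : ℕ) : ℚ) + ((p.2 : ℕ) : ℚ) - ((p.1 : ℕ) : ℚ)) /
            (((p.2 : ℕ) : ℚ) - ((p.1 : ℕ) : ℚ)))) =
        ((-1 : ℚ) ^ (∑ k ∈ range n, k) / ∏ k ∈ range n, (k ! : ℚ)) *
          V (fun i => (μ i : ℕ) + (n - 1 - (i : ℕ))) := by
    intro μ _
    rw [Finset.prod_div_distrib, wdb_D]
    have hpt : ∀ p ∈ Finset.univ.filter (fun p : Fin n × Fin n => p.1 < p.2),
        ((μ p.1 : ℕ) : ℚ) - ((μ p.2 : ℕ) : ℚ) + ((p.2 : ℕ) : ℚ) - ((p.1 : ℕ) : ℚ) =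
          (((μ p.1 : ℕ) + (n - 1 - (p.1 : ℕ)) : ℕ) : ℚ) -
            (((μ p.2 : ℕ) + (n - 1 - (p.2 : ℕ)) : ℕ) : ℚ) := by
      intro p _
      have h1 : (p.1 : ℕ) < n := p.1.isLt
      have h2 : (p.2 : ℕ) < n := p.2.isLt
      have e1 : ((n - 1 - (p.1 : ℕ) : ℕ) : ℚ) + ((p.1 : ℕ) : ℚ) = ((n - 1 : ℕ) : ℚ) := by
        exact_mod_cast congrArg (Nat.cast (R := ℚ))
          (by omega : (n - 1 - (p.1 : ℕ)) + (p.1 : ℕ) = n - 1)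
      have e2 : ((n - 1 - (p.2 : ℕ) : ℕ) : ℚ) + ((p.2 : ℕ) : ℚ) = ((n - 1 : ℕ) : ℚ) := by
        exact_mod_cast congrArg (Nat.cast (R := ℚ))
          (by omega : (n - 1 - (p.2 : ℕ)) + (p.2 : ℕ) = n - 1)
      push_cast
      push_cast at e1 e2
      linarith
    rw [Finset.prod_congr rfl hpt,
      wdb_sign n (fun i => (((μ i : ℕ) + (n - 1 - (i : ℕ)) : ℕ) : ℚ))]
    rw [hV]
    push_cast
    ring
  rw [hLHS, Finset.sum_congr rfl hterm, ← Finset.mul_sum]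
  -- bijection to the pi-finset
  have hset : (fun j : Fin n =>
      Finset.Ico (lam j.succ + (n - ((j : ℕ) + 1))) (lam j.castSucc + (n - (j : ℕ)))) =
      fun j : Fin n => Finset.Ico (A j.succ) (A j.castSucc) := by
    funext j
    simp only [hAdef, Fin.val_succ, Fin.coe_castSucc]
  have hbij := wdb_bij n lam hml V
  rw [hset] at hbij
  rw [hbij]
  -- core identity
  have hcore := wdb_core n A hA
  have hfac : ((n ! : ℕ) : ℚ) ≠ 0 := by
    exact_mod_cast Nat.factorial_ne_zero n
  have hD0 : (∏ k ∈ range n, (k ! : ℚ)) ≠ 0 := by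
    apply Finset.prod_ne_zero_iff.mpr
    intro k _
    exact_mod_cast Nat.factorial_ne_zero k
  have hsumV : ∑ b ∈ Fintype.piFinset (fun j : Fin n => Finset.Ico (A j.succ) (A j.castSucc)),
      V b = (-1 : ℚ) ^ n * VA / (n ! : ℚ) := by
    rw [eq_div_iff hfac]
    rw [hV, hVA] at *
    linarith [hcore]
  rw [hsumV, Finset.sum_range_succ, Finset.prod_range_succ, pow_add]
  field_simp
end

section
/- Character of the diagonal U(d) action composed with a tensor-factor permutation (Schur–Weyl character formula): let R be a commutative ring, z : {1,…,d} → R, and σ a permutation of {1,…,n}. Then Σ_{f} ∏_{i=1}^{n} z_{f(i)}, where f ranges over all functions f : {1,…,n} → {1,…,d} with f ∘ σ = f, equals ∏_{O} ( Σ_{j=1}^{d} z_j^{|O|} ), where O ranges over the orbits of σ acting on {1,…,n} and |O| is the orbit size (so the character equals the product of power sums p_{|O|}(z) over the cycles of σ, including fixed points as cycles of length 1). -/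
open scoped Classical

/-- **Schur–Weyl character formula**: for a commutative ring `R`,
`z : Fin d → R`, and a permutation `σ` of `Fin n`, the trace of the operator
`g·σ` on `(ℂ^d)^{⊗n}` with `g = diag(z_1,…,z_d)`, namely
`Σ_{f : f ∘ σ = f} ∏_i z_{f(i)}`, equals the product over the orbits `O` of
`σ` on `Fin n` (i.e. the cycles of `σ`, including fixed points) of the power
sums `Σ_j z_j^{|O|}`. -/
theorem schur_weyl_character (R : Type*) [CommRing R] (d n : ℕ)
    (z : Fin d → R) (σ : Equiv.Perm (Fin n)) :
    ∑ f ∈ Finset.univ.filter (fun f : Fin n → Fin d => f ∘ σ = f), ∏ i, z (f i) =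
      ∏ᶠ q : MulAction.orbitRel.Quotient (Subgroup.zpowers σ) (Fin n),
        ∑ j, z j ^ (MulAction.orbitRel.Quotient.orbit q).ncard := by
  classical
  set Q := MulAction.orbitRel.Quotient (Subgroup.zpowers σ) (Fin n) with hQ
  -- a fixed function is invariant under all integer powers of σ
  have hzpow : ∀ (f : Fin n → Fin d), f ∘ σ = f → ∀ (k : ℤ) (i : Fin n),
      f ((σ ^ k) i) = f i := by
    intro f hf k
    induction k using Int.induction_on with
    | zero => simp
    | succ m ih =>
        intro i
        have h1 : (σ ^ ((m : ℤ) + 1)) i = (σ ^ (m : ℤ)) (σ i) := by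
          rw [zpow_add_one]; rfl
        rw [h1, ih (σ i)]
        exact congrFun hf i
    | pred m ih =>
        intro i
        have h1 : (σ ^ (-(m : ℤ) - 1)) i = (σ ^ (-(m : ℤ))) (σ⁻¹ i) := by
          rw [zpow_sub_one]; rfl
        rw [h1, ih (σ⁻¹ i)]
        have h2 := congrFun hf (σ⁻¹ i)
        rw [Function.comp_apply, ← Equiv.Perm.mul_apply, mul_inv_cancel, Equiv.Perm.one_apply] at h2
        exact h2.symm
  -- a fixed function is constant on orbits
  have hconst : ∀ (f : Fin n → Fin d), f ∘ σ = f → ∀ i j : Fin n,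
      (Quotient.mk'' i : Q) = Quotient.mk'' j → f i = f j := by
    intro f hf i j h
    have h' : i ∈ MulAction.orbit (Subgroup.zpowers σ) j := Quotient.exact' h
    obtain ⟨⟨g, hg⟩, hgj⟩ := h'
    obtain ⟨k, hk⟩ := Subgroup.mem_zpowers_iff.mp hg
    have : (σ ^ k) j = i := by rw [hk]; exact hgj
    rw [← this, hzpow f hf]
  -- fiber cardinality equals orbit ncard
  have hfiber : ∀ q : Q,
      (Finset.univ.filter (fun i : Fin n => (Quotient.mk'' i : Q) = q)).card
        = (MulAction.orbitRel.Quotient.orbit q).ncard := by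
    intro q
    rw [Set.ncard_eq_toFinset_card']
    congr 1
    ext i
    simp [MulAction.orbitRel.Quotient.mem_orbit]
  rw [finprod_eq_prod_of_fintype]
  -- expand the RHS as a sum over functions on orbits
  have hrhs : ∏ q : Q, ∑ j, z j ^ (MulAction.orbitRel.Quotient.orbit q).ncard
      = ∑ p : Q → Fin d, ∏ q : Q,
          z (p q) ^ (MulAction.orbitRel.Quotient.orbit q).ncard := by
    rw [Finset.prod_univ_sum (fun _ => Finset.univ)
      (fun q j => z j ^ (MulAction.orbitRel.Quotient.orbit q).ncard)]
    rw [Fintype.piFinset_univ]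
  rw [hrhs]
  refine Finset.sum_nbij' (fun f q => f q.out) (fun g i => g (Quotient.mk'' i))
    (fun _ _ => Finset.mem_univ _) ?_ ?_ ?_ ?_
  · -- g ∘ mk'' ∘ σ = g ∘ mk''
    intro g _
    simp only [Finset.mem_filter, Finset.mem_univ, true_and]
    funext i
    have : (Quotient.mk'' ((σ : Equiv.Perm (Fin n)) i) : Q) = Quotient.mk'' i := by
      apply Quotient.sound'
      exact ⟨⟨σ, Subgroup.mem_zpowers σ⟩, rfl⟩
    simp only [Function.comp_apply, this]
  · -- left inverse
    intro f hf
    simp only [Finset.mem_filter, Finset.mem_univ, true_and] at hf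
    funext i
    exact hconst f hf _ i (Quotient.out_eq' _)
  · -- right inverse
    intro g _
    funext q
    show g (Quotient.mk'' (Quotient.out q)) = g q
    rw [Quotient.out_eq']
  · -- the products match
    intro f hf
    simp only [Finset.mem_filter, Finset.mem_univ, true_and] at hf
    show ∏ i, z (f i) = ∏ q : Q,
      z (f (Quotient.out q)) ^ (MulAction.orbitRel.Quotient.orbit q).ncard
    rw [← Finset.prod_fiberwise Finset.univ (fun i : Fin n => (Quotient.mk'' i : Q))
      (fun i => z (f i))]
    refine Finset.prod_congr rfl fun q _ => ?_
    rw [← hfiber q, ← Finset.prod_const]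
    refine Finset.prod_congr rfl fun i hi => ?_
    simp only [Finset.mem_filter, Finset.mem_univ, true_and] at hi
    exact congrArg z (hconst f hf i (Quotient.out q) (by rw [hi, Quotient.out_eq']))
end
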